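/- arXiv:1806.09383 — 9 statements merged into one kernel-verified Lean document; each statement's English description precedes it below -/
import Mathlib

section
/- There exist absolute constants c and r such that the following holds. Let F be a field and let f_1,…,f_m be affine polynomials over F in the variables x_1,…,x_n such that the system f_1 = 0,…,f_m = 0 has no solution in {0,1}^n. Then the set {f_1 = 0, …, f_m = 0} (each equation regarded as a one-disjunct linear clause) has a Res(lin_F) refutation of size at most c·(n + |im_2(A)| + s)^r, where A : {0,1}^n → F^m is the map x ↦ (f_1(x),…,f_m(x)), |im_2(A)| is the cardinality of its image, and s is the total bit-length of the encodings of the coefficients of f_1,…,f_m. -/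
open scoped Classical

/-- An affine (degree at most `1`) polynomial over a ring `R` in variables indexed by `ι`,
given by its vector of coefficients together with its constant term. -/
structure AffPoly (ι : Type) (R : Type) where
  coeff : ι → R
  const : R

namespace AffPoly

variable {ι R : Type} [CommRing R]

instance : Add (AffPoly ι R) :=
  ⟨fun f g => ⟨fun i => f.coeff i + g.coeff i, f.const + g.const⟩⟩

instance : SMul R (AffPoly ι R) :=
  ⟨fun a f => ⟨fun i => a * f.coeff i, a * f.const⟩⟩

/-- The constant affine polynomial `a`. -/
def C (a : R) : AffPoly ι R := ⟨fun _ => 0, a⟩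

/-- The variable `x i` as an affine polynomial. -/
noncomputable def X (i : ι) : AffPoly ι R := ⟨fun j => if j = i then 1 else 0, 0⟩

variable [Fintype ι]

/-- Evaluation of an affine polynomial at a point of `R^ι`. -/
def eval (f : AffPoly ι R) (x : ι → R) : R := (∑ i, f.coeff i * x i) + f.const

/-- Evaluation of an affine polynomial at a 0-1 (Boolean) assignment. -/
def evalB (f : AffPoly ι R) (b : ι → Bool) : R := f.eval fun i => if b i then 1 else 0

/-- `im2 f` is the image of `f` under all 0-1 assignments to its variables. -/
noncomputable def im2 (f : AffPoly ι R) : Finset R := Finset.image f.evalB Finset.univ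

/-- The number of variables occurring in `f` with a nonzero coefficient. -/
noncomputable def nvars (f : AffPoly ι R) : ℕ :=
  (Finset.univ.filter fun i => f.coeff i ≠ 0).card

/-- The size of an affine polynomial relative to a size function `csize` on coefficients:
the number of variable occurrences plus the total size of the coefficients occurring in it
(the nonzero variable coefficients and the constant term). -/
noncomputable def sizeW (csize : R → ℕ) (f : AffPoly ι R) : ℕ :=
  f.nvars + (∑ i ∈ Finset.univ.filter (fun i => f.coeff i ≠ 0), csize (f.coeff i)) +
    csize f.const

end AffPoly

/-- A linear clause over `R`: a finite set of affine polynomials `f`, standing for the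
disjunction of the equations `f = 0` (duplicate disjuncts are contracted). -/
abbrev LinClause (ι R : Type) : Type := Finset (AffPoly ι R)

namespace LinClause

variable {ι R : Type} [CommRing R]

/-- A 0-1 assignment satisfies a linear clause if it makes at least one of its equations hold
(so the empty clause is never satisfied). -/
def Sat [Fintype ι] (b : ι → Bool) (Cl : LinClause ι R) : Prop :=
  ∃ f ∈ Cl, f.evalB b = 0

/-- The size of a linear clause relative to a size function on coefficients. -/
noncomputable def sizeW [Fintype ι] (csize : R → ℕ) (Cl : LinClause ι R) : ℕ :=
  ∑ f ∈ Cl, f.sizeW csize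

/-- The Boolean axiom `(x i = 0) ∨ (x i = 1)`. -/
noncomputable def boolAxiom (i : ι) : LinClause ι R :=
  {AffPoly.X i, AffPoly.X i + AffPoly.C (-1)}

end LinClause

/-- Tree-like `Res(lin_R)` derivations of a linear clause from a set `Hyp` of hypothesis
clauses: the available inference rules are the Boolean axioms, resolution, weakening and
simplification, and every derived clause is used at most once as a premise. -/
inductive TProof {ι R : Type} [CommRing R] (Hyp : Set (LinClause ι R)) :
    LinClause ι R → Type
  | hyp (Cl : LinClause ι R) (h : Cl ∈ Hyp) : TProof Hyp Cl
  | ax (i : ι) : TProof Hyp (LinClause.boolAxiom i)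
  | res (C D : LinClause ι R) (f g : AffPoly ι R) (a b : R)
      (hf : TProof Hyp (insert f C)) (hg : TProof Hyp (insert g D)) :
      TProof Hyp (insert (a • f + b • g) (C ∪ D))
  | weaken (C : LinClause ι R) (f : AffPoly ι R) (h : TProof Hyp C) :
      TProof Hyp (insert f C)
  | simp (C : LinClause ι R) (a : R) (ha : a ≠ 0)
      (h : TProof Hyp (insert (AffPoly.C a) C)) : TProof Hyp C

namespace TProof

variable {ι R : Type} [CommRing R] [Fintype ι] {Hyp : Set (LinClause ι R)}

/-- The size of a tree-like derivation: the total of the sizes of all clauses occurring in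
it. -/
noncomputable def sizeW (csize : R → ℕ) :
    {C : LinClause ι R} → TProof Hyp C → ℕ
  | _, .hyp Cl _ => Cl.sizeW csize
  | _, .ax i => (LinClause.boolAxiom i : LinClause ι R).sizeW csize
  | _, .res C D f g a b hf hg =>
      (insert (a • f + b • g) (C ∪ D) : LinClause ι R).sizeW csize +
        hf.sizeW csize + hg.sizeW csize
  | _, .weaken C f h => (insert f C : LinClause ι R).sizeW csize + h.sizeW csize
  | _, .simp C _ _ h => C.sizeW csize + h.sizeW csize

end TProof

/-- One step of a (dag-like) `Res(lin_R)` derivation: the clause `E` is a hypothesis, a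
Boolean axiom, or follows from clauses in the list `prev` of previously derived clauses by
resolution, weakening or simplification. -/
def IsStep {ι R : Type} [CommRing R] (Hyp : Set (LinClause ι R))
    (prev : List (LinClause ι R)) (E : LinClause ι R) : Prop :=
  E ∈ Hyp ∨
  (∃ i : ι, E = LinClause.boolAxiom i) ∨
  (∃ (C D : LinClause ι R) (f g : AffPoly ι R) (a b : R),
      insert f C ∈ prev ∧ insert g D ∈ prev ∧ E = insert (a • f + b • g) (C ∪ D)) ∨
  (∃ (C : LinClause ι R) (f : AffPoly ι R), C ∈ prev ∧ E = insert f C) ∨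
  (∃ a : R, a ≠ 0 ∧ insert (AffPoly.C a) E ∈ prev)

/-- A (dag-like) `Res(lin_R)` derivation of the linear clause `target` from the set of
hypothesis clauses `Hyp`: a finite sequence of clauses ending with `target`, in which every
clause is a hypothesis, a Boolean axiom, or follows from earlier clauses by resolution,
weakening or simplification. -/
structure DagProof {ι R : Type} [CommRing R] (Hyp : Set (LinClause ι R))
    (target : LinClause ι R) where
  lines : List (LinClause ι R)
  lines_ne : lines ≠ []
  valid : ∀ (k : ℕ) (hk : k < lines.length), IsStep Hyp (lines.take k) (lines.get ⟨k, hk⟩)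
  last_eq : lines.getLast lines_ne = target

/-- The size of a dag-like derivation: the total of the sizes of all its clauses. -/
noncomputable def DagProof.sizeW {ι R : Type} [CommRing R] [Fintype ι]
    {Hyp : Set (LinClause ι R)} {target : LinClause ι R} (csize : R → ℕ)
    (π : DagProof Hyp target) : ℕ :=
  (π.lines.map (LinClause.sizeW csize)).sum

/-- Tree-like `Res_swe(lin_R)` derivations: Boolean axioms, weakening and simplification are
replaced by the axiom `0 = 0` and the semantic weakening rule. -/
inductive TProofSwe {ι R : Type} [CommRing R] [Fintype ι] (Hyp : Set (LinClause ι R)) :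
    LinClause ι R → Type
  | hyp (Cl : LinClause ι R) (h : Cl ∈ Hyp) : TProofSwe Hyp Cl
  | ax : TProofSwe Hyp {AffPoly.C 0}
  | res (C D : LinClause ι R) (f g : AffPoly ι R) (a b : R)
      (hf : TProofSwe Hyp (insert f C)) (hg : TProofSwe Hyp (insert g D)) :
      TProofSwe Hyp (insert (a • f + b • g) (C ∪ D))
  | semWeaken (C D : LinClause ι R)
      (h : ∀ b : ι → Bool, C.Sat b → D.Sat b) (hp : TProofSwe Hyp C) : TProofSwe Hyp D

namespace TProofSwe

variable {ι R : Type} [CommRing R] [Fintype ι] {Hyp : Set (LinClause ι R)}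

/-- The size of a tree-like `Res_swe(lin_R)` derivation. -/
noncomputable def sizeW (csize : R → ℕ) :
    {C : LinClause ι R} → TProofSwe Hyp C → ℕ
  | _, .hyp Cl _ => Cl.sizeW csize
  | _, .ax => ({AffPoly.C 0} : LinClause ι R).sizeW csize
  | _, .res C D f g a b hf hg =>
      (insert (a • f + b • g) (C ∪ D) : LinClause ι R).sizeW csize +
        hf.sizeW csize + hg.sizeW csize
  | _, .semWeaken _ D _ hp => (D : LinClause ι R).sizeW csize + hp.sizeW csize

end TProofSwe

/-- The bit-length of (the binary encoding of) a rational coefficient: the total number of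
bits of the binary representations of its numerator and denominator. -/
def ratSize (q : ℚ) : ℕ := q.num.natAbs.size + q.den.size

namespace S9
open AffPoly

set_option linter.unusedSectionVars false

variable {ι R : Type} [CommRing R]

lemma APext {f g : AffPoly ι R} (h1 : ∀ i, f.coeff i = g.coeff i) (h2 : f.const = g.const) :
    f = g := by
  cases f; cases g
  simp only [AffPoly.mk.injEq]
  exact ⟨funext h1, h2⟩

@[simp] lemma add_coeff (f g : AffPoly ι R) (i : ι) :
    (f + g).coeff i = f.coeff i + g.coeff i := rfl
@[simp] lemma add_const (f g : AffPoly ι R) : (f + g).const = f.const + g.const := rfl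
@[simp] lemma smul_coeff (a : R) (f : AffPoly ι R) (i : ι) :
    (a • f).coeff i = a * f.coeff i := rfl
@[simp] lemma smul_const (a : R) (f : AffPoly ι R) : (a • f).const = a * f.const := rfl
@[simp] lemma C_coeff (a : R) (i : ι) : (C a : AffPoly ι R).coeff i = 0 := rfl
@[simp] lemma C_const (a : R) : (C a : AffPoly ι R).const = a := rfl
@[simp] lemma X_coeff (i j : ι) : (X i : AffPoly ι R).coeff j = if j = i then 1 else 0 := rfl
@[simp] lemma X_const (i : ι) : (X i : AffPoly ι R).const = 0 := rfl

lemma isStep_mono {Hyp : Set (LinClause ι R)} {p q : List (LinClause ι R)}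
    (hpq : ∀ x ∈ p, x ∈ q) {E} (h : IsStep Hyp p E) : IsStep Hyp q E := by
  rcases h with h | h | ⟨C, D, f, g, a, b, h1, h2, h3⟩ | ⟨C, f, h1, h2⟩ | ⟨a, ha, h1⟩
  · exact Or.inl h
  · exact Or.inr (Or.inl h)
  · exact Or.inr (Or.inr (Or.inl ⟨C, D, f, g, a, b, hpq _ h1, hpq _ h2, h3⟩))
  · exact Or.inr (Or.inr (Or.inr (Or.inl ⟨C, f, hpq _ h1, h2⟩)))
  · exact Or.inr (Or.inr (Or.inr (Or.inr ⟨a, ha, hpq _ h1⟩)))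

inductive Ok (Hyp : Set (LinClause ι R)) : List (LinClause ι R) → List (LinClause ι R) → Prop
  | nil (Γ) : Ok Hyp Γ []
  | cons {Γ E L} (h : IsStep Hyp Γ E) (hL : Ok Hyp (Γ ++ [E]) L) : Ok Hyp Γ (E :: L)

lemma Ok.mono {Hyp : Set (LinClause ι R)} {Γ Γ' L : List (LinClause ι R)}
    (hΓ : ∀ x ∈ Γ, x ∈ Γ') (h : Ok Hyp Γ L) : Ok Hyp Γ' L := by
  induction h generalizing Γ' with
  | nil => exact Ok.nil _
  | cons hstep _ ih =>
    exact Ok.cons (isStep_mono hΓ hstep)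
      (ih fun x hx => by
        rcases List.mem_append.1 hx with hx | hx
        · exact List.mem_append.2 (Or.inl (hΓ _ hx))
        · exact List.mem_append.2 (Or.inr hx))

lemma Ok.append {Hyp : Set (LinClause ι R)} {Γ L1 L2 : List (LinClause ι R)}
    (h1 : Ok Hyp Γ L1) (h2 : Ok Hyp (Γ ++ L1) L2) : Ok Hyp Γ (L1 ++ L2) := by
  induction h1 with
  | nil Γ => simpa using h2.mono (by simp)
  | cons hstep _ ih =>
    refine Ok.cons hstep ?_
    refine ih (h2.mono fun x hx => ?_)
    simp only [List.mem_append, List.mem_cons, List.mem_singleton] at hx ⊢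
    tauto

lemma Ok.isStep_get {Hyp : Set (LinClause ι R)} {Γ L : List (LinClause ι R)}
    (h : Ok Hyp Γ L) : ∀ (k : ℕ) (hk : k < L.length),
      IsStep Hyp (Γ ++ L.take k) (L.get ⟨k, hk⟩) := by
  induction h with
  | nil Γ => intro k hk; simp at hk
  | cons hstep _ ih =>
    intro k hk
    match k with
    | 0 => simpa using hstep
    | (k+1) =>
      have := ih k (by simpa using hk)
      simpa [List.take_succ_cons, List.append_assoc] using this

lemma Ok.prefix {Hyp : Set (LinClause ι R)} {Γ L1 L2 : List (LinClause ι R)}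
    (h : Ok Hyp Γ (L1 ++ L2)) : Ok Hyp Γ L1 := by
  induction L1 generalizing Γ with
  | nil => exact Ok.nil _
  | cons E L ih =>
    rcases h with _ | ⟨hstep, hL⟩
    exact Ok.cons hstep (ih hL)

end S9
namespace S9
open AffPoly

set_option linter.unusedSectionVars false

variable {ι R : Type} [CommRing R] [Fintype ι]

noncomputable def szC (Cl : LinClause ι R) : ℕ := Cl.sizeW (fun _ => 1)

lemma szP_le (g : AffPoly ι R) : g.sizeW (fun _ => 1) ≤ 2 * Fintype.card ι + 1 := by
  have h1 : (Finset.univ.filter fun i => g.coeff i ≠ 0).card ≤ Fintype.card ι :=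
    Finset.card_filter_le _ _
  unfold AffPoly.sizeW AffPoly.nvars
  simp only [Finset.sum_const, smul_eq_mul, mul_one]
  omega

lemma szC_mono {Cl Cl' : LinClause ι R} (h : Cl ⊆ Cl') : szC Cl ≤ szC Cl' :=
  Finset.sum_le_sum_of_subset h

lemma szC_le_card (Cl : LinClause ι R) : szC Cl ≤ Cl.card * (2 * Fintype.card ι + 1) := by
  unfold szC LinClause.sizeW
  calc ∑ f ∈ Cl, f.sizeW (fun _ => 1) ≤ ∑ _f ∈ Cl, (2 * Fintype.card ι + 1) :=
        Finset.sum_le_sum fun f _ => szP_le f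
    _ = Cl.card * (2 * Fintype.card ι + 1) := by simp [Finset.sum_const, mul_comm]

/-- From a context including `G`, one can extend the derivation by at most `t` lines,
each of size at most `β`, after which all clauses of `S` are available. -/
def BS (Hyp : Set (LinClause ι R)) (β : ℕ) (G : Set (LinClause ι R)) (t : ℕ)
    (S : Set (LinClause ι R)) : Prop :=
  ∀ Γ : List (LinClause ι R), (∀ x ∈ G, x ∈ Γ) →
    ∃ L, Ok Hyp Γ L ∧ L.length ≤ t ∧ (∀ Cl ∈ L, szC Cl ≤ β) ∧ ∀ E ∈ S, E ∈ Γ ++ L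

variable {Hyp : Set (LinClause ι R)} {β : ℕ}

lemma BS.ofSub {G S : Set (LinClause ι R)} (h : S ⊆ G) {t : ℕ} : BS Hyp β G t S := by
  intro Γ hΓ
  exact ⟨[], Ok.nil _, by simp, by simp, fun E hE => by simpa using hΓ _ (h hE)⟩

lemma BS.mono {G G' S S' : Set (LinClause ι R)} {t t' : ℕ}
    (hG : G ⊆ G') (ht : t ≤ t') (hS : S' ⊆ S) (h : BS Hyp β G t S) : BS Hyp β G' t' S' := by
  intro Γ hΓ
  obtain ⟨L, h1, h2, h3, h4⟩ := h Γ (fun x hx => hΓ x (hG hx))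
  exact ⟨L, h1, le_trans h2 ht, h3, fun E hE => h4 E (hS hE)⟩

lemma BS.step {G : Set (LinClause ι R)} {E : LinClause ι R}
    (h : ∀ Γ : List (LinClause ι R), (∀ x ∈ G, x ∈ Γ) → IsStep Hyp Γ E)
    (hsz : szC E ≤ β) : BS Hyp β G 1 {E} := by
  intro Γ hΓ
  refine ⟨[E], Ok.cons (h Γ hΓ) (Ok.nil _), by simp, by simpa using hsz, ?_⟩
  intro E' hE'
  simp only [Set.mem_singleton_iff] at hE'
  simp [hE']

lemma BS.trans {G S S' : Set (LinClause ι R)} {t t' : ℕ}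
    (h1 : BS Hyp β G t S) (h2 : BS Hyp β (G ∪ S) t' S') : BS Hyp β G (t + t') (S ∪ S') := by
  intro Γ hΓ
  obtain ⟨L1, o1, l1, s1, m1⟩ := h1 Γ hΓ
  obtain ⟨L2, o2, l2, s2, m2⟩ := h2 (Γ ++ L1) (by
    intro x hx
    rcases hx with hx | hx
    · exact List.mem_append.2 (Or.inl (hΓ _ hx))
    · exact m1 _ hx)
  refine ⟨L1 ++ L2, o1.append o2, by simp; omega, ?_, ?_⟩
  · intro Cl hCl
    rcases List.mem_append.1 hCl with h | h
    · exact s1 _ h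
    · exact s2 _ h
  · intro E hE
    rcases hE with hE | hE
    · have := m1 E hE
      simp only [List.mem_append] at this ⊢; tauto
    · have := m2 E hE
      simp only [List.mem_append] at this ⊢; tauto

/-- Derive a family of targets, each derivable from the common context `G`. -/
lemma BS.iterate {α : Type} (s : Finset α) (Tar : α → Set (LinClause ι R))
    {G : Set (LinClause ι R)} {t : ℕ}
    (h : ∀ x ∈ s, BS Hyp β G t (Tar x)) :
    BS Hyp β G (s.card * t) (⋃ x ∈ s, Tar x) := by
  classical
  induction s using Finset.induction with
  | empty => exact BS.ofSub (by simp)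
  | @insert a s ha ih =>
    have h1 : BS Hyp β G t (Tar a) := h a (by simp)
    have h2 : BS Hyp β (G ∪ Tar a) (s.card * t) (⋃ x ∈ s, Tar x) :=
      (ih (fun x hx => h x (by simp [hx]))).mono Set.subset_union_left le_rfl le_rfl
    have := h1.trans h2
    refine this.mono le_rfl (by rw [Finset.card_insert_of_notMem ha]; ring_nf; omega) ?_
    intro E hE
    simp only [Set.mem_iUnion, Finset.mem_insert] at hE
    obtain ⟨x, hx, hEx⟩ := hE
    rcases hx with rfl | hx
    · exact Or.inl hEx
    · exact Or.inr (by simp only [Set.mem_iUnion]; exact ⟨x, hx, hEx⟩)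

end S9
namespace S9
open AffPoly

set_option linter.unusedSectionVars false

variable {ι R : Type} [CommRing R] [Fintype ι]
variable {Hyp : Set (LinClause ι R)} {β : ℕ}

lemma szC_insert_le (f : AffPoly ι R) (Cl : LinClause ι R) :
    szC (insert f Cl) ≤ szC Cl + (2 * Fintype.card ι + 1) := by
  classical
  by_cases h : f ∈ Cl
  · rw [Finset.insert_eq_self.2 h]; omega
  · unfold szC LinClause.sizeW
    rw [Finset.sum_insert h]
    have := szP_le (ι := ι) (R := R) f
    omega

lemma szC_union_le (Cl Dl : LinClause ι R) : szC (Cl ∪ Dl) ≤ szC Cl + szC Dl := by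
  classical
  unfold szC LinClause.sizeW
  have := Finset.sum_union_inter (s₁ := Cl) (s₂ := Dl) (f := fun f => f.sizeW (fun _ => 1))
  omega

lemma g_hyp {G : Set (LinClause ι R)} {Cl : LinClause ι R} (h : Cl ∈ Hyp)
    (hsz : szC Cl ≤ β) : BS Hyp β G 1 {Cl} :=
  BS.step (fun _ _ => Or.inl h) hsz

lemma g_res {G : Set (LinClause ι R)} {Cd Dd : LinClause ι R} {f g : AffPoly ι R} (a b : R)
    (h1 : insert f Cd ∈ G) (h2 : insert g Dd ∈ G) {E : LinClause ι R}
    (hE : E = insert (a • f + b • g) (Cd ∪ Dd)) (hsz : szC E ≤ β) :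
    BS Hyp β G 1 {E} :=
  BS.step (fun _ hΓ => Or.inr (Or.inr (Or.inl ⟨Cd, Dd, f, g, a, b, hΓ _ h1, hΓ _ h2, hE⟩))) hsz

lemma g_simp {G : Set (LinClause ι R)} {E : LinClause ι R} {a : R} (ha : a ≠ 0)
    (h : insert (C a) E ∈ G) (hsz : szC E ≤ β) : BS Hyp β G 1 {E} :=
  BS.step (fun _ hΓ => Or.inr (Or.inr (Or.inr (Or.inr ⟨a, ha, hΓ _ h⟩)))) hsz

lemma g_weaken {G : Set (LinClause ι R)} {Cl : LinClause ι R} (f : AffPoly ι R)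
    (h : Cl ∈ G) (hsz : szC (insert f Cl) ≤ β) : BS Hyp β G 1 {insert f Cl} :=
  BS.step (fun _ hΓ => Or.inr (Or.inr (Or.inr (Or.inl ⟨Cl, f, hΓ _ h, rfl⟩)))) hsz

/-- Weakening by a whole finite set of disjuncts. -/
lemma g_weakenMany {G : Set (LinClause ι R)} {Cl : LinClause ι R} (S : Finset (AffPoly ι R))
    (h : Cl ∈ G) (hsz : szC (Cl ∪ S) ≤ β) : BS Hyp β G S.card {Cl ∪ S} := by
  classical
  induction S using Finset.induction with
  | empty => exact BS.ofSub (by simpa using h)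
  | @insert a s ha ih =>
    have hs : szC (Cl ∪ s) ≤ β :=
      le_trans (szC_mono (Finset.union_subset_union_right (Finset.subset_insert a s))) hsz
    have h1 : BS Hyp β G s.card {Cl ∪ s} := ih hs
    have h2 : BS Hyp β (G ∪ {Cl ∪ s}) 1 {insert a (Cl ∪ s)} :=
      g_weaken a (Or.inr rfl) (by rwa [← Finset.union_insert])
    refine (h1.trans h2).mono le_rfl (by rw [Finset.card_insert_of_notMem ha]) ?_
    intro E hE
    simp only [Set.mem_singleton_iff] at hE
    subst hE
    refine Or.inr ?_
    rw [Finset.union_insert]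
    rfl

/-- Eliminate a disjunct `g` of an available clause `insert g Cl` by resolving it against an
available clause `insert h Dl` such that `g - h` is a nonzero constant, then simplifying. -/
lemma g_elim {G : Set (LinClause ι R)} {Cl Dl : LinClause ι R} {g h : AffPoly ι R}
    (h1 : insert g Cl ∈ G) (h2 : insert h Dl ∈ G) {e : R} (he : e ≠ 0)
    (heq : (1 : R) • g + (-1 : R) • h = C e)
    (hsz : szC (Cl ∪ Dl) + (2 * Fintype.card ι + 1) ≤ β) :
    BS Hyp β G 2 {Cl ∪ Dl} := by
  have s1 : BS Hyp β G 1 {insert (C e) (Cl ∪ Dl)} :=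
    g_res 1 (-1) h1 h2 (by rw [heq]) (le_trans (szC_insert_le _ _) hsz)
  have s2 : BS Hyp β (G ∪ {insert (C e) (Cl ∪ Dl)}) 1 {Cl ∪ Dl} :=
    g_simp he (Or.inr rfl) (by omega)
  exact (s1.trans s2).mono le_rfl le_rfl (by simp)

/-- Split a disjunct `g` of an available clause `insert g Cl` on the Boolean variable `x i`:
derive `Cl ∪ {g + α x i, g + α x i - α}`. -/
lemma g_split {G : Set (LinClause ι R)} {Cl : LinClause ι R} {g : AffPoly ι R}
    (i : ι) (α : R) (h1 : insert g Cl ∈ G)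
    (hsz : szC Cl + 3 * (2 * Fintype.card ι + 1) ≤ β) :
    BS Hyp β G 3
      {Cl ∪ {(1 : R) • g + α • X i, (1 : R) • g + α • (X i + C (-1))}} := by
  classical
  set p1 := (1 : R) • g + α • X i with hp1
  set p2 := (1 : R) • g + α • (X i + C (-1)) with hp2
  set xm1 : AffPoly ι R := X i + C (-1) with hxm1
  have hax : BS Hyp β G 1 {(LinClause.boolAxiom i : LinClause ι R)} :=
    BS.step (fun _ _ => Or.inr (Or.inl ⟨i, rfl⟩))
      (by
        have h2 := szC_insert_le (ι := ι) (R := R) (X i)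
          (insert (X i + C (-1)) (∅ : LinClause ι R))
        have h3 := szC_insert_le (ι := ι) (R := R) (X i + C (-1)) (∅ : LinClause ι R)
        have hz : szC (∅ : LinClause ι R) = 0 := by simp [szC, LinClause.sizeW]
        have he : (LinClause.boolAxiom i : LinClause ι R) =
            insert (X i) (insert (X i + C (-1)) ∅) := rfl
        rw [he]
        omega)
  have hL1 : BS Hyp β (G ∪ {(LinClause.boolAxiom i : LinClause ι R)}) 1
      {insert p1 (Cl ∪ {xm1})} := by
    refine g_res 1 α (Or.inl h1) (Or.inr rfl) rfl ?_
    refine le_trans (szC_insert_le _ _) ?_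
    have := szC_insert_le (ι := ι) (R := R) xm1 Cl
    have : szC (Cl ∪ {xm1}) ≤ szC Cl + (2 * Fintype.card ι + 1) := by
      rw [Finset.union_comm, ← Finset.insert_eq]
      exact szC_insert_le _ _
    omega
  have hL2 : BS Hyp β (G ∪ ({(LinClause.boolAxiom i : LinClause ι R)} ∪
      {insert p1 (Cl ∪ {xm1})})) 1 {Cl ∪ {p1, p2}} := by
    refine g_res (f := g) (g := xm1) (Cd := Cl) (Dd := Cl ∪ {p1}) 1 α
      (Or.inl h1) (Or.inr (Or.inr (by
        have : insert p1 (Cl ∪ {xm1}) = insert xm1 (Cl ∪ {p1}) := by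
          ext z
          simp only [Finset.mem_insert, Finset.mem_union, Finset.mem_singleton]
          tauto
        rw [Set.mem_singleton_iff, this]))) ?_ ?_
    · ext z
      simp only [Finset.mem_insert, Finset.mem_union, Finset.mem_singleton]
      tauto
    · have h2 : szC (Cl ∪ {p1, p2}) ≤ szC Cl + 2 * (2 * Fintype.card ι + 1) := by
        have e1 : Cl ∪ {p1, p2} = insert p1 (insert p2 Cl) := by
          ext z
          simp only [Finset.mem_insert, Finset.mem_union, Finset.mem_singleton]
          tauto
        rw [e1]
        have := szC_insert_le (ι := ι) (R := R) p1 (insert p2 Cl)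
        have := szC_insert_le (ι := ι) (R := R) p2 Cl
        omega
      omega
  exact ((hax.trans hL1).trans hL2).mono le_rfl le_rfl (by simp)

/-- Resolve a disjunct `g` of an available clause against the disjunct `x i` of a Boolean
axiom (used to "set `x i := 0`"). -/
lemma g_fix0 {G : Set (LinClause ι R)} {Cl : LinClause ι R} {g : AffPoly ι R}
    (i : ι) (α : R) (h1 : insert g Cl ∈ G)
    (hsz : szC Cl + 2 * (2 * Fintype.card ι + 1) ≤ β) :
    BS Hyp β G 2 {Cl ∪ {(1 : R) • g + α • X i, X i + C (-1)}} := by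
  classical
  have hax : BS Hyp β G 1 {(LinClause.boolAxiom i : LinClause ι R)} :=
    BS.step (fun _ _ => Or.inr (Or.inl ⟨i, rfl⟩))
      (by
        have h2 := szC_insert_le (ι := ι) (R := R) (X i)
          (insert (X i + C (-1)) (∅ : LinClause ι R))
        have h3 := szC_insert_le (ι := ι) (R := R) (X i + C (-1)) (∅ : LinClause ι R)
        have hz : szC (∅ : LinClause ι R) = 0 := by simp [szC, LinClause.sizeW]
        have he : (LinClause.boolAxiom i : LinClause ι R) =
            insert (X i) (insert (X i + C (-1)) ∅) := rfl
        rw [he]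
        omega)
  have hL1 : BS Hyp β (G ∪ {(LinClause.boolAxiom i : LinClause ι R)}) 1
      {Cl ∪ {(1 : R) • g + α • X i, X i + C (-1)}} := by
    refine g_res (f := g) (g := X i) (Cd := Cl) (Dd := {X i + C (-1)}) 1 α
      (Or.inl h1) (Or.inr rfl) ?_ ?_
    · ext z
      simp only [Finset.mem_insert, Finset.mem_union, Finset.mem_singleton]
      tauto
    · have e1 : Cl ∪ {(1 : R) • g + α • X i, X i + C (-1)} =
          insert ((1 : R) • g + α • X i) (insert (X i + C (-1)) Cl) := by
        ext z
        simp only [Finset.mem_insert, Finset.mem_union, Finset.mem_singleton]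
        tauto
      rw [e1]
      have := szC_insert_le (ι := ι) (R := R) ((1 : R) • g + α • X i)
        (insert (X i + C (-1)) Cl)
      have := szC_insert_le (ι := ι) (R := R) (X i + C (-1)) Cl
      omega
  exact (hax.trans hL1).mono le_rfl le_rfl (by simp)

/-- Resolve a disjunct `g` of an available clause against the disjunct `x i - 1` of a
Boolean axiom (used to "set `x i := 1`"). -/
lemma g_fix1 {G : Set (LinClause ι R)} {Cl : LinClause ι R} {g : AffPoly ι R}
    (i : ι) (α : R) (h1 : insert g Cl ∈ G)
    (hsz : szC Cl + 2 * (2 * Fintype.card ι + 1) ≤ β) :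
    BS Hyp β G 2 {Cl ∪ {(1 : R) • g + α • (X i + C (-1)), X i}} := by
  classical
  have hax : BS Hyp β G 1 {(LinClause.boolAxiom i : LinClause ι R)} :=
    BS.step (fun _ _ => Or.inr (Or.inl ⟨i, rfl⟩))
      (by
        have h2 := szC_insert_le (ι := ι) (R := R) (X i)
          (insert (X i + C (-1)) (∅ : LinClause ι R))
        have h3 := szC_insert_le (ι := ι) (R := R) (X i + C (-1)) (∅ : LinClause ι R)
        have hz : szC (∅ : LinClause ι R) = 0 := by simp [szC, LinClause.sizeW]
        have : (LinClause.boolAxiom i : LinClause ι R) =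
            insert (X i) (insert (X i + C (-1)) ∅) := rfl
        rw [this]
        omega)
  have hL1 : BS Hyp β (G ∪ {(LinClause.boolAxiom i : LinClause ι R)}) 1
      {Cl ∪ {(1 : R) • g + α • (X i + C (-1)), X i}} := by
    refine g_res (f := g) (g := X i + C (-1)) (Cd := Cl) (Dd := {X i}) 1 α
      (Or.inl h1) (Or.inr (by
        rw [Set.mem_singleton_iff]
        ext z
        simp only [LinClause.boolAxiom, Finset.mem_insert, Finset.mem_singleton]
        tauto)) ?_ ?_
    · ext z
      simp only [Finset.mem_insert, Finset.mem_union, Finset.mem_singleton]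
      tauto
    · have e1 : Cl ∪ {(1 : R) • g + α • (X i + C (-1)), X i} =
          insert ((1 : R) • g + α • (X i + C (-1))) (insert (X i) Cl) := by
        ext z
        simp only [Finset.mem_insert, Finset.mem_union, Finset.mem_singleton]
        tauto
      rw [e1]
      have := szC_insert_le (ι := ι) (R := R) ((1 : R) • g + α • (X i + C (-1)))
        (insert (X i) Cl)
      have := szC_insert_le (ι := ι) (R := R) (X i) Cl
      omega
  exact (hax.trans hL1).mono le_rfl le_rfl (by simp)

end S9
namespace S9
open AffPoly

set_option linter.unusedSectionVars false

variable {ι R : Type} [CommRing R] [Fintype ι]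
variable {Hyp : Set (LinClause ι R)} {β : ℕ}

/-- Process every disjunct of an available clause `U ∪ S`, replacing each disjunct `g ∈ S`
by the set of disjuncts `Φ g` (exact version). -/
lemma loopF {G : Set (LinClause ι R)} {W : LinClause ι R} {Φ : AffPoly ι R → LinClause ι R}
    {t : ℕ} :
    ∀ S : Finset (AffPoly ι R),
      (∀ g ∈ S, ∀ Cl : LinClause ι R, Cl ⊆ W → ∀ G' : Set (LinClause ι R),
        G ⊆ G' → insert g Cl ∈ G' → BS Hyp β G' t {Cl ∪ Φ g}) →
      (∀ g ∈ S, Φ g ⊆ W) →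
      S ⊆ W → ∀ G' : Set (LinClause ι R), G ⊆ G' →
      ∀ U : LinClause ι R, U ⊆ W → (U ∪ S) ∈ G' →
      BS Hyp β G' (S.card * t) {U ∪ S.biUnion Φ} := by
  classical
  intro S
  induction S using Finset.induction with
  | empty =>
    intro _ _ _ G' hG U hU hin
    refine BS.ofSub ?_
    intro E hE
    simp only [Set.mem_singleton_iff] at hE
    subst hE
    simpa using hin
  | @insert g S' hg ih =>
    intro hstep hΦ hSW G' hG U hU hin
    have hgW : g ∈ W := hSW (Finset.mem_insert_self g S')
    have hS'W : S' ⊆ W := fun x hx => hSW (Finset.mem_insert_of_mem hx)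
    have e1 : U ∪ insert g S' = insert g (U ∪ S') := by
      ext z
      simp only [Finset.mem_insert, Finset.mem_union]
      tauto
    have step1 : BS Hyp β G' t {(U ∪ S') ∪ Φ g} :=
      hstep g (Finset.mem_insert_self g S') (U ∪ S')
        (Finset.union_subset hU hS'W) G' hG (e1 ▸ hin)
    have e2 : ((U ∪ S') ∪ Φ g) = (U ∪ Φ g) ∪ S' := by
      ext z
      simp only [Finset.mem_union]
      tauto
    have ihh : BS Hyp β (G' ∪ {(U ∪ S') ∪ Φ g}) (S'.card * t)
        {(U ∪ Φ g) ∪ S'.biUnion Φ} := by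
      refine ih (fun x hx => hstep x (Finset.mem_insert_of_mem hx))
        (fun x hx => hΦ x (Finset.mem_insert_of_mem hx)) hS'W _
        (fun x hx => Or.inl (hG hx)) (U ∪ Φ g)
        (Finset.union_subset hU (hΦ g (Finset.mem_insert_self g S'))) ?_
      exact Or.inr (by rw [Set.mem_singleton_iff, e2])
    have := step1.trans ihh
    refine this.mono le_rfl ?_ ?_
    · rw [Finset.card_insert_of_notMem hg]; ring_nf; omega
    · intro E hE
      simp only [Set.mem_singleton_iff] at hE
      subst hE
      refine Or.inr ?_
      rw [Set.mem_singleton_iff]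
      ext z
      simp only [Finset.mem_union, Finset.biUnion_insert]
      tauto

/-- Process every disjunct of an available clause `U ∪ S`, replacing each disjunct `g ∈ S`
by some set of disjuncts contained in `Z` (inexact version). -/
lemma loopRel {G : Set (LinClause ι R)} {W Z : LinClause ι R} {t : ℕ}
    (hZ : Z ⊆ W) :
    ∀ S : Finset (AffPoly ι R),
      (∀ g ∈ S, ∀ Cl : LinClause ι R, Cl ⊆ W → ∀ G' : Set (LinClause ι R),
        G ⊆ G' → insert g Cl ∈ G' →
        ∃ Wg : LinClause ι R, Wg ⊆ Z ∧ BS Hyp β G' t {Cl ∪ Wg}) →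
      S ⊆ W → ∀ G' : Set (LinClause ι R), G ⊆ G' →
      ∀ U : LinClause ι R, U ⊆ W → (U ∪ S) ∈ G' →
      ∃ E : LinClause ι R, E ⊆ U ∪ Z ∧ BS Hyp β G' (S.card * t) {E} := by
  classical
  intro S
  induction S using Finset.induction with
  | empty =>
    intro _ _ G' hG U hU hin
    refine ⟨U, Finset.subset_union_left, BS.ofSub ?_⟩
    intro E hE
    simp only [Set.mem_singleton_iff] at hE
    subst hE
    simpa using hin
  | @insert g S' hg ih =>
    intro hstep hSW G' hG U hU hin
    have hgW : g ∈ W := hSW (Finset.mem_insert_self g S')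
    have hS'W : S' ⊆ W := fun x hx => hSW (Finset.mem_insert_of_mem hx)
    have e1 : U ∪ insert g S' = insert g (U ∪ S') := by
      ext z
      simp only [Finset.mem_insert, Finset.mem_union]
      tauto
    obtain ⟨Wg, hWgZ, step1⟩ :=
      hstep g (Finset.mem_insert_self g S') (U ∪ S')
        (Finset.union_subset hU hS'W) G' hG (e1 ▸ hin)
    have e2 : ((U ∪ S') ∪ Wg) = (U ∪ Wg) ∪ S' := by
      ext z
      simp only [Finset.mem_union]
      tauto
    obtain ⟨E, hEsub, ihh⟩ := ih (fun x hx => hstep x (Finset.mem_insert_of_mem hx))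
      hS'W (G' ∪ {(U ∪ S') ∪ Wg}) (fun x hx => Or.inl (hG hx))
      (U ∪ Wg) (Finset.union_subset hU (le_trans hWgZ hZ)) 
      (Or.inr (by rw [Set.mem_singleton_iff, e2]))
    refine ⟨E, ?_, ?_⟩
    · refine le_trans hEsub ?_
      intro z hz
      simp only [Finset.mem_union] at hz ⊢
      rcases hz with hz | hz
      · rcases hz with hz | hz
        · exact Or.inl hz
        · exact Or.inr (hWgZ hz)
      · exact Or.inr hz
    · have := step1.trans ihh
      refine this.mono le_rfl ?_ (by simp)
      rw [Finset.card_insert_of_notMem hg]; ring_nf; omega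
end S9
namespace S9
open AffPoly

set_option linter.unusedSectionVars false
set_option maxHeartbeats 1000000

section Main

variable {F : Type} [Field F] {n m : ℕ} (f : Fin m → AffPoly (Fin n) F)

/-- The disjunct polynomial `(∑_{i<k} a_{ji} x_i) - q`. -/
noncomputable def dP (k : ℕ) (j : Fin m) (q : F) : AffPoly (Fin n) F :=
  ⟨fun i => if (i : ℕ) < k then (f j).coeff i else 0, -q⟩

/-- The partial sum of row `j` over the first `k` variables at assignment `b`. -/
noncomputable def Sm (k : ℕ) (j : Fin m) (b : Fin n → Bool) : F :=
  ∑ i : Fin n, (if (i : ℕ) < k then (f j).coeff i else 0) * (if b i then 1 else 0)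

/-- The set of reachable partial-sum state vectors at level `k`. -/
noncomputable def Pst (k : ℕ) : Finset (Fin m → F) :=
  Finset.image (fun b : Fin n → Bool => fun j => Sm f k j b) Finset.univ

/-- The set of reachable partial sums of row `j` at level `k`. -/
noncomputable def Qst (k : ℕ) (j : Fin m) : Finset F :=
  Finset.image (fun b : Fin n → Bool => Sm f k j b) Finset.univ

noncomputable def rowCl (k : ℕ) (j : Fin m) (s : Finset F) : LinClause (Fin n) F :=
  s.image (fun q => dP f k j q)

/-- The image tautology clause of row `j` at level `k`. -/
noncomputable def Tcl (k : ℕ) (j : Fin m) : LinClause (Fin n) F := rowCl f k j (Qst f k j)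

/-- The clause expressing that the state vector at level `k` differs from `p`. -/
noncomputable def Ncl (k : ℕ) (p : Fin m → F) : LinClause (Fin n) F :=
  Finset.univ.biUnion fun j => rowCl f k j ((Qst f k j).erase (p j))

lemma dP_inj {k : ℕ} {j : Fin m} {q q' : F} (h : dP f k j q = dP f k j q') : q = q' := by
  have := congrArg AffPoly.const h
  simpa [dP, neg_inj] using this

lemma dP_coeff_lt {k : ℕ} {j : Fin m} {q : F} {i : Fin n} (h : (i : ℕ) < k) :
    (dP f k j q).coeff i = (f j).coeff i := by simp [dP, h]

lemma f_eq_dP (j : Fin m) : f j = dP f n j (-(f j).const) := by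
  refine APext (fun i => ?_) (by simp [dP])
  simp [dP, i.isLt]

lemma Sm_congr {k : ℕ} {j : Fin m} {b b' : Fin n → Bool}
    (h : ∀ i : Fin n, (i : ℕ) < k → b i = b' i) : Sm f k j b = Sm f k j b' := by
  unfold Sm
  refine Finset.sum_congr rfl fun i _ => ?_
  by_cases hik : (i : ℕ) < k
  · rw [h i hik]
  · simp [hik]

lemma Sm_succ {k : ℕ} (hk : k < n) (j : Fin m) (b : Fin n → Bool) :
    Sm f (k + 1) j b =
      Sm f k j b + (f j).coeff ⟨k, hk⟩ * (if b ⟨k, hk⟩ then 1 else 0) := by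
  unfold Sm
  have key : ∀ i : Fin n,
      (if (i : ℕ) < k + 1 then (f j).coeff i else 0) * (if b i then 1 else 0) =
      (if (i : ℕ) < k then (f j).coeff i else 0) * (if b i then 1 else 0) +
      (if i = ⟨k, hk⟩ then (f j).coeff i * (if b i then 1 else 0) else 0) := by
    intro i
    rcases lt_trichotomy (i : ℕ) k with h | h | h
    · have h1 : (i : ℕ) < k + 1 := by omega
      have h2 : i ≠ ⟨k, hk⟩ := by
        intro he; rw [he] at h; simp at h
      simp [h, h1, h2]
    · have h1 : (i : ℕ) < k + 1 := by omega
      have h2 : i = ⟨k, hk⟩ := Fin.ext h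
      have h3 : ¬ ((i : ℕ) < k) := by omega
      simp [h1, h2, h3]
    · have h1 : ¬ ((i : ℕ) < k + 1) := by omega
      have h3 : ¬ ((i : ℕ) < k) := by omega
      have h2 : i ≠ ⟨k, hk⟩ := by
        intro he; rw [he] at h; simp at h
      simp [h1, h2, h3]
  rw [Finset.sum_congr rfl (fun i _ => key i), Finset.sum_add_distrib,
    Finset.sum_ite_eq' Finset.univ (⟨k, hk⟩ : Fin n)]
  simp

lemma Sm_zero (j : Fin m) (b : Fin n → Bool) : Sm f 0 j b = 0 := by
  unfold Sm
  simp

lemma evalB_eq_Sm (j : Fin m) (b : Fin n → Bool) :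
    (f j).evalB b = Sm f n j b + (f j).const := by
  unfold AffPoly.evalB AffPoly.eval Sm
  congr 1
  refine Finset.sum_congr rfl fun i _ => ?_
  simp [i.isLt]

lemma mem_Qst_of_mem_Pst {k : ℕ} {p : Fin m → F} (hp : p ∈ Pst f k) (j : Fin m) :
    p j ∈ Qst f k j := by
  obtain ⟨b, _, rfl⟩ := Finset.mem_image.1 hp
  exact Finset.mem_image.2 ⟨b, Finset.mem_univ b, rfl⟩

lemma mem_Pst_succ0 {k : ℕ} (hk : k < n) {p : Fin m → F} (hp : p ∈ Pst f k) :
    p ∈ Pst f (k + 1) := by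
  obtain ⟨b, _, rfl⟩ := Finset.mem_image.1 hp
  refine Finset.mem_image.2 ⟨Function.update b ⟨k, hk⟩ false, Finset.mem_univ _, ?_⟩
  funext j
  rw [Sm_succ f hk]
  rw [Function.update_self]
  rw [Sm_congr f (b := Function.update b ⟨k, hk⟩ false) (b' := b)
    (fun i hik => Function.update_of_ne (by
      intro he; rw [he] at hik; simp at hik) _ _)]
  simp

lemma mem_Pst_succ1 {k : ℕ} (hk : k < n) {p : Fin m → F} (hp : p ∈ Pst f k) :
    (fun j => p j + (f j).coeff ⟨k, hk⟩) ∈ Pst f (k + 1) := by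
  obtain ⟨b, _, rfl⟩ := Finset.mem_image.1 hp
  refine Finset.mem_image.2 ⟨Function.update b ⟨k, hk⟩ true, Finset.mem_univ _, ?_⟩
  funext j
  rw [Sm_succ f hk]
  rw [Function.update_self]
  rw [Sm_congr f (b := Function.update b ⟨k, hk⟩ true) (b' := b)
    (fun i hik => Function.update_of_ne (by
      intro he; rw [he] at hik; simp at hik) _ _)]
  simp

lemma Qst_succ {k : ℕ} (hk : k < n) (j : Fin m) :
    Qst f (k + 1) j = Qst f k j ∪ (Qst f k j).image (· + (f j).coeff ⟨k, hk⟩) := by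
  ext q
  constructor
  · intro hq
    obtain ⟨b, _, rfl⟩ := Finset.mem_image.1 hq
    rw [Sm_succ f hk]
    by_cases hb : b ⟨k, hk⟩
    · refine Finset.mem_union_right _ (Finset.mem_image.2
        ⟨Sm f k j b, Finset.mem_image.2 ⟨b, Finset.mem_univ b, rfl⟩, ?_⟩)
      simp [hb]
    · refine Finset.mem_union_left _ ?_
      have : Sm f k j b + (f j).coeff ⟨k, hk⟩ * (if b ⟨k, hk⟩ then 1 else 0) =
          Sm f k j b := by simp [hb]
      rw [this]
      exact Finset.mem_image.2 ⟨b, Finset.mem_univ b, rfl⟩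
  · intro hq
    rcases Finset.mem_union.1 hq with hq | hq
    · obtain ⟨b, _, rfl⟩ := Finset.mem_image.1 hq
      refine Finset.mem_image.2 ⟨Function.update b ⟨k, hk⟩ false, Finset.mem_univ _, ?_⟩
      rw [Sm_succ f hk, Function.update_self]
      rw [Sm_congr f (b := Function.update b ⟨k, hk⟩ false) (b' := b)
        (fun i hik => Function.update_of_ne (by
          intro he; rw [he] at hik; simp at hik) _ _)]
      simp
    · obtain ⟨q', hq', rfl⟩ := Finset.mem_image.1 hq
      obtain ⟨b, _, rfl⟩ := Finset.mem_image.1 hq'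
      refine Finset.mem_image.2 ⟨Function.update b ⟨k, hk⟩ true, Finset.mem_univ _, ?_⟩
      rw [Sm_succ f hk, Function.update_self]
      rw [Sm_congr f (b := Function.update b ⟨k, hk⟩ true) (b' := b)
        (fun i hik => Function.update_of_ne (by
          intro he; rw [he] at hik; simp at hik) _ _)]
      simp

/-- The cardinality of the Boolean image of the system. -/
noncomputable def VC : ℕ :=
  (Finset.image (fun b : Fin n → Bool => fun j : Fin m => (f j).evalB b) Finset.univ).card

lemma card_Pst_le (k : ℕ) : (Pst f k).card ≤ VC f := by
  classical
  have h : ∀ p ∈ Pst f k,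
      (fun j => p j + (f j).const) ∈
        Finset.image (fun b : Fin n → Bool => fun j : Fin m => (f j).evalB b)
          Finset.univ := by
    intro p hp
    obtain ⟨b, _, rfl⟩ := Finset.mem_image.1 hp
    refine Finset.mem_image.2 ⟨fun i => if (i : ℕ) < k then b i else false,
      Finset.mem_univ _, ?_⟩
    funext j
    show (f j).evalB _ = Sm f k j b + (f j).const
    rw [evalB_eq_Sm]
    congr 1
    unfold Sm
    refine Finset.sum_congr rfl fun i _ => ?_
    by_cases hik : (i : ℕ) < k
    · simp [hik, i.isLt]
    · simp [hik, i.isLt]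
  have hinj : Set.InjOn (fun p : Fin m → F => fun j => p j + (f j).const) (Pst f k) := by
    intro p _ p' _ hpp
    funext j
    have := congrFun hpp j
    simpa using this
  calc (Pst f k).card = ((Pst f k).image fun p => fun j => p j + (f j).const).card :=
        (Finset.card_image_of_injOn hinj).symm
    _ ≤ VC f := Finset.card_le_card (by
        intro z hz
        obtain ⟨p, hp, rfl⟩ := Finset.mem_image.1 hz
        exact h p hp)

lemma Qst_eq_image (k : ℕ) (j : Fin m) : Qst f k j = (Pst f k).image fun p => p j := by
  unfold Qst Pst
  rw [Finset.image_image]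
  rfl

lemma card_Qst_le (k : ℕ) (j : Fin m) : (Qst f k j).card ≤ VC f := by
  rw [Qst_eq_image]
  exact le_trans (Finset.card_image_le) (card_Pst_le f k)

lemma card_rowCl_le (k : ℕ) (j : Fin m) (s : Finset F) :
    (rowCl f k j s).card ≤ s.card := Finset.card_image_le

lemma card_Ncl_le (k : ℕ) (p : Fin m → F) : (Ncl f k p).card ≤ m * VC f := by
  refine le_trans (Finset.card_biUnion_le) ?_
  calc ∑ j : Fin m, (rowCl f k j ((Qst f k j).erase (p j))).card
      ≤ ∑ _j : Fin m, VC f := by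
        refine Finset.sum_le_sum fun j _ => ?_
        exact le_trans (card_rowCl_le f k j _)
          (le_trans (Finset.card_erase_le) (card_Qst_le f k j))
    _ = m * VC f := by simp [mul_comm]

lemma card_Tcl_le (k : ℕ) (j : Fin m) : (Tcl f k j).card ≤ VC f :=
  le_trans (card_rowCl_le f k j _) (card_Qst_le f k j)

lemma Tcl_zero (j : Fin m) : Tcl f 0 j = {C 0} := by
  have hQ : Qst f 0 j = {0} := by
    ext q
    simp only [Qst, Finset.mem_image, Finset.mem_singleton]
    constructor
    · rintro ⟨b, _, rfl⟩; exact Sm_zero f j b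
    · rintro rfl; exact ⟨fun _ => false, Finset.mem_univ _, Sm_zero f j _⟩
  unfold Tcl rowCl
  rw [hQ]
  simp only [Finset.image_singleton]
  congr 1
  refine APext (fun i => ?_) (by simp [dP])
  simp [dP]

lemma Ncl_zero (p : Fin m → F) (hp : p ∈ Pst f 0) : Ncl f 0 p = ∅ := by
  have hp0 : ∀ j, p j = 0 := by
    intro j
    obtain ⟨b, _, rfl⟩ := Finset.mem_image.1 hp
    exact Sm_zero f j b
  have hQ : ∀ j, Qst f 0 j = {0} := by
    intro j
    ext q
    simp only [Qst, Finset.mem_image, Finset.mem_singleton]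
    constructor
    · rintro ⟨b, _, rfl⟩; exact Sm_zero f j b
    · rintro rfl; exact ⟨fun _ => false, Finset.mem_univ _, Sm_zero f j _⟩
  unfold Ncl
  refine Finset.eq_empty_of_forall_notMem fun z hz => ?_
  obtain ⟨j, _, hz⟩ := Finset.mem_biUnion.1 hz
  rw [hQ j, hp0 j] at hz
  simp [rowCl] at hz

lemma Pst_nonempty : ∃ p, p ∈ Pst f 0 :=
  ⟨_, Finset.mem_image.2 ⟨fun _ => false, Finset.mem_univ _, rfl⟩⟩

end Main
end S9
namespace S9
open AffPoly

set_option linter.unusedSectionVars false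
set_option maxHeartbeats 1000000

section Main

variable {F : Type} [Field F] {n m : ℕ} (f : Fin m → AffPoly (Fin n) F)

/-- The hypothesis set: each equation as a one-disjunct clause. -/
def Hyp0 : Set (LinClause (Fin n) F) := {Cl | ∃ i, Cl = ({f i} : LinClause (Fin n) F)}

/-- Uniform bound on the size of every clause used in the refutation. -/
noncomputable def βv : ℕ := (2 * n + 1) * (4 * (m + 1) * (VC f + 1) + 10)

lemma szβ {Cl : LinClause (Fin n) F} (h : Cl.card ≤ 4 * (m + 1) * (VC f + 1) + 10) :
    szC Cl ≤ βv f := by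
  have h1 := szC_le_card Cl
  rw [Fintype.card_fin] at h1
  unfold βv
  calc szC Cl ≤ Cl.card * (2 * n + 1) := h1
    _ ≤ (4 * (m + 1) * (VC f + 1) + 10) * (2 * n + 1) := Nat.mul_le_mul_right _ h
    _ = (2 * n + 1) * (4 * (m + 1) * (VC f + 1) + 10) := Nat.mul_comm _ _

lemma card_pair_le (g h : AffPoly (Fin n) F) :
    ({g, h} : LinClause (Fin n) F).card ≤ 2 := by
  exact le_trans (Finset.card_insert_le _ _) (by simp)

-- Polynomial identities
lemma pid_XX (i0 : Fin n) : (1 : F) • X i0 + (-1 : F) • X i0 = (C 0 : AffPoly (Fin n) F) :=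
  APext (fun i => by by_cases h : i = i0 <;> simp [h]) (by simp)

lemma pid_mm (i0 : Fin n) :
    (1 : F) • (X i0 + C (-1)) + (-1 : F) • (X i0 + C (-1)) = (C 0 : AffPoly (Fin n) F) :=
  APext (fun i => by by_cases h : i = i0 <;> simp [h]) (by simp)

lemma pid_m1 (i0 : Fin n) :
    (1 : F) • (X i0 + C (-1)) + (-1 : F) • X i0 = (C (-1) : AffPoly (Fin n) F) :=
  APext (fun i => by by_cases h : i = i0 <;> simp [h]) (by simp)

lemma idA {k : ℕ} (hk : k < n) (j : Fin m) (q : F) :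
    (1 : F) • dP f k j q + (f j).coeff ⟨k, hk⟩ • X ⟨k, hk⟩ = dP f (k + 1) j q := by
  refine APext (fun i => ?_) (by simp [dP])
  rcases lt_trichotomy (i : ℕ) k with h | h | h
  · have h2 : (i : ℕ) < k + 1 := by omega
    have h3 : i ≠ ⟨k, hk⟩ := by intro he; rw [he] at h; simp at h
    simp [dP, h, h2, h3]; intro; omega
  · have h2 : (i : ℕ) < k + 1 := by omega
    have h3 : i = ⟨k, hk⟩ := Fin.ext h
    have h4 : ¬ ((i : ℕ) < k) := by omega
    subst h3
    simp [dP, h2, h4]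
  · have h2 : ¬ ((i : ℕ) < k + 1) := by omega
    have h3 : i ≠ ⟨k, hk⟩ := by intro he; rw [he] at h; simp at h
    have h4 : ¬ ((i : ℕ) < k) := by omega
    simp [dP, h2, h3, h4]; intro; omega

lemma idB {k : ℕ} (hk : k < n) (j : Fin m) (q : F) :
    (1 : F) • dP f k j q + (f j).coeff ⟨k, hk⟩ • (X ⟨k, hk⟩ + C (-1)) =
      dP f (k + 1) j (q + (f j).coeff ⟨k, hk⟩) := by
  refine APext (fun i => ?_) (by simp [dP]; ring)
  rcases lt_trichotomy (i : ℕ) k with h | h | h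
  · have h2 : (i : ℕ) < k + 1 := by omega
    have h3 : i ≠ ⟨k, hk⟩ := by intro he; rw [he] at h; simp at h
    simp [dP, h, h2, h3]; intro; omega
  · have h2 : (i : ℕ) < k + 1 := by omega
    have h3 : i = ⟨k, hk⟩ := Fin.ext h
    have h4 : ¬ ((i : ℕ) < k) := by omega
    subst h3
    simp [dP, h2, h4]
  · have h2 : ¬ ((i : ℕ) < k + 1) := by omega
    have h3 : i ≠ ⟨k, hk⟩ := by intro he; rw [he] at h; simp at h
    have h4 : ¬ ((i : ℕ) < k) := by omega
    simp [dP, h2, h3, h4]; intro; omega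

lemma idC {k : ℕ} (hk : k < n) (j : Fin m) (q : F) :
    (1 : F) • dP f (k + 1) j q + (-((f j).coeff ⟨k, hk⟩)) • X ⟨k, hk⟩ = dP f k j q := by
  refine APext (fun i => ?_) (by simp [dP])
  rcases lt_trichotomy (i : ℕ) k with h | h | h
  · have h2 : (i : ℕ) < k + 1 := by omega
    have h3 : i ≠ ⟨k, hk⟩ := by intro he; rw [he] at h; simp at h
    simp [dP, h, h2, h3]; intro; omega
  · have h2 : (i : ℕ) < k + 1 := by omega
    have h3 : i = ⟨k, hk⟩ := Fin.ext h
    have h4 : ¬ ((i : ℕ) < k) := by omega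
    subst h3
    simp [dP, h2, h4]
  · have h2 : ¬ ((i : ℕ) < k + 1) := by omega
    have h3 : i ≠ ⟨k, hk⟩ := by intro he; rw [he] at h; simp at h
    have h4 : ¬ ((i : ℕ) < k) := by omega
    simp [dP, h2, h3, h4]; intro; omega

lemma idD {k : ℕ} (hk : k < n) (j : Fin m) (q : F) :
    (1 : F) • dP f (k + 1) j q + (-((f j).coeff ⟨k, hk⟩)) • (X ⟨k, hk⟩ + C (-1)) =
      dP f k j (q - (f j).coeff ⟨k, hk⟩) := by
  refine APext (fun i => ?_) (by simp [dP]; ring)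
  rcases lt_trichotomy (i : ℕ) k with h | h | h
  · have h2 : (i : ℕ) < k + 1 := by omega
    have h3 : i ≠ ⟨k, hk⟩ := by intro he; rw [he] at h; simp at h
    simp [dP, h, h2, h3]; intro; omega
  · have h2 : (i : ℕ) < k + 1 := by omega
    have h3 : i = ⟨k, hk⟩ := Fin.ext h
    have h4 : ¬ ((i : ℕ) < k) := by omega
    subst h3
    simp [dP, h2, h4]
  · have h2 : ¬ ((i : ℕ) < k + 1) := by omega
    have h3 : i ≠ ⟨k, hk⟩ := by intro he; rw [he] at h; simp at h
    have h4 : ¬ ((i : ℕ) < k) := by omega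
    simp [dP, h2, h3, h4]; intro; omega

lemma idE (k : ℕ) (j : Fin m) (q q' : F) :
    (1 : F) • dP f k j q + (-1 : F) • dP f k j q' = (C (q' - q) : AffPoly (Fin n) F) :=
  APext (fun i => by by_cases h : (i : ℕ) < k <;> simp [dP, h]) (by simp [dP]; ring)

lemma dP_coeff_at {k : ℕ} (hk : k < n) (j : Fin m) (q : F) :
    (dP f (k + 1) j q).coeff ⟨k, hk⟩ = (f j).coeff ⟨k, hk⟩ := by
  simp [dP]

/-- Derivation of the clause `{0 = 0}`. -/
lemma build_zero (hn : 0 < n) (G : Set (LinClause (Fin n) F)) :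
    BS (Hyp0 f) (βv f) G 5 {({C 0} : LinClause (Fin n) F)} := by
  classical
  set i0 : Fin n := ⟨0, hn⟩
  set xm1 : AffPoly (Fin n) F := X i0 + C (-1) with hxm1
  have hszsmall : ∀ Cl : LinClause (Fin n) F, Cl.card ≤ 2 → szC Cl ≤ βv f := by
    intro Cl h
    exact szβ f (by omega)
  have haxeq : (LinClause.boolAxiom i0 : LinClause (Fin n) F) = insert (X i0) {xm1} := rfl
  have c1 : BS (Hyp0 f) (βv f) G 1 {(LinClause.boolAxiom i0 : LinClause (Fin n) F)} :=
    BS.step (fun _ _ => Or.inr (Or.inl ⟨i0, rfl⟩))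
      (hszsmall _ (by rw [haxeq]; exact card_pair_le _ _))
  have c2 : BS (Hyp0 f) (βv f)
      (G ∪ {(LinClause.boolAxiom i0 : LinClause (Fin n) F)}) 1
      {(insert (C 0) {xm1} : LinClause (Fin n) F)} := by
    refine g_res (Cd := {xm1}) (Dd := {xm1}) (f := X i0) (g := X i0) 1 (-1)
      (Or.inr rfl) (Or.inr rfl) ?_ (hszsmall _ (card_pair_le _ _))
    rw [pid_XX, Finset.union_self]
  have c12 := c1.trans c2
  have c3 : BS (Hyp0 f) (βv f)
      (G ∪ ({(LinClause.boolAxiom i0 : LinClause (Fin n) F)} ∪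
        {(insert (C 0) {xm1} : LinClause (Fin n) F)})) 1
      {(insert (C 0) {X i0} : LinClause (Fin n) F)} := by
    refine g_res (Cd := {X i0}) (Dd := {X i0}) (f := xm1) (g := xm1) 1 (-1)
      (Or.inr (Or.inl (by rw [Set.mem_singleton_iff, haxeq, Finset.pair_comm])))
      (Or.inr (Or.inl (by rw [Set.mem_singleton_iff, haxeq, Finset.pair_comm])))
      ?_ (hszsmall _ (card_pair_le _ _))
    rw [pid_mm, Finset.union_self]
  have c123 := c12.trans c3
  have c4 : BS (Hyp0 f) (βv f)
      (G ∪ (({(LinClause.boolAxiom i0 : LinClause (Fin n) F)} ∪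
        {(insert (C 0) {xm1} : LinClause (Fin n) F)}) ∪
        {(insert (C 0) {X i0} : LinClause (Fin n) F)})) 1
      {(insert (C (-1)) {(C 0 : AffPoly (Fin n) F)} : LinClause (Fin n) F)} := by
    refine g_res (Cd := {(C 0 : AffPoly (Fin n) F)}) (Dd := {(C 0 : AffPoly (Fin n) F)})
      (f := xm1) (g := X i0) 1 (-1)
      (Or.inr (Or.inl (Or.inr (by rw [Set.mem_singleton_iff, Finset.pair_comm]))))
      (Or.inr (Or.inr (by rw [Set.mem_singleton_iff, Finset.pair_comm])))
      ?_ (hszsmall _ (card_pair_le _ _))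
    rw [pid_m1, Finset.union_self]
  have c1234 := c123.trans c4
  have c5 : BS (Hyp0 f) (βv f)
      (G ∪ ((({(LinClause.boolAxiom i0 : LinClause (Fin n) F)} ∪
        {(insert (C 0) {xm1} : LinClause (Fin n) F)}) ∪
        {(insert (C 0) {X i0} : LinClause (Fin n) F)}) ∪
        {(insert (C (-1)) {(C 0 : AffPoly (Fin n) F)} : LinClause (Fin n) F)})) 1
      {({C 0} : LinClause (Fin n) F)} := by
    refine g_simp (a := (-1 : F)) (by norm_num) (Or.inr (Or.inr rfl))
      (hszsmall _ (by simp))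
  have := c1234.trans c5
  exact this.mono le_rfl (by norm_num) (by intro E hE; exact Or.inr hE)

/-- Derivation of `T_{k+1,j}` from `T_{k,j}`. -/
lemma build_T_succ {k : ℕ} (hk : k < n) (j : Fin m) (G : Set (LinClause (Fin n) F))
    (hT : Tcl f k j ∈ G) :
    BS (Hyp0 f) (βv f) G (VC f * 3) {Tcl f (k + 1) j} := by
  classical
  set i0 : Fin n := ⟨k, hk⟩
  set α := (f j).coeff i0 with hα
  set Φ : AffPoly (Fin n) F → LinClause (Fin n) F :=
    fun g => {(1 : F) • g + α • X i0, (1 : F) • g + α • (X i0 + C (-1))} with hΦdef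
  set W : LinClause (Fin n) F := Tcl f k j ∪ Tcl f (k + 1) j with hW
  have hcardW : W.card ≤ 2 * VC f := by
    refine le_trans (Finset.card_union_le _ _) ?_
    have := card_Tcl_le f k j
    have := card_Tcl_le f (k + 1) j
    omega
  have hbiU : (Tcl f k j).biUnion Φ = Tcl f (k + 1) j := by
    ext z
    simp only [Finset.mem_biUnion]
    constructor
    · rintro ⟨g, hg, hz⟩
      obtain ⟨q, hq, rfl⟩ := Finset.mem_image.1 hg
      simp only [hΦdef, Finset.mem_insert, Finset.mem_singleton] at hz
      rcases hz with rfl | rfl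
      · rw [idA f hk j q]
        exact Finset.mem_image.2 ⟨q, by rw [Qst_succ f hk j]; exact Finset.mem_union_left _ hq, rfl⟩
      · rw [idB f hk j q]
        refine Finset.mem_image.2 ⟨q + α, ?_, rfl⟩
        rw [Qst_succ f hk j]
        exact Finset.mem_union_right _ (Finset.mem_image.2 ⟨q, hq, rfl⟩)
    · intro hz
      obtain ⟨q', hq', rfl⟩ := Finset.mem_image.1 hz
      rw [Qst_succ f hk j] at hq'
      rcases Finset.mem_union.1 hq' with hq | hq
      · exact ⟨dP f k j q', Finset.mem_image.2 ⟨q', hq, rfl⟩,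
          by simp only [hΦdef, Finset.mem_insert]; left; rw [idA f hk j q']⟩
      · obtain ⟨q0, hq0, hq0e⟩ := Finset.mem_image.1 hq
        subst hq0e
        exact ⟨dP f k j q0, Finset.mem_image.2 ⟨q0, hq0, rfl⟩,
          by simp only [hΦdef, Finset.mem_insert, Finset.mem_singleton]; right
             rw [idB f hk j q0]⟩
  have hloop := loopF (Hyp := Hyp0 f) (β := βv f) (G := G) (W := W) (Φ := Φ) (t := 3)
    (Tcl f k j)
    (fun g _ Cl hCl G' hG hin => by
      refine g_split (G := G') (Cl := Cl) (g := g) i0 α hin ?_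
      have h1 : szC Cl ≤ szC W := szC_mono hCl
      have h2 : szC W ≤ W.card * (2 * n + 1) := by
        have := szC_le_card W
        rwa [Fintype.card_fin] at this
      have h3 : W.card * (2 * n + 1) ≤ 2 * VC f * (2 * n + 1) :=
        Nat.mul_le_mul_right _ hcardW
      have h4 : szC Cl + 3 * (2 * Fintype.card (Fin n) + 1) ≤
          2 * VC f * (2 * n + 1) + 3 * (2 * n + 1) := by
        rw [Fintype.card_fin]
        omega
      refine le_trans h4 ?_
      unfold βv
      nlinarith [Nat.zero_le n, Nat.zero_le (VC f), Nat.zero_le m])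
    (fun g hg => by
      intro z hz
      have : z ∈ (Tcl f k j).biUnion Φ := Finset.mem_biUnion.2 ⟨g, hg, hz⟩
      rw [hbiU] at this
      exact Finset.mem_union_right _ this)
    Finset.subset_union_left G (le_refl _) ∅ (by simp) (by simpa using hT)
  refine hloop.mono le_rfl (Nat.mul_le_mul_right _ (card_Tcl_le f k j)) ?_
  intro E hE
  rw [Set.mem_singleton_iff] at hE
  subst hE
  rw [Set.mem_singleton_iff, Finset.empty_union, hbiU]

/-- All the clauses `T_{k,j}`, `k ≤ n`. -/
def TAll : Set (LinClause (Fin n) F) := {Cl | ∃ k ≤ n, ∃ j : Fin m, Cl = Tcl f k j}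

lemma build_TAll (hn : 0 < n) :
    BS (Hyp0 f) (βv f) (∅ : Set (LinClause (Fin n) F)) (5 + n * (m * (VC f * 3)))
      ({({C 0} : LinClause (Fin n) F)} ∪ TAll f) := by
  classical
  have main : ∀ K ≤ n, BS (Hyp0 f) (βv f) {({C 0} : LinClause (Fin n) F)}
      (K * (m * (VC f * 3))) {Cl | ∃ k ≤ K, ∃ j : Fin m, Cl = Tcl f k j} := by
    intro K
    induction K with
    | zero =>
      intro _
      refine BS.ofSub ?_
      rintro Cl ⟨k, hk, j, rfl⟩
      interval_cases k
      rw [Tcl_zero f j]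
      rfl
    | succ K ih =>
      intro hK
      have hKn : K ≤ n := by omega
      have prev := ih hKn
      have hstep : BS (Hyp0 f) (βv f)
          ({({C 0} : LinClause (Fin n) F)} ∪ {Cl | ∃ k ≤ K, ∃ j : Fin m, Cl = Tcl f k j})
          (m * (VC f * 3)) (⋃ j ∈ (Finset.univ : Finset (Fin m)), {Tcl f (K + 1) j}) := by
      -- iterate over rows
        have := BS.iterate (Hyp := Hyp0 f) (β := βv f)
          (Finset.univ : Finset (Fin m)) (fun j => {Tcl f (K + 1) j})
          (G := {({C 0} : LinClause (Fin n) F)} ∪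
            {Cl | ∃ k ≤ K, ∃ j : Fin m, Cl = Tcl f k j}) (t := VC f * 3)
          (fun j _ => build_T_succ f (by omega) j _ (Or.inr ⟨K, le_refl _, j, rfl⟩))
        simpa using this
      have := prev.trans hstep
      refine this.mono le_rfl (by ring_nf; omega) ?_
      rintro Cl ⟨k, hk, j, rfl⟩
      by_cases hkK : k ≤ K
      · exact Or.inl ⟨k, hkK, j, rfl⟩
      · have : k = K + 1 := by omega
        subst this
        exact Or.inr (by simp only [Set.mem_iUnion]; exact ⟨j, Finset.mem_univ j, rfl⟩)
  have h0 := build_zero f hn (∅ : Set (LinClause (Fin n) F))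
  have h1 := main n (le_refl n)
  have := h0.trans (h1.mono (by simp) le_rfl le_rfl)
  refine this.mono le_rfl le_rfl ?_
  rintro Cl (hCl | ⟨k, hk, j, rfl⟩)
  · exact Or.inl hCl
  · exact Or.inr ⟨k, hk, j, rfl⟩

end Main
end S9
namespace S9
open AffPoly

set_option linter.unusedSectionVars false
set_option maxHeartbeats 1000000

section Main

variable {F : Type} [Field F] {n m : ℕ} (f : Fin m → AffPoly (Fin n) F)

lemma szsum {Cl : LinClause (Fin n) F} {c t : ℕ} (hc : Cl.card ≤ c)
    (h : c + t ≤ 4 * (m + 1) * (VC f + 1) + 10) :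
    szC Cl + t * (2 * Fintype.card (Fin n) + 1) ≤ βv f := by
  rw [Fintype.card_fin]
  have h1 := szC_le_card Cl
  rw [Fintype.card_fin] at h1
  unfold βv
  calc szC Cl + t * (2 * n + 1) ≤ c * (2 * n + 1) + t * (2 * n + 1) := by
        have := Nat.mul_le_mul_right (2 * n + 1) hc
        omega
    _ = (c + t) * (2 * n + 1) := by rw [Nat.add_mul]
    _ ≤ (4 * (m + 1) * (VC f + 1) + 10) * (2 * n + 1) := Nat.mul_le_mul_right _ h
    _ = (2 * n + 1) * (4 * (m + 1) * (VC f + 1) + 10) := Nat.mul_comm _ _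

lemma rowCl_erase (k : ℕ) (j : Fin m) (q0 : F) :
    (Tcl f k j).erase (dP f k j q0) = rowCl f k j ((Qst f k j).erase q0) := by
  ext z
  simp only [Finset.mem_erase, Tcl, rowCl, Finset.mem_image, Finset.mem_erase]
  constructor
  · rintro ⟨hne, q, hq, rfl⟩
    exact ⟨q, ⟨fun he => hne (by rw [he]), hq⟩, rfl⟩
  · rintro ⟨q, ⟨hqne, hq⟩, rfl⟩
    exact ⟨fun he => hqne (dP_inj f he), q, hq, rfl⟩

lemma rowCl_subset_Ncl {k : ℕ} {p : Fin m → F} (j : Fin m) :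
    rowCl f k j ((Qst f k j).erase (p j)) ⊆ Ncl f k p := by
  intro z hz
  exact Finset.mem_biUnion.2 ⟨j, Finset.mem_univ j, hz⟩

lemma mem_Ncl_iff {k : ℕ} {p : Fin m → F} {z : AffPoly (Fin n) F} :
    z ∈ Ncl f k p ↔ ∃ (j : Fin m) (q : F), q ∈ (Qst f k j).erase (p j) ∧ z = dP f k j q := by
  simp only [Ncl, Finset.mem_biUnion, rowCl, Finset.mem_image, Finset.mem_univ, true_and]
  constructor
  · rintro ⟨j, q, hq, rfl⟩; exact ⟨j, q, hq, rfl⟩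
  · rintro ⟨j, q, hq, rfl⟩; exact ⟨j, q, hq, rfl⟩

lemma card_biUnion_rowCl_le (k : ℕ) (t : Fin m → Finset F) (h : ∀ j, (t j).card ≤ VC f) :
    (Finset.univ.biUnion fun j => rowCl f k j (t j)).card ≤ m * VC f := by
  refine le_trans (Finset.card_biUnion_le) ?_
  calc ∑ j : Fin m, (rowCl f k j (t j)).card ≤ ∑ _j : Fin m, VC f :=
        Finset.sum_le_sum fun j _ => le_trans (card_rowCl_le f k j _) (h j)
    _ = m * VC f := by simp [mul_comm]

/-- Base case: derivation of `N_{n,p}` for every reachable final state `p`. -/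
lemma build_N_base (h : ∀ b : Fin n → Bool, ∃ i, (f i).evalB b ≠ 0)
    {p : Fin m → F} (hp : p ∈ Pst f n) (G : Set (LinClause (Fin n) F))
    (hT : ∀ j, Tcl f n j ∈ G) :
    BS (Hyp0 f) (βv f) G (3 + m * VC f) {Ncl f n p} := by
  classical
  -- find a row with nonzero final value
  have hrow : ∃ i, p i + (f i).const ≠ 0 := by
    obtain ⟨b, _, rfl⟩ := Finset.mem_image.1 hp
    obtain ⟨i, hi⟩ := h b
    exact ⟨i, by rwa [evalB_eq_Sm] at hi⟩
  obtain ⟨i, hne⟩ := hrow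
  have c1 : BS (Hyp0 f) (βv f) G 1 {({f i} : LinClause (Fin n) F)} :=
    g_hyp ⟨i, rfl⟩ (szβ f (by
      have : ({f i} : LinClause (Fin n) F).card = 1 := Finset.card_singleton _
      omega))
  set E0 : LinClause (Fin n) F := (Tcl f n i).erase (dP f n i (p i)) with hE0
  have hcardE0 : E0.card ≤ VC f :=
    le_trans (Finset.card_erase_le) (card_Tcl_le f n i)
  have c2 : BS (Hyp0 f) (βv f) (G ∪ {({f i} : LinClause (Fin n) F)}) 2 {E0 ∪ ∅} := by
    refine g_elim (Cl := E0) (Dl := ∅) (g := dP f n i (p i))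
      (h := dP f n i (-(f i).const)) ?_ ?_ (e := -(f i).const - p i) ?_ ?_ ?_
    · refine Or.inl ?_
      have : insert (dP f n i (p i)) E0 = Tcl f n i :=
        Finset.insert_erase (Finset.mem_image.2 ⟨p i, mem_Qst_of_mem_Pst f hp i, rfl⟩)
      rw [this]
      exact hT i
    · refine Or.inr ?_
      rw [Set.mem_singleton_iff]
      have h1 : (insert (dP f n i (-(f i).const)) ∅ : LinClause (Fin n) F) =
          {dP f n i (-(f i).const)} := rfl
      rw [h1, ← f_eq_dP]
    · intro hc
      exact hne (by linear_combination -hc)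
    · exact idE f n i (p i) (-(f i).const)
    · have : (E0 ∪ ∅ : LinClause (Fin n) F).card ≤ VC f := by
        rw [Finset.union_empty]; exact hcardE0
      simpa using szsum f (t := 1) this (by nlinarith [Nat.zero_le m, Nat.zero_le (VC f)])
  have c12 := c1.trans c2
  have hE0N : E0 ∪ ∅ ⊆ Ncl f n p := by
    rw [Finset.union_empty, hE0, rowCl_erase]
    exact rowCl_subset_Ncl f i
  have c3 : BS (Hyp0 f) (βv f)
      (G ∪ ({({f i} : LinClause (Fin n) F)} ∪ {E0 ∪ ∅})) (m * VC f) {Ncl f n p} := by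
    have hw := g_weakenMany (Hyp := Hyp0 f) (β := βv f)
      (G := G ∪ ({({f i} : LinClause (Fin n) F)} ∪ {E0 ∪ ∅}))
      (Cl := E0 ∪ ∅) (Ncl f n p \ (E0 ∪ ∅)) (Or.inr (Or.inr rfl)) ?_
    · have heq : (E0 ∪ ∅) ∪ (Ncl f n p \ (E0 ∪ ∅)) = Ncl f n p :=
        Finset.union_sdiff_of_subset hE0N
      rw [heq] at hw
      refine hw.mono le_rfl ?_ le_rfl
      exact le_trans (Finset.card_le_card (Finset.sdiff_subset)) (card_Ncl_le f n p)
    · rw [Finset.union_sdiff_of_subset hE0N]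
      exact szβ f (le_trans (card_Ncl_le f n p) (by nlinarith [Nat.zero_le m, Nat.zero_le (VC f)]))
  have := c12.trans c3
  exact this.mono le_rfl le_rfl (by simp)

end Main
end S9
namespace S9
open AffPoly

set_option linter.unusedSectionVars false
set_option maxHeartbeats 4000000

section Main

variable {F : Type} [Field F] {n m : ℕ} (f : Fin m → AffPoly (Fin n) F)

/-- Inductive step: derivation of `N_{k,p}` from `N_{k+1,p}`, `N_{k+1,p+α}` and the
image tautologies at level `k`. -/
lemma build_N_glue {k : ℕ} (hk : k < n) {p : Fin m → F} (hp : p ∈ Pst f k)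
    (G : Set (LinClause (Fin n) F)) (hT : ∀ j, Tcl f k j ∈ G)
    (hN0 : Ncl f (k + 1) p ∈ G)
    (hN1 : Ncl f (k + 1) (fun j => p j + (f j).coeff ⟨k, hk⟩) ∈ G) :
    BS (Hyp0 f) (βv f) G (10 * (m * VC f) + 2) {Ncl f k p} := by
  classical
  set i0 : Fin n := ⟨k, hk⟩ with hi0
  set Gc := m * VC f with hGc
  have hcardN : ∀ (k' : ℕ) (p' : Fin m → F), (Ncl f k' p').card ≤ Gc := fun k' p' =>
    card_Ncl_le f k' p'
  have hR : 4 * (m + 1) * (VC f + 1) + 10 = 4 * (m * VC f) + 4 * m + 4 * (VC f) + 14 := by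
    ring
  have hszN : szC (Ncl f k p) ≤ βv f :=
    szβ f (le_trans (hcardN k p) (by omega))
  by_cases hc0 : Ncl f (k + 1) p = ∅
  · have hw := g_weakenMany (Hyp := Hyp0 f) (β := βv f) (G := G)
      (Cl := (∅ : LinClause (Fin n) F)) (Ncl f k p) (by rw [← hc0]; exact hN0)
      (by rwa [Finset.empty_union])
    rw [Finset.empty_union] at hw
    exact hw.mono le_rfl (le_trans (hcardN k p) (by omega)) le_rfl
  by_cases hc1 : Ncl f (k + 1) (fun j => p j + (f j).coeff i0) = ∅
  · have hw := g_weakenMany (Hyp := Hyp0 f) (β := βv f) (G := G)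
      (Cl := (∅ : LinClause (Fin n) F)) (Ncl f k p) (by rw [← hc1]; exact hN1)
      (by rwa [Finset.empty_union])
    rw [Finset.empty_union] at hw
    exact hw.mono le_rfl (le_trans (hcardN k p) (by omega)) le_rfl
  have hne0 : (Ncl f (k + 1) p).Nonempty := Finset.nonempty_iff_ne_empty.2 hc0
  have hne1 : (Ncl f (k + 1) (fun j => p j + (f j).coeff i0)).Nonempty :=
    Finset.nonempty_iff_ne_empty.2 hc1
  set xm1 : AffPoly (Fin n) F := X i0 + C (-1) with hxm1
  set D0 : LinClause (Fin n) F :=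
    Finset.univ.biUnion (fun j => rowCl f k j ((Qst f (k + 1) j).erase (p j))) with hD0
  set D1 : LinClause (Fin n) F :=
    Finset.univ.biUnion (fun j => rowCl f k j
      (((Qst f (k + 1) j).erase (p j + (f j).coeff i0)).image
        (fun q => q - (f j).coeff i0))) with hD1
  have hcardD0 : D0.card ≤ Gc := card_biUnion_rowCl_le f k _
    (fun j => le_trans (Finset.card_erase_le) (card_Qst_le f (k + 1) j))
  have hcardD1 : D1.card ≤ Gc := card_biUnion_rowCl_le f k _
    (fun j => le_trans Finset.card_image_le
      (le_trans (Finset.card_erase_le) (card_Qst_le f (k + 1) j)))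
  -- step 1: project N_{k+1,p} to level k with x_k := 0
  set Φ0 : AffPoly (Fin n) F → LinClause (Fin n) F :=
    fun g => {(1 : F) • g + (-(g.coeff i0)) • X i0, xm1} with hΦ0
  set W0 : LinClause (Fin n) F := (Ncl f (k + 1) p ∪ D0) ∪ {xm1} with hW0
  have hcardW0 : W0.card ≤ Gc + Gc + 1 := by
    refine le_trans (Finset.card_union_le _ _) ?_
    have h1 := Finset.card_union_le (Ncl f (k + 1) p) D0
    have h2 := hcardN (k + 1) p
    simp only [Finset.card_singleton]
    omega
  have hdown0 : ∀ (j : Fin m) (q : F),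
      (1 : F) • dP f (k + 1) j q + (-((dP f (k + 1) j q).coeff i0)) • X i0 =
        dP f k j q := by
    intro j q
    rw [hi0, dP_coeff_at f hk j q]
    exact idC f hk j q
  have hM0eq : (Ncl f (k + 1) p).biUnion Φ0 = insert xm1 D0 := by
    ext z
    simp only [Finset.mem_biUnion, Finset.mem_insert]
    constructor
    · rintro ⟨g, hg, hz⟩
      obtain ⟨j, q, hq, rfl⟩ := (mem_Ncl_iff f).1 hg
      simp only [hΦ0, Finset.mem_insert, Finset.mem_singleton] at hz
      rcases hz with rfl | rfl
      · right
        rw [hdown0 j q]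
        exact Finset.mem_biUnion.2 ⟨j, Finset.mem_univ j, Finset.mem_image.2 ⟨q, hq, rfl⟩⟩
      · left; rfl
    · rintro (rfl | hz)
      · obtain ⟨g0, hg0⟩ := hne0
        exact ⟨g0, hg0, by simp [hΦ0]⟩
      · obtain ⟨j, _, hz⟩ := Finset.mem_biUnion.1 hz
        obtain ⟨q, hq, rfl⟩ := Finset.mem_image.1 hz
        refine ⟨dP f (k + 1) j q, (mem_Ncl_iff f).2 ⟨j, q, hq, rfl⟩, ?_⟩
        simp only [hΦ0, Finset.mem_insert, Finset.mem_singleton]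
        left
        rw [hdown0 j q]
  have loop0 := loopF (Hyp := Hyp0 f) (β := βv f) (G := G) (W := W0) (Φ := Φ0) (t := 2)
    (Ncl f (k + 1) p)
    (fun g _ Cl hCl G' hG hin => by
      have := g_fix0 (Hyp := Hyp0 f) (β := βv f) (G := G') (Cl := Cl) (g := g)
        i0 (-(g.coeff i0)) hin
        (by
          refine szsum f (c := Gc + Gc + 1) (t := 2)
            (le_trans (Finset.card_le_card hCl) hcardW0) (by omega))
      exact this)
    (fun g hg => by
      obtain ⟨j, q, hq, rfl⟩ := (mem_Ncl_iff f).1 hg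
      intro z hz
      simp only [hΦ0, Finset.mem_insert, Finset.mem_singleton] at hz
      rcases hz with rfl | rfl
      · refine Finset.mem_union_left _ (Finset.mem_union_right _ ?_)
        rw [hdown0 j q]
        exact Finset.mem_biUnion.2 ⟨j, Finset.mem_univ j, Finset.mem_image.2 ⟨q, hq, rfl⟩⟩
      · exact Finset.mem_union_right _ (Finset.mem_singleton_self _))
    (fun z hz => Finset.mem_union_left _ (Finset.mem_union_left _ hz))
    G (le_refl _) ∅ (by simp) (by simpa using hN0)
  have c1 : BS (Hyp0 f) (βv f) G (Gc * 2) {insert xm1 D0} := by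
    refine loop0.mono le_rfl (Nat.mul_le_mul_right _ (hcardN (k + 1) p)) ?_
    intro E hE
    rw [Set.mem_singleton_iff] at hE
    subst hE
    rw [Set.mem_singleton_iff, Finset.empty_union, hM0eq]
  -- step 2: project N_{k+1,p+α} to level k with x_k := 1
  set Φ1 : AffPoly (Fin n) F → LinClause (Fin n) F :=
    fun g => {(1 : F) • g + (-(g.coeff i0)) • (X i0 + C (-1)), X i0} with hΦ1
  set W1 : LinClause (Fin n) F :=
    (Ncl f (k + 1) (fun j => p j + (f j).coeff i0) ∪ D1) ∪ {X i0} with hW1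
  have hcardW1 : W1.card ≤ Gc + Gc + 1 := by
    refine le_trans (Finset.card_union_le _ _) ?_
    have h1 := Finset.card_union_le (Ncl f (k + 1) (fun j => p j + (f j).coeff i0)) D1
    have h2 := hcardN (k + 1) (fun j => p j + (f j).coeff i0)
    simp only [Finset.card_singleton]
    omega
  have hdown1 : ∀ (j : Fin m) (q : F),
      (1 : F) • dP f (k + 1) j q + (-((dP f (k + 1) j q).coeff i0)) • (X i0 + C (-1)) =
        dP f k j (q - (f j).coeff i0) := by
    intro j q
    rw [hi0, dP_coeff_at f hk j q]
    exact idD f hk j q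
  have hM1eq : (Ncl f (k + 1) (fun j => p j + (f j).coeff i0)).biUnion Φ1 =
      insert (X i0) D1 := by
    ext z
    simp only [Finset.mem_biUnion, Finset.mem_insert]
    constructor
    · rintro ⟨g, hg, hz⟩
      obtain ⟨j, q, hq, rfl⟩ := (mem_Ncl_iff f).1 hg
      simp only [hΦ1, Finset.mem_insert, Finset.mem_singleton] at hz
      rcases hz with rfl | rfl
      · right
        rw [hdown1 j q]
        exact Finset.mem_biUnion.2 ⟨j, Finset.mem_univ j,
          Finset.mem_image.2 ⟨q - (f j).coeff i0,
            Finset.mem_image.2 ⟨q, hq, rfl⟩, rfl⟩⟩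
      · left; rfl
    · rintro (rfl | hz)
      · obtain ⟨g0, hg0⟩ := hne1
        exact ⟨g0, hg0, by simp [hΦ1]⟩
      · obtain ⟨j, _, hz⟩ := Finset.mem_biUnion.1 hz
        obtain ⟨q', hq', rfl⟩ := Finset.mem_image.1 hz
        obtain ⟨q, hq, rfl⟩ := Finset.mem_image.1 hq'
        refine ⟨dP f (k + 1) j q, (mem_Ncl_iff f).2 ⟨j, q, hq, rfl⟩, ?_⟩
        simp only [hΦ1, Finset.mem_insert, Finset.mem_singleton]
        left
        rw [hdown1 j q]
  have loop1 := loopF (Hyp := Hyp0 f) (β := βv f) (G := G ∪ {insert xm1 D0}) (W := W1)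
    (Φ := Φ1) (t := 2) (Ncl f (k + 1) (fun j => p j + (f j).coeff i0))
    (fun g _ Cl hCl G' hG hin => by
      have := g_fix1 (Hyp := Hyp0 f) (β := βv f) (G := G') (Cl := Cl) (g := g)
        i0 (-(g.coeff i0)) hin
        (by
          refine szsum f (c := Gc + Gc + 1) (t := 2)
            (le_trans (Finset.card_le_card hCl) hcardW1) (by omega))
      exact this)
    (fun g hg => by
      obtain ⟨j, q, hq, rfl⟩ := (mem_Ncl_iff f).1 hg
      intro z hz
      simp only [hΦ1, Finset.mem_insert, Finset.mem_singleton] at hz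
      rcases hz with rfl | rfl
      · refine Finset.mem_union_left _ (Finset.mem_union_right _ ?_)
        rw [hdown1 j q]
        exact Finset.mem_biUnion.2 ⟨j, Finset.mem_univ j,
          Finset.mem_image.2 ⟨q - (f j).coeff i0,
            Finset.mem_image.2 ⟨q, hq, rfl⟩, rfl⟩⟩
      · exact Finset.mem_union_right _ (Finset.mem_singleton_self _))
    (fun z hz => Finset.mem_union_left _ (Finset.mem_union_left _ hz))
    (G ∪ {insert xm1 D0}) (le_refl _) ∅ (by simp)
    (by rw [Finset.empty_union]; exact Set.mem_union_left _ hN1)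
  have c2 : BS (Hyp0 f) (βv f) (G ∪ {insert xm1 D0}) (Gc * 2) {insert (X i0) D1} := by
    refine loop1.mono le_rfl
      (Nat.mul_le_mul_right _ (hcardN (k + 1) (fun j => p j + (f j).coeff i0))) ?_
    intro E hE
    rw [Set.mem_singleton_iff] at hE
    subst hE
    rw [Set.mem_singleton_iff, Finset.empty_union, hM1eq]
  have c12 := c1.trans c2
  -- step 3: resolve the two x-disjuncts
  set E3 : LinClause (Fin n) F := insert (C (-1)) (D0 ∪ D1) with hE3
  have c3 : BS (Hyp0 f) (βv f) (G ∪ ({insert xm1 D0} ∪ {insert (X i0) D1})) 1 {E3} := by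
    refine g_res (Cd := D0) (Dd := D1) (f := xm1) (g := X i0) 1 (-1)
      (Or.inr (Or.inl rfl)) (Or.inr (Or.inr rfl)) ?_ ?_
    · rw [hE3, pid_m1]
    · refine szβ f ?_
      have h1 := Finset.card_insert_le (C (-1) : AffPoly (Fin n) F) (D0 ∪ D1)
      have h2 := Finset.card_union_le D0 D1
      rw [hE3]
      omega
  have c123 := c12.trans c3
  have c4 : BS (Hyp0 f) (βv f)
      (G ∪ (({insert xm1 D0} ∪ {insert (X i0) D1}) ∪ {E3})) 1 {D0 ∪ D1} := by
    refine g_simp (a := (-1 : F)) (by norm_num) (Or.inr (Or.inr rfl)) ?_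
    refine szβ f ?_
    have h2 := Finset.card_union_le D0 D1
    omega
  have c1234 := c123.trans c4
  -- step 5: eliminate the spurious disjuncts
  set G5 : Set (LinClause (Fin n) F) :=
    G ∪ ((({insert xm1 D0} ∪ {insert (X i0) D1}) ∪ {E3}) ∪ {D0 ∪ D1}) with hG5
  set W5 : LinClause (Fin n) F := (D0 ∪ D1) ∪ Ncl f k p with hW5
  have hcardW5 : W5.card ≤ Gc + Gc + Gc := by
    refine le_trans (Finset.card_union_le _ _) ?_
    have h1 := Finset.card_union_le D0 D1
    have h2 := hcardN k p
    omega
  have hmemD : ∀ g ∈ D0 ∪ D1, ∃ (j : Fin m) (q : F), g = dP f k j q ∧ q ≠ p j := by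
    intro g hg
    rcases Finset.mem_union.1 hg with hg | hg
    · obtain ⟨j, _, hz⟩ := Finset.mem_biUnion.1 hg
      obtain ⟨q, hq, rfl⟩ := Finset.mem_image.1 hz
      exact ⟨j, q, rfl, (Finset.mem_erase.1 hq).1⟩
    · obtain ⟨j, _, hz⟩ := Finset.mem_biUnion.1 hg
      obtain ⟨q', hq', rfl⟩ := Finset.mem_image.1 hz
      obtain ⟨q, hq, rfl⟩ := Finset.mem_image.1 hq'
      refine ⟨j, q - (f j).coeff i0, rfl, ?_⟩
      intro he
      exact (Finset.mem_erase.1 hq).1 (by rw [← sub_eq_iff_eq_add.1 he])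
  have hloop5 := loopRel (Hyp := Hyp0 f) (β := βv f) (G := G5) (W := W5)
    (Z := Ncl f k p) (t := 2) Finset.subset_union_right
    ((D0 ∪ D1) \ Ncl f k p)
    (fun g hg Cl hCl G' hG hin => by
      obtain ⟨j, q, rfl, hqne⟩ := hmemD g (Finset.mem_sdiff.1 hg).1
      refine ⟨(Tcl f k j).erase (dP f k j (p j)), ?_, ?_⟩
      · rw [rowCl_erase]
        exact rowCl_subset_Ncl f j
      · refine g_elim (Cl := Cl) (Dl := (Tcl f k j).erase (dP f k j (p j)))
          (g := dP f k j q) (h := dP f k j (p j)) hin ?_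
          (e := p j - q) (sub_ne_zero_of_ne (Ne.symm hqne)) (idE f k j q (p j)) ?_
        · have : insert (dP f k j (p j)) ((Tcl f k j).erase (dP f k j (p j))) =
              Tcl f k j := Finset.insert_erase
            (Finset.mem_image.2 ⟨p j, mem_Qst_of_mem_Pst f hp j, rfl⟩)
          rw [this]
          exact hG (Or.inl (hT j))
        · have hcc : (Cl ∪ (Tcl f k j).erase (dP f k j (p j))).card ≤
              (Gc + Gc + Gc) + VC f := by
            refine le_trans (Finset.card_union_le _ _) ?_
            have h8 := le_trans (Finset.card_le_card hCl) hcardW5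
            have h9 := le_trans
              (Finset.card_erase_le (a := dP f k j (p j)) (s := Tcl f k j))
              (card_Tcl_le f k j)
            omega
          have := szsum f (t := 1) hcc (by omega)
          simpa using this)
    (Finset.sdiff_subset.trans Finset.subset_union_left)
    G5 (le_refl _) ((D0 ∪ D1) ∩ Ncl f k p)
    (Finset.inter_subset_right.trans Finset.subset_union_right)
    (by
      have : (D0 ∪ D1) ∩ Ncl f k p ∪ (D0 ∪ D1) \ Ncl f k p = D0 ∪ D1 := by
        ext z
        simp only [Finset.mem_union, Finset.mem_inter, Finset.mem_sdiff]
        tauto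
      rw [this, hG5]
      exact Or.inr (Or.inr rfl))
  obtain ⟨E, hEsub, c5⟩ := hloop5
  have hEN : E ⊆ Ncl f k p := by
    refine le_trans hEsub ?_
    intro z hz
    rcases Finset.mem_union.1 hz with hz | hz
    · exact (Finset.mem_inter.1 hz).2
    · exact hz
  have c12345 := c1234.trans (c5.mono le_rfl le_rfl le_rfl)
  -- step 6: weaken to N_{k,p}
  have c6 : BS (Hyp0 f) (βv f)
      (G ∪ ((((({insert xm1 D0} ∪ {insert (X i0) D1}) ∪ {E3}) ∪ {D0 ∪ D1})) ∪ {E}))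
      Gc {Ncl f k p} := by
    have hw := g_weakenMany (Hyp := Hyp0 f) (β := βv f)
      (G := G ∪ ((((({insert xm1 D0} ∪ {insert (X i0) D1}) ∪ {E3}) ∪ {D0 ∪ D1})) ∪ {E}))
      (Cl := E) (Ncl f k p \ E) (Or.inr (Or.inr rfl))
      (by rw [Finset.union_sdiff_of_subset hEN]; exact hszN)
    rw [Finset.union_sdiff_of_subset hEN] at hw
    refine hw.mono le_rfl ?_ le_rfl
    exact le_trans (Finset.card_le_card (Finset.sdiff_subset)) (hcardN k p)
  have call := c12345.trans c6
  refine call.mono le_rfl ?_ (by simp)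
  -- cost bound
  have hS5card : ((D0 ∪ D1) \ Ncl f k p).card ≤ Gc + Gc := by
    refine le_trans (Finset.card_le_card (Finset.sdiff_subset)) ?_
    exact le_trans (Finset.card_union_le _ _) (by omega)
  have := Nat.mul_le_mul_right 2 hS5card
  omega

end Main
end S9
namespace S9
open AffPoly

set_option linter.unusedSectionVars false
set_option maxHeartbeats 4000000

section Main

variable {F : Type} [Field F] {n m : ℕ} (f : Fin m → AffPoly (Fin n) F)

/-- All the state clauses of level `k`. -/
def LevSet (k : ℕ) : Set (LinClause (Fin n) F) := {Cl | ∃ p ∈ Pst f k, Cl = Ncl f k p}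

lemma build_levels (h : ∀ b : Fin n → Bool, ∃ i, (f i).evalB b ≠ 0)
    (G : Set (LinClause (Fin n) F)) (hT : ∀ k ≤ n, ∀ j, Tcl f k j ∈ G) :
    ∀ d ≤ n, BS (Hyp0 f) (βv f) G ((d + 1) * (VC f * (10 * (m * VC f) + 5)))
      (LevSet f (n - d)) := by
  intro d
  induction d with
  | zero =>
    intro _
    have hbase := BS.iterate (Hyp := Hyp0 f) (β := βv f) (Pst f n)
      (fun p => {Ncl f n p}) (G := G) (t := 3 + m * VC f)
      (fun p hp => build_N_base f h hp G (fun j => hT n le_rfl j))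
    refine hbase.mono le_rfl ?_ ?_
    · have h1 := card_Pst_le f n
      have h2 : 3 + m * VC f ≤ 10 * (m * VC f) + 5 := by omega
      calc (Pst f n).card * (3 + m * VC f) ≤ VC f * (10 * (m * VC f) + 5) :=
            Nat.mul_le_mul h1 h2
        _ ≤ (0 + 1) * (VC f * (10 * (m * VC f) + 5)) := by omega
    · rintro Cl ⟨p, hp, rfl⟩
      have : n - 0 = n := by omega
      rw [this] at hp ⊢
      exact Set.mem_biUnion hp rfl
  | succ d ih =>
    intro hd
    have hdn : d ≤ n := by omega
    have prev := ih hdn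
    set k := n - (d + 1) with hkdef
    have hk : k < n := by omega
    have hk1 : k + 1 = n - d := by omega
    have hstep := BS.iterate (Hyp := Hyp0 f) (β := βv f) (Pst f k)
      (fun p => {Ncl f k p}) (G := G ∪ LevSet f (n - d)) (t := 10 * (m * VC f) + 2)
      (fun p hp => by
        refine build_N_glue f hk hp _ (fun j => Or.inl (hT k (by omega) j)) ?_ ?_
        · refine Or.inr ?_
          have hp' : p ∈ Pst f (k + 1) := mem_Pst_succ0 f hk hp
          rw [hk1] at hp'
          show Ncl f (k + 1) p ∈ LevSet f (n - d)
          rw [hk1]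
          exact ⟨p, hp', rfl⟩
        · refine Or.inr ?_
          have hp' := mem_Pst_succ1 f hk hp
          rw [hk1] at hp'
          show (Ncl f (k + 1) fun j => p j + (f j).coeff ⟨k, hk⟩) ∈ LevSet f (n - d)
          rw [hk1]
          exact ⟨fun j => p j + (f j).coeff ⟨k, hk⟩, hp', rfl⟩)
    have hcomb := prev.trans hstep
    refine hcomb.mono le_rfl ?_ ?_
    · have h5 : (Pst f k).card * (10 * (m * VC f) + 2) ≤
          VC f * (10 * (m * VC f) + 5) :=
        Nat.mul_le_mul (card_Pst_le f k) (by omega)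
      have h6 : (d + 1 + 1) * (VC f * (10 * (m * VC f) + 5)) =
          (d + 1) * (VC f * (10 * (m * VC f) + 5)) +
            VC f * (10 * (m * VC f) + 5) := by ring
      omega
    · rintro Cl ⟨p, hp, rfl⟩
      exact Or.inr (Set.mem_biUnion hp rfl)

/-- Total number of proof lines. -/
noncomputable def TOT : ℕ :=
  (5 + n * (m * (VC f * 3))) + (n + 1) * (VC f * (10 * (m * VC f) + 5))

lemma build_empty (hn : 0 < n) (h : ∀ b : Fin n → Bool, ∃ i, (f i).evalB b ≠ 0) :
    BS (Hyp0 f) (βv f) (∅ : Set (LinClause (Fin n) F)) (TOT f)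
      {(∅ : LinClause (Fin n) F)} := by
  have h1 := build_TAll f hn
  have h2 := build_levels f h
    ((∅ : Set (LinClause (Fin n) F)) ∪ ({({C 0} : LinClause (Fin n) F)} ∪ TAll f))
    (fun k hk j => Or.inr (Or.inr ⟨k, hk, j, rfl⟩)) n le_rfl
  have h12 := h1.trans h2
  refine h12.mono le_rfl le_rfl ?_
  intro E hE
  rw [Set.mem_singleton_iff] at hE
  subst hE
  refine Or.inr ?_
  obtain ⟨p, hp⟩ := Pst_nonempty f
  have : n - n = 0 := by omega
  rw [this]
  exact ⟨p, hp, (Ncl_zero f p hp).symm⟩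

lemma list_sum_le {L : List (LinClause (Fin n) F)} {b : ℕ} (h : ∀ Cl ∈ L, szC Cl ≤ b) :
    (L.map szC).sum ≤ L.length * b := by
  induction L with
  | nil => simp
  | cons x L ih =>
    simp only [List.map_cons, List.sum_cons, List.length_cons]
    have h1 := h x (by simp)
    have h2 := ih (fun Cl hCl => h Cl (by simp [hCl]))
    calc szC x + (L.map szC).sum ≤ b + L.length * b := by omega
      _ = (L.length + 1) * b := by ring

lemma final_arith (n' m' V s X : ℕ) (hn : n' ≤ X) (hm : m' ≤ X) (hV : V ≤ X)
    (h1 : 1 ≤ X) :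
    ((5 + n' * (m' * (V * 3))) + (n' + 1) * (V * (10 * (m' * V) + 5))) *
      ((2 * n' + 1) * (4 * (m' + 1) * (V + 1) + 10)) ≤ 1000000 * X ^ 7 := by
  have hX2 : 1 ≤ X ^ 2 := Nat.one_le_pow _ _ (by omega)
  have hX3 : 1 ≤ X ^ 3 := Nat.one_le_pow _ _ (by omega)
  have hX4 : 1 ≤ X ^ 4 := Nat.one_le_pow _ _ (by omega)
  have hmv : m' * V ≤ X ^ 2 := by
    calc m' * V ≤ X * X := Nat.mul_le_mul hm hV
      _ = X ^ 2 := by ring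
  have e1 : n' * (m' * (V * 3)) ≤ 3 * X ^ 3 := by
    calc n' * (m' * (V * 3)) ≤ X * (X * (X * 3)) :=
          Nat.mul_le_mul hn (Nat.mul_le_mul hm (Nat.mul_le_mul hV le_rfl))
      _ = 3 * X ^ 3 := by ring
  have e2 : V * (10 * (m' * V) + 5) ≤ 15 * X ^ 3 := by
    calc V * (10 * (m' * V) + 5) ≤ X * (10 * X ^ 2 + 5 * X ^ 2) :=
          Nat.mul_le_mul hV (by omega)
      _ = 15 * X ^ 3 := by ring
  have e3 : (n' + 1) * (V * (10 * (m' * V) + 5)) ≤ 30 * X ^ 4 := by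
    calc (n' + 1) * (V * (10 * (m' * V) + 5)) ≤ (2 * X) * (15 * X ^ 3) :=
          Nat.mul_le_mul (by omega) e2
      _ = 30 * X ^ 4 := by ring
  have eX34 : X ^ 3 ≤ X ^ 4 := Nat.pow_le_pow_right (by omega) (by omega)
  have hA : (5 + n' * (m' * (V * 3))) + (n' + 1) * (V * (10 * (m' * V) + 5)) ≤
      38 * X ^ 4 := by omega
  have e4 : 4 * (m' + 1) * (V + 1) + 10 ≤ 26 * X ^ 2 := by
    have h0 : (m' + 1) * (V + 1) ≤ 4 * X ^ 2 := by
      calc (m' + 1) * (V + 1) ≤ (2 * X) * (2 * X) :=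
            Nat.mul_le_mul (by omega) (by omega)
        _ = 4 * X ^ 2 := by ring
    have h5 : 4 * (m' + 1) * (V + 1) = 4 * ((m' + 1) * (V + 1)) := by ring
    rw [h5]
    omega
  have hB : (2 * n' + 1) * (4 * (m' + 1) * (V + 1) + 10) ≤ 78 * X ^ 3 := by
    calc (2 * n' + 1) * (4 * (m' + 1) * (V + 1) + 10) ≤ (3 * X) * (26 * X ^ 2) :=
          Nat.mul_le_mul (by omega) e4
      _ = 78 * X ^ 3 := by ring
  calc ((5 + n' * (m' * (V * 3))) + (n' + 1) * (V * (10 * (m' * V) + 5))) *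
        ((2 * n' + 1) * (4 * (m' + 1) * (V + 1) + 10)) ≤
        (38 * X ^ 4) * (78 * X ^ 3) := Nat.mul_le_mul hA hB
    _ = 2964 * X ^ 7 := by ring
    _ ≤ 1000000 * X ^ 7 := Nat.mul_le_mul_right _ (by omega)

end Main
end S9
namespace S9
open AffPoly

set_option linter.unusedSectionVars false
set_option maxHeartbeats 4000000

theorem main_statement :
    ∃ c r : ℕ, ∀ (F : Type) [Field F], ∀ (n m : ℕ) (f : Fin m → AffPoly (Fin n) F),
      (∀ b : Fin n → Bool, ∃ i, (f i).evalB b ≠ 0) →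
      ∃ π : DagProof ({Cl | ∃ i, Cl = ({f i} : LinClause (Fin n) F)} :
          Set (LinClause (Fin n) F)) (∅ : LinClause (Fin n) F),
        DagProof.sizeW (fun _ => 1) π ≤
          1000000 * (n +
            (Finset.image (fun b : Fin n → Bool => fun i : Fin m => (f i).evalB b)
              Finset.univ).card +
            ∑ i, (f i).sizeW (fun _ => 1)) ^ 7 := by
  classical
  refine ⟨1000000, 7, ?_⟩
  intro F _ n m f h
  have hms : m ≤ ∑ i, (f i).sizeW (fun _ => 1) := by
    calc m = ∑ _i : Fin m, 1 := by simp
      _ ≤ ∑ i, (f i).sizeW (fun _ => 1) := by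
        refine Finset.sum_le_sum fun i _ => ?_
        have hv : AffPoly.sizeW (fun _ => (1 : ℕ)) (f i) =
            (f i).nvars +
              (∑ i' ∈ Finset.univ.filter (fun i' => (f i).coeff i' ≠ 0), 1) + 1 := rfl
        omega
  have hV1 : 1 ≤ VC f :=
    Finset.card_pos.2 (Finset.image_nonempty.2 Finset.univ_nonempty)
  set X : ℕ := n + (Finset.image (fun b : Fin n → Bool =>
      fun i : Fin m => (f i).evalB b) Finset.univ).card +
      ∑ i, (f i).sizeW (fun _ => 1) with hX
  have hXVC : X = n + VC f + ∑ i, (f i).sizeW (fun _ => 1) := rfl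
  have hX1 : 1 ≤ X := by omega
  by_cases hn : n = 0
  · subst hn
    obtain ⟨i, hi⟩ := h (fun x => x.elim0)
    have hfi : f i = C ((f i).const) := APext (fun x => x.elim0) rfl
    have hconst : (f i).const ≠ 0 := by
      intro hc
      apply hi
      unfold AffPoly.evalB AffPoly.eval
      simp [hc]
    refine ⟨⟨[({f i} : LinClause (Fin 0) F), (∅ : LinClause (Fin 0) F)],
      by simp, ?_, rfl⟩, ?_⟩
    · intro k hk
      rcases k with _ | _ | k
      · exact Or.inl ⟨i, rfl⟩
      · show IsStep {Cl | ∃ i, Cl = ({f i} : LinClause (Fin 0) F)}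
          (List.take (0 + 1) [({f i} : LinClause (Fin 0) F), (∅ : LinClause (Fin 0) F)])
          (∅ : LinClause (Fin 0) F)
        refine Or.inr (Or.inr (Or.inr (Or.inr ⟨(f i).const, hconst, ?_⟩)))
        have he : (insert (C ((f i).const)) (∅ : LinClause (Fin 0) F)) =
            ({f i} : LinClause (Fin 0) F) := by
          rw [← hfi]
          rfl
        rw [he]
        simp
      · have hl2 : ([({f i} : LinClause (Fin 0) F),
            (∅ : LinClause (Fin 0) F)]).length = 2 := rfl
        rw [hl2] at hk
        exact absurd hk (by omega)
    · show (List.map (LinClause.sizeW fun _ => 1)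
          [({f i} : LinClause (Fin 0) F), (∅ : LinClause (Fin 0) F)]).sum ≤
          1000000 * X ^ 7
      have h1 : (List.map (LinClause.sizeW fun _ => 1)
          [({f i} : LinClause (Fin 0) F), (∅ : LinClause (Fin 0) F)]).sum =
          LinClause.sizeW (fun _ => 1) ({f i} : LinClause (Fin 0) F) +
          LinClause.sizeW (fun _ => 1) (∅ : LinClause (Fin 0) F) := by simp
      rw [h1]
      have h2 : LinClause.sizeW (fun _ => (1 : ℕ)) ({f i} : LinClause (Fin 0) F) =
          (f i).sizeW (fun _ => 1) := Finset.sum_singleton _ _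
      have h3 : LinClause.sizeW (fun _ => (1 : ℕ)) (∅ : LinClause (Fin 0) F) = 0 := by
        simp [LinClause.sizeW]
      have hle : (f i).sizeW (fun _ => 1) ≤ ∑ i', (f i').sizeW (fun _ => 1) :=
        Finset.single_le_sum (f := fun i' => (f i').sizeW (fun _ => 1))
          (fun _ _ => Nat.zero_le _) (Finset.mem_univ i)
      have hX7 : X ≤ 1000000 * X ^ 7 := by
        calc X = X ^ 1 := (pow_one X).symm
          _ ≤ X ^ 7 := Nat.pow_le_pow_right (by omega) (by omega)
          _ ≤ 1000000 * X ^ 7 := Nat.le_mul_of_pos_left _ (by omega)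
      omega
  · have hn' : 0 < n := Nat.pos_of_ne_zero hn
    obtain ⟨L, hok, hlen, hsz, hmem⟩ := build_empty f hn' h [] (by simp)
    have hmem' : (∅ : LinClause (Fin n) F) ∈ L := by
      have := hmem ∅ rfl
      simpa using this
    obtain ⟨s1, t1, rfl⟩ := List.append_of_mem hmem'
    have hok2 : Ok (Hyp0 f) [] (s1 ++ [(∅ : LinClause (Fin n) F)]) := by
      have he : s1 ++ (∅ : LinClause (Fin n) F) :: t1 =
          (s1 ++ [(∅ : LinClause (Fin n) F)]) ++ t1 := by simp
      rw [he] at hok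
      exact hok.prefix
    have hne : (s1 ++ [(∅ : LinClause (Fin n) F)]) ≠ [] := by simp
    refine ⟨⟨s1 ++ [(∅ : LinClause (Fin n) F)], hne, ?_, ?_⟩, ?_⟩
    · intro k hk
      have := hok2.isStep_get k hk
      simpa [Hyp0] using this
    · rw [List.getLast_append]
      simp
    · -- the size bound
      have h1 : ∀ Cl ∈ s1 ++ [(∅ : LinClause (Fin n) F)], szC Cl ≤ βv f := by
        intro Cl hCl
        rcases List.mem_append.1 hCl with hCl | hCl
        · exact hsz Cl (by simp [hCl])
        · simp only [List.mem_singleton] at hCl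
          subst hCl
          simp [szC, LinClause.sizeW]
      have h2 := list_sum_le h1
      have h3 : (s1 ++ [(∅ : LinClause (Fin n) F)]).length ≤ TOT f := by
        have h4 : (s1 ++ (∅ : LinClause (Fin n) F) :: t1).length =
            s1.length + 1 + t1.length := by simp; omega
        rw [h4] at hlen
        simp only [List.length_append, List.length_singleton]
        omega
      show ((s1 ++ [(∅ : LinClause (Fin n) F)]).map (LinClause.sizeW fun _ => 1)).sum ≤
          1000000 * X ^ 7
      have hfin := final_arith n m (VC f) (∑ i, (f i).sizeW (fun _ => 1)) X
        (by omega) (by omega) (by omega) hX1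
      calc ((s1 ++ [(∅ : LinClause (Fin n) F)]).map (LinClause.sizeW fun _ => 1)).sum
          = ((s1 ++ [(∅ : LinClause (Fin n) F)]).map szC).sum := rfl
        _ ≤ (s1 ++ [(∅ : LinClause (Fin n) F)]).length * βv f := h2
        _ ≤ TOT f * βv f := Nat.mul_le_mul_right _ h3
        _ = ((5 + n * (m * (VC f * 3))) + (n + 1) * (VC f * (10 * (m * VC f) + 5))) *
            ((2 * n + 1) * (4 * (m + 1) * (VC f + 1) + 10)) := rfl
        _ ≤ 1000000 * X ^ 7 := hfin

end S9

/-- There are absolute constants `c` and `r` such that for every field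
`F` and all affine polynomials `f_1, …, f_m` over `F` in `x_1, …, x_n` whose system
`f_1 = 0, …, f_m = 0` has no 0-1 solution, the set `{f_1 = 0, …, f_m = 0}` (each equation a
one-disjunct clause) has a `Res(lin_F)` refutation of size at most
`c·(n + |im₂(A)| + s)^r`, where `A : {0,1}ⁿ → Fᵐ` is `x ↦ (f_1(x), …, f_m(x))` and `s` is
the total size of the coefficients of `f_1, …, f_m`. -/
theorem statement9 :
    ∃ c r : ℕ, ∀ (F : Type) [Field F], ∀ (n m : ℕ) (f : Fin m → AffPoly (Fin n) F),
      (∀ b : Fin n → Bool, ∃ i, (f i).evalB b ≠ 0) →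
      ∃ π : DagProof ({Cl | ∃ i, Cl = ({f i} : LinClause (Fin n) F)} :
          Set (LinClause (Fin n) F)) (∅ : LinClause (Fin n) F),
        DagProof.sizeW (fun _ => 1) π ≤
          c * (n +
            (Finset.image (fun b : Fin n → Bool => fun i : Fin m => (f i).evalB b)
              Finset.univ).card +
            ∑ i, (f i).sizeW (fun _ => 1)) ^ r := by
  have h := S9.main_statement
  obtain ⟨_, _, h⟩ := h
  exact ⟨1000000, 7, h⟩
end

section
/- For every prime power q ≥ 3 there exist constants c > 0 and n_0 such that for every n ≥ n_0 there exist k ≥ 1, a k×n matrix A over the finite field F_q with q elements, and b ∈ F_q^k, such that the system A x̄ = b̄ has no solution x ∈ {0,1}^n ⊆ F_q^n, and every decision tree for A x̄ = b̄ has size at least 2^{c·n/log_2 n}. -/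
open scoped Classical

/-- A binary decision tree over the Boolean variables `x_1, …, x_n`: every internal node is
labelled with a variable and has two subtrees, corresponding to the assignments
`x_i ← 0` and `x_i ← 1`. -/
inductive DTree (n : ℕ) : Type
  | leaf : DTree n
  | node (i : Fin n) (t0 t1 : DTree n) : DTree n

namespace DTree

/-- The size (number of nodes) of a decision tree. -/
def size {n : ℕ} : DTree n → ℕ
  | leaf => 1
  | node _ t0 t1 => 1 + t0.size + t1.size

/-- Validity of a decision tree for the linear system `A x̄ = b̄` relative to a partial
assignment `ρ`: no variable queried on a root-to-leaf path is already assigned (so no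
variable repeats on such a path), and at every leaf the system obtained by substituting the
partial assignment accumulated along the path has no solution over the field `F` at all. -/
def Valid {n k : ℕ} {F : Type} [Field F] (A : Matrix (Fin k) (Fin n) F) (b : Fin k → F) :
    DTree n → (Fin n → Option F) → Prop
  | leaf, ρ => ¬ ∃ x : Fin n → F, (∀ i v, ρ i = some v → x i = v) ∧ A.mulVec x = b
  | node i t0 t1, ρ => ρ i = none ∧
      Valid A b t0 (Function.update ρ i (some 0)) ∧
      Valid A b t1 (Function.update ρ i (some 1))

end DTree

open Matrix

variable {F : Type} [Field F]

noncomputable def dotLin {k : ℕ} (y : Fin k → F) : (Fin k → F) →ₗ[F] F where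
  toFun v := y ⬝ᵥ v
  map_add' a b := by simp [dotProduct_add]
  map_smul' a v := by simp [dotProduct_smul]

lemma exists_orth {k : ℕ} (W : Set (Fin k → F)) (h : Submodule.span F W ≠ ⊤) :
    ∃ y : Fin k → F, y ≠ 0 ∧ ∀ v ∈ W, y ⬝ᵥ v = 0 := by
  obtain ⟨φ, hφ0, hφmap⟩ :=
    Submodule.exists_dual_map_eq_bot_of_lt_top (lt_top_iff_ne_top.2 h) inferInstance
  set y : Fin k → F := fun i => φ (fun j => if i = j then 1 else 0) with hy_def
  have key : ∀ w : Fin k → F, y ⬝ᵥ w = φ w := by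
    intro w
    rw [LinearMap.pi_apply_eq_sum_univ φ w]
    simp [dotProduct, hy_def, mul_comm]
  refine ⟨y, ?_, ?_⟩
  · intro hy
    apply hφ0
    apply LinearMap.ext
    intro w
    rw [← key w, hy]
    simp
  · intro v hv
    rw [key v]
    have : φ v ∈ (Submodule.span F W).map φ := ⟨v, Submodule.subset_span hv, rfl⟩
    rw [hφmap] at this
    exact (Submodule.mem_bot F).1 this

lemma card_ker_dot [Fintype F] {k : ℕ} (y : Fin k → F) (hy : y ≠ 0) :
    Fintype.card {v : Fin k → F // y ⬝ᵥ v = 0} = (Fintype.card F) ^ (k - 1) := by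
  have hcongr : Fintype.card {v : Fin k → F // y ⬝ᵥ v = 0}
      = Fintype.card (LinearMap.ker (dotLin y)) := by
    apply Fintype.card_congr
    exact Equiv.subtypeEquivRight (by intro v; simp [LinearMap.mem_ker, dotLin])
  have hsurj : Function.Surjective (dotLin y) := by
    obtain ⟨i, hi⟩ := Function.ne_iff.1 hy
    have hi' : y i ≠ 0 := by simpa using hi
    intro c
    refine ⟨((y i)⁻¹ * c) • (Pi.single i (1 : F) : Fin k → F), ?_⟩
    show y ⬝ᵥ _ = c
    rw [dotProduct_smul, dotProduct_single]
    field_simp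
    rw [smul_eq_mul]
    exact div_mul_cancel₀ c hi'
  have hrank : Module.finrank F (LinearMap.ker (dotLin y)) = k - 1 := by
    have h1 := LinearMap.finrank_range_add_finrank_ker (dotLin y)
    rw [LinearMap.range_eq_top.2 hsurj, finrank_top, Module.finrank_self] at h1
    have h2 : Module.finrank F (Fin k → F) = k := by simp [Module.finrank_pi]
    omega
  rw [hcongr, Module.card_eq_pow_finrank (K := F), hrank]

lemma exists_good_matrix [Fintype F] (k n m₀ : ℕ) (hk : 1 ≤ k) (hm₀n : m₀ ≤ n)
    (hnum : n.choose m₀ * (Fintype.card F) ^ k < (Fintype.card F) ^ m₀) :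
    ∃ col : Fin n → (Fin k → F), ∀ S : Finset (Fin n), S.card = m₀ →
      Submodule.span F (col '' (S : Set (Fin n))) = ⊤ := by
  classical
  set q := Fintype.card F with hq_def
  have hq0 : 0 < q := Fintype.card_pos
  set Bad : Finset (Fin n → Fin k → F) := Finset.univ.filter
    (fun col => ∃ S ∈ (Finset.univ : Finset (Fin n)).powersetCard m₀,
      Submodule.span F (col '' (S : Set (Fin n))) ≠ ⊤) with hBad_def
  -- cardinality of the whole space
  have hcardΩ : Fintype.card (Fin n → Fin k → F) = (q ^ k) ^ n := by
    simp [hq_def]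
  -- per (S, y) bound
  have hySbound : ∀ (S : Finset (Fin n)), S.card = m₀ → ∀ y : Fin k → F, y ≠ 0 →
      (Finset.univ.filter (fun col : Fin n → Fin k → F => ∀ j ∈ S, y ⬝ᵥ col j = 0)).card
        ≤ (q ^ (k-1)) ^ m₀ * (q ^ k) ^ (n - m₀) := by
    intro S hS y hy
    have hc1 : (Finset.univ.filter (fun col : Fin n → Fin k → F => ∀ j ∈ S, y ⬝ᵥ col j = 0)).card
        = Fintype.card {col : Fin n → Fin k → F // ∀ j, j ∈ S → y ⬝ᵥ col j = 0} := by
      rw [Fintype.card_subtype]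
    rw [hc1]
    have hc2 : Fintype.card {col : Fin n → Fin k → F // ∀ j, j ∈ S → y ⬝ᵥ col j = 0}
        = ∏ j : Fin n, Fintype.card {v : Fin k → F // j ∈ S → y ⬝ᵥ v = 0} := by
      rw [Fintype.card_congr (Equiv.subtypePiEquivPi
        (p := fun (j : Fin n) (v : Fin k → F) => j ∈ S → y ⬝ᵥ v = 0))]
      rw [Fintype.card_pi]
    rw [hc2]
    have hfac : ∀ j : Fin n, Fintype.card {v : Fin k → F // j ∈ S → y ⬝ᵥ v = 0}
        ≤ if j ∈ S then q ^ (k-1) else q ^ k := by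
      intro j
      by_cases hj : j ∈ S
      · rw [if_pos hj]
        have : Fintype.card {v : Fin k → F // j ∈ S → y ⬝ᵥ v = 0}
            = Fintype.card {v : Fin k → F // y ⬝ᵥ v = 0} := by
          exact Fintype.card_congr (Equiv.subtypeEquivRight (by intro v; simp [hj]))
        rw [this, card_ker_dot y hy]
      · rw [if_neg hj]
        calc Fintype.card {v : Fin k → F // j ∈ S → y ⬝ᵥ v = 0}
            ≤ Fintype.card (Fin k → F) := Fintype.card_subtype_le _
          _ = q ^ k := by simp [hq_def]
    calc ∏ j : Fin n, Fintype.card {v : Fin k → F // j ∈ S → y ⬝ᵥ v = 0}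
        ≤ ∏ j : Fin n, (if j ∈ S then q ^ (k-1) else q ^ k) :=
          Finset.prod_le_prod' (fun j _ => hfac j)
      _ = (q ^ (k-1)) ^ m₀ * (q ^ k) ^ (n - m₀) := by
          rw [Finset.prod_ite]
          rw [Finset.prod_const, Finset.prod_const]
          have h1 : (Finset.univ.filter (fun j : Fin n => j ∈ S)) = S := by
            ext j; simp
          have h2 : (Finset.univ.filter (fun j : Fin n => ¬ j ∈ S)).card = n - m₀ := by
            have he : Finset.univ.filter (fun j : Fin n => ¬ j ∈ S) = Sᶜ := by
              ext j; simp
            rw [he, Finset.card_compl, Fintype.card_fin, hS]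
          rw [h1, h2, hS]
  -- per S bound
  have hSbound : ∀ S ∈ (Finset.univ : Finset (Fin n)).powersetCard m₀,
      (Finset.univ.filter (fun col : Fin n → Fin k → F =>
        Submodule.span F (col '' (S : Set (Fin n))) ≠ ⊤)).card
      ≤ q ^ k * ((q ^ (k-1)) ^ m₀ * (q ^ k) ^ (n - m₀)) := by
    intro S hSmem
    have hS : S.card = m₀ := (Finset.mem_powersetCard_univ).1 hSmem
    have hsub : (Finset.univ.filter (fun col : Fin n → Fin k → F =>
        Submodule.span F (col '' (S : Set (Fin n))) ≠ ⊤))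
        ⊆ (Finset.univ.filter (fun y : Fin k → F => y ≠ 0)).biUnion
          (fun y => Finset.univ.filter (fun col : Fin n → Fin k → F =>
            ∀ j ∈ S, y ⬝ᵥ col j = 0)) := by
      intro col hcol
      rw [Finset.mem_filter] at hcol
      obtain ⟨y, hy0, hyorth⟩ := exists_orth _ hcol.2
      rw [Finset.mem_biUnion]
      refine ⟨y, by simp [hy0], ?_⟩
      rw [Finset.mem_filter]
      refine ⟨Finset.mem_univ _, fun j hj => hyorth _ ⟨j, hj, rfl⟩⟩
    calc (Finset.univ.filter (fun col : Fin n → Fin k → F =>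
          Submodule.span F (col '' (S : Set (Fin n))) ≠ ⊤)).card
        ≤ ((Finset.univ.filter (fun y : Fin k → F => y ≠ 0)).biUnion
          (fun y => Finset.univ.filter (fun col : Fin n → Fin k → F =>
            ∀ j ∈ S, y ⬝ᵥ col j = 0))).card := Finset.card_le_card hsub
      _ ≤ ∑ y ∈ Finset.univ.filter (fun y : Fin k → F => y ≠ 0),
            (Finset.univ.filter (fun col : Fin n → Fin k → F =>
              ∀ j ∈ S, y ⬝ᵥ col j = 0)).card := Finset.card_biUnion_le
      _ ≤ ∑ y ∈ Finset.univ.filter (fun y : Fin k → F => y ≠ 0),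
            ((q ^ (k-1)) ^ m₀ * (q ^ k) ^ (n - m₀)) := by
          apply Finset.sum_le_sum
          intro y hy
          exact hySbound S hS y (by simpa using (Finset.mem_filter.1 hy).2)
      _ ≤ q ^ k * ((q ^ (k-1)) ^ m₀ * (q ^ k) ^ (n - m₀)) := by
          rw [Finset.sum_const, smul_eq_mul]
          apply Nat.mul_le_mul_right
          calc (Finset.univ.filter (fun y : Fin k → F => y ≠ 0)).card
              ≤ (Finset.univ : Finset (Fin k → F)).card := Finset.card_filter_le _ _
            _ = q ^ k := by simp [hq_def]
  -- total bound
  have hBadcard : Bad.card < Fintype.card (Fin n → Fin k → F) := by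
    have hsub : Bad ⊆ ((Finset.univ : Finset (Fin n)).powersetCard m₀).biUnion
        (fun S => Finset.univ.filter (fun col : Fin n → Fin k → F =>
          Submodule.span F (col '' (S : Set (Fin n))) ≠ ⊤)) := by
      intro col hcol
      rw [hBad_def, Finset.mem_filter] at hcol
      obtain ⟨S, hSmem, hSspan⟩ := hcol.2
      rw [Finset.mem_biUnion]
      exact ⟨S, hSmem, by rw [Finset.mem_filter]; exact ⟨Finset.mem_univ _, hSspan⟩⟩
    have h1 : Bad.card ≤ n.choose m₀ * (q ^ k * ((q ^ (k-1)) ^ m₀ * (q ^ k) ^ (n - m₀))) := by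
      calc Bad.card ≤ _ := Finset.card_le_card hsub
        _ ≤ ∑ S ∈ (Finset.univ : Finset (Fin n)).powersetCard m₀,
            (Finset.univ.filter (fun col : Fin n → Fin k → F =>
              Submodule.span F (col '' (S : Set (Fin n))) ≠ ⊤)).card := Finset.card_biUnion_le
        _ ≤ ∑ S ∈ (Finset.univ : Finset (Fin n)).powersetCard m₀,
            (q ^ k * ((q ^ (k-1)) ^ m₀ * (q ^ k) ^ (n - m₀))) :=
          Finset.sum_le_sum hSbound
        _ = n.choose m₀ * (q ^ k * ((q ^ (k-1)) ^ m₀ * (q ^ k) ^ (n - m₀))) := by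
          rw [Finset.sum_const, smul_eq_mul, Finset.card_powersetCard]
          simp
    have h2 : n.choose m₀ * (q ^ k * ((q ^ (k-1)) ^ m₀ * (q ^ k) ^ (n - m₀))) < (q ^ k) ^ n := by
      have e1 : (q ^ k) ^ n = q ^ m₀ * ((q ^ (k-1)) ^ m₀ * (q ^ k) ^ (n - m₀)) := by
        rw [← pow_mul, ← pow_mul, ← pow_mul, ← pow_add, ← pow_add]
        congr 1
        zify [hm₀n, hk]
        ring
      have hpos : 0 < (q ^ (k-1)) ^ m₀ * (q ^ k) ^ (n - m₀) := by positivity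
      have := (Nat.mul_lt_mul_right hpos).2 hnum
      rw [e1, ← mul_assoc]
      exact this
    rw [hcardΩ]
    exact lt_of_le_of_lt h1 h2
  -- extract a good column family
  have : ∃ col : Fin n → Fin k → F, col ∉ Bad := by
    by_contra hcon
    push_neg at hcon
    have : (Finset.univ : Finset (Fin n → Fin k → F)) ⊆ Bad := fun col _ => hcon col
    have := Finset.card_le_card this
    rw [Finset.card_univ] at this
    omega
  obtain ⟨col, hcol⟩ := this
  refine ⟨col, fun S hS => ?_⟩
  by_contra hspan
  apply hcol
  rw [hBad_def, Finset.mem_filter]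
  exact ⟨Finset.mem_univ _, S, Finset.mem_powersetCard_univ.2 hS, hspan⟩

lemma size_pos {n : ℕ} (T : DTree n) : 1 ≤ T.size := by
  cases T <;> simp [DTree.size] <;> omega

noncomputable def assigned {n : ℕ} {F : Type} (ρ : Fin n → Option F) : ℕ :=
  (Finset.univ.filter (fun i => (ρ i).isSome)).card

lemma assigned_update {n : ℕ} {F : Type} (ρ : Fin n → Option F) (i : Fin n) (v : F)
    (hi : ρ i = none) : assigned (Function.update ρ i (some v)) = assigned ρ + 1 := by
  unfold assigned
  have h : (Finset.univ.filter (fun j => ((Function.update ρ i (some v)) j).isSome))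
      = insert i (Finset.univ.filter (fun j => (ρ j).isSome)) := by
    ext j
    by_cases hj : j = i
    · subst hj; simp [Function.update_self]
    · simp [Function.update_of_ne hj, hj]
  rw [h, Finset.card_insert_of_notMem (by simp [hi])]

lemma tree_size_ge {n k : ℕ} {F : Type} [Field F] (A : Matrix (Fin k) (Fin n) F)
    (b : Fin k → F) (d : ℕ)
    (H : ∀ ρ : Fin n → Option F, assigned ρ < d →
        ∃ x : Fin n → F, (∀ i v, ρ i = some v → x i = v) ∧ A.mulVec x = b) :
    ∀ (T : DTree n) (ρ : Fin n → Option F), DTree.Valid A b T ρ →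
      2 ^ (d - assigned ρ) ≤ T.size := by
  intro T
  induction T with
  | leaf =>
    intro ρ hval
    rcases lt_or_ge (assigned ρ) d with hlt | hle
    · exact absurd (H ρ hlt) hval
    · have : d - assigned ρ = 0 := by omega
      simp [this, DTree.size]
  | node i t0 t1 ih0 ih1 =>
    intro ρ hval
    obtain ⟨hnone, hv0, hv1⟩ := hval
    have h0 := ih0 _ hv0
    have h1 := ih1 _ hv1
    rw [assigned_update ρ i 0 hnone] at h0
    rw [assigned_update ρ i 1 hnone] at h1
    rcases lt_or_ge (assigned ρ) d with hlt | hle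
    · have he : d - assigned ρ = (d - (assigned ρ + 1)) + 1 := by omega
      show 2 ^ (d - assigned ρ) ≤ 1 + t0.size + t1.size
      rw [he, pow_succ]
      omega
    · have : d - assigned ρ = 0 := by omega
      rw [this]
      have := size_pos (DTree.node i t0 t1)
      simpa [DTree.size] using this

lemma exists_extension {n k : ℕ} {F : Type} [Field F] (A : Matrix (Fin k) (Fin n) F)
    (b : Fin k → F) (m₀ : ℕ)
    (hspan : ∀ S : Finset (Fin n), S.card = m₀ →
      Submodule.span F ((fun j => fun i => A i j) '' (S : Set (Fin n))) = ⊤)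
    (ρ : Fin n → Option F)
    (hfree : m₀ ≤ (Finset.univ.filter (fun i => ρ i = none)).card) :
    ∃ x : Fin n → F, (∀ i v, ρ i = some v → x i = v) ∧ A.mulVec x = b := by
  classical
  set col : Fin n → (Fin k → F) := fun j => fun i => A i j with hcol_def
  obtain ⟨S', hS'sub, hS'card⟩ := Finset.exists_subset_card_eq hfree
  set ρ' : Fin n → F := fun i => (ρ i).getD 0 with hρ'_def
  set v : Fin k → F := b - A.mulVec ρ' with hv_def
  have hv_mem : v ∈ Submodule.span F (col '' (S' : Set (Fin n))) := by
    rw [hspan S' hS'card]; trivial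
  rw [Set.image_eq_range col (S' : Set (Fin n))] at hv_mem
  rw [Submodule.mem_span_range_iff_exists_fun] at hv_mem
  obtain ⟨c, hc⟩ := hv_mem
  set cc : Fin n → F := fun j => if h : j ∈ S' then c ⟨j, h⟩ else 0 with hcc_def
  have hmulVec : ∀ w : Fin n → F, A.mulVec w = ∑ j, w j • col j := by
    intro w
    funext i
    simp [Matrix.mulVec, dotProduct, Finset.sum_apply, hcol_def, mul_comm]
  have hAcc : A.mulVec cc = v := by
    rw [hmulVec]
    have e1 : ∑ j, cc j • col j = ∑ j ∈ S', cc j • col j := by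
      apply (Finset.sum_subset (Finset.subset_univ S') _).symm
      intro j _ hj
      simp [hcc_def, hj]
    have e2 : ∑ j ∈ S', cc j • col j = ∑ j ∈ S'.attach, cc ↑j • col ↑j :=
      (Finset.sum_attach S' (fun j => cc j • col j)).symm
    have e3 : ∑ j ∈ S'.attach, cc ↑j • col ↑j = ∑ j : {x // x ∈ S'}, c j • col ↑j := by
      apply Finset.sum_congr rfl
      intro j _
      congr 1
      simp [hcc_def, j.2]
    rw [e1, e2, e3]
    exact hc
  refine ⟨fun j => ρ' j + cc j, ?_, ?_⟩
  · intro i w hw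
    have hiS' : i ∉ S' := by
      intro hmem
      have := hS'sub hmem
      rw [Finset.mem_filter] at this
      rw [this.2] at hw
      exact (Option.some_ne_none w hw.symm).elim
    simp [hρ'_def, hw, hcc_def, hiS']
  · have : (fun j => ρ' j + cc j) = ρ' + cc := rfl
    rw [this, Matrix.mulVec_add, hAcc, hv_def]
    abel

lemma aux16 : ∀ m : ℕ, 7 ≤ m → 16 * m ≤ 2 ^ m := by
  intro m hm
  induction m with
  | zero => omega
  | succ p ih =>
    rcases Nat.lt_or_ge p 7 with hp | hp
    · interval_cases p <;> simp_all <;> omega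
    · have h1 := ih hp
      have h2 : (16:ℕ) ≤ 2 ^ p := by
        calc (16:ℕ) ≤ 16 * p := by omega
          _ ≤ 2 ^ p := h1
      rw [pow_succ]
      omega


/-- For every prime power `q ≥ 3` (equivalently, every finite field `F`
with at least `3` elements) there are constants `c > 0` and `n₀` such that for every
`n ≥ n₀` there are `k ≥ 1`, a `k×n` matrix `A` over `F` and `b ∈ F^k` such that the system
`A x̄ = b̄` has no solution in `{0,1}ⁿ`, and every decision tree for `A x̄ = b̄` has size at
least `2^(c·n / log₂ n)`. -/
theorem statement10 (F : Type) [Field F] [Fintype F] (hq : 3 ≤ Fintype.card F) :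
    ∃ c : ℝ, 0 < c ∧ ∃ n₀ : ℕ, ∀ n ≥ n₀,
      ∃ (k : ℕ) (_ : 1 ≤ k) (A : Matrix (Fin k) (Fin n) F) (b : Fin k → F),
        (¬ ∃ x : Fin n → Bool, A.mulVec (fun i => if x i then 1 else 0) = b) ∧
        ∀ T : DTree n, DTree.Valid A b T (fun _ => none) →
          (2 : ℝ) ^ (c * n / Real.logb 2 n) ≤ T.size := by
  classical
  refine ⟨1/16, by norm_num, 128, ?_⟩
  intro n hn
  set q := Fintype.card F with hq_def
  have hn0 : n ≠ 0 := by omega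
  set L := Nat.log 2 n with hL_def
  have hL7 : 7 ≤ L := by
    have h1 : Nat.log 2 128 ≤ L := Nat.log_mono_right hn
    have h2 : Nat.log 2 128 = 7 := Nat.log_eq_of_pow_le_of_lt_pow (by norm_num) (by norm_num)
    omega
  have h2L : 2 ^ L ≤ n := Nat.pow_log_le_self 2 hn0
  have hn2L : n < 2 ^ (L + 1) := Nat.lt_pow_succ_log_self (by norm_num) n
  have h16Ln : 16 * L ≤ n := le_trans (aux16 L hL7) h2L
  set d := n / (8 * L) with hd_def
  have h8Lpos : 0 < 8 * L := by omega
  set W := L * d with hW_def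
  have hdm : 8 * W + n % (8 * L) = n := by
    have h := Nat.div_add_mod n (8 * L)
    calc 8 * W + n % (8 * L) = 8 * L * (n / (8 * L)) + n % (8 * L) := by
          rw [hW_def, hd_def]; ring
      _ = n := h
  have hrlt : n % (8 * L) < 8 * L := Nat.mod_lt _ h8Lpos
  have hd1 : 1 ≤ d := by
    rw [hd_def]
    exact (Nat.one_le_div_iff h8Lpos).2 (by omega)
  have h56d : 56 * d ≤ 8 * W := by
    have : 56 * d ≤ 8 * L * d := Nat.mul_le_mul_right d (by omega)
    calc 56 * d ≤ 8 * L * d := this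
      _ = 8 * W := by rw [hW_def]; ring
  have hdn56 : 56 * d ≤ n := by omega
  have h2dW : 8 * d ≤ 4 * W := by
    have : 2 * d ≤ L * d := Nat.mul_le_mul_right d (by omega)
    omega
  have hWn : 4 * W + 8 * d ≤ n := by omega
  have hn16W : n ≤ 16 * W := by omega
  -- k
  set k := (3 * n + 3) / 4 with hk_def
  have hkdm := Nat.div_add_mod (3 * n + 3) 4
  have hk4a : 4 * k ≤ 3 * n + 3 := by omega
  have hk4b : 3 * n < 4 * k + 4 := by
    have := Nat.mod_lt (3 * n + 3) (show 0 < 4 by norm_num)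
    omega
  have hk1 : 1 ≤ k := by omega
  -- m₀
  set m₀ := n - d + 1 with hm₀_def
  have hm₀n : m₀ ≤ n := by omega
  have hkm₀ : k ≤ m₀ := by omega
  -- numeric inequality P1 : 2^n < q^k
  have hq0 : 0 < q := by omega
  have P1 : 2 ^ n < q ^ k := by
    have a1 : (2:ℕ) ^ (4 * n) < 3 ^ (3 * n) := by
      have h16 : (16:ℕ) ^ n < 27 ^ n := Nat.pow_lt_pow_left (by norm_num) hn0
      have e1 : (2:ℕ) ^ (4 * n) = 16 ^ n := by
        rw [pow_mul]; norm_num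
      have e2 : (3:ℕ) ^ (3 * n) = 27 ^ n := by
        rw [pow_mul]; norm_num
      rw [e1, e2]; exact h16
    have a2 : (3:ℕ) ^ (3 * n) ≤ 3 ^ (4 * k) := Nat.pow_le_pow_right (by norm_num) (by omega)
    have a3 : (3:ℕ) ^ (4 * k) ≤ q ^ (4 * k) := Nat.pow_le_pow_left hq _
    have a4 : (2:ℕ) ^ (4 * n) < q ^ (4 * k) := lt_of_lt_of_le a1 (le_trans a2 a3)
    have e3 : (2:ℕ) ^ (4 * n) = (2 ^ n) ^ 4 := by rw [← pow_mul, Nat.mul_comm]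
    have e4 : q ^ (4 * k) = (q ^ k) ^ 4 := by rw [← pow_mul, Nat.mul_comm]
    rw [e3, e4] at a4
    exact lt_of_pow_lt_pow_left₀ 4 (Nat.zero_le _) a4
  -- P2 : n^d < q^(m₀ - k)
  have P2 : n ^ d < q ^ (m₀ - k) := by
    have s1 : n ^ (4 * d) < 2 ^ ((L + 1) * (4 * d)) := by
      have := Nat.pow_lt_pow_left hn2L (show 4 * d ≠ 0 by omega)
      rwa [← pow_mul] at this
    have s2 : (L + 1) * (4 * d) ≤ n - 4 * d := by
      have e : (L + 1) * (4 * d) = 4 * W + 4 * d := by rw [hW_def]; ring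
      omega
    have s3 : n ^ (4 * d) < 2 ^ (n - 4 * d) :=
      lt_of_lt_of_le s1 (Nat.pow_le_pow_right (by norm_num) s2)
    have s4 : (2:ℕ) ^ (n - 4 * d) ≤ 3 ^ (n - 4 * d) := Nat.pow_le_pow_left (by norm_num) _
    have s5 : (3:ℕ) ^ (n - 4 * d) ≤ 3 ^ (4 * (m₀ - k)) :=
      Nat.pow_le_pow_right (by norm_num) (by omega)
    have s6 : (3:ℕ) ^ (4 * (m₀ - k)) ≤ q ^ (4 * (m₀ - k)) := Nat.pow_le_pow_left hq _
    have s7 : n ^ (4 * d) < q ^ (4 * (m₀ - k)) := by omega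
    have e3 : n ^ (4 * d) = (n ^ d) ^ 4 := by rw [← pow_mul, Nat.mul_comm]
    have e4 : q ^ (4 * (m₀ - k)) = (q ^ (m₀ - k)) ^ 4 := by rw [← pow_mul, Nat.mul_comm]
    rw [e3, e4] at s7
    exact lt_of_pow_lt_pow_left₀ 4 (Nat.zero_le _) s7
  -- hnum
  have hnum : n.choose m₀ * q ^ k < q ^ m₀ := by
    have c1 : n.choose m₀ = n.choose (d - 1) := by
      rw [← Nat.choose_symm hm₀n]
      congr 1
      omega
    have c2 : n.choose (d - 1) ≤ n ^ (d - 1) := Nat.choose_le_pow n (d - 1)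
    have c3 : n ^ (d - 1) ≤ n ^ d := Nat.pow_le_pow_right (by omega) (by omega)
    have c4 : n.choose m₀ ≤ n ^ d := by omega
    calc n.choose m₀ * q ^ k ≤ n ^ d * q ^ k :=
          Nat.mul_le_mul_right _ c4
      _ < q ^ (m₀ - k) * q ^ k := (Nat.mul_lt_mul_right (by positivity)).2 P2
      _ = q ^ m₀ := by rw [← pow_add]; congr 1; omega
  -- get the good matrix
  obtain ⟨col, hcol⟩ := exists_good_matrix (F := F) k n m₀ hk1 hm₀n (by rw [← hq_def]; exact hnum)
  set A : Matrix (Fin k) (Fin n) F := Matrix.of (fun i j => col j i) with hA_def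
  have hcols : (fun j => fun i => A i j) = col := rfl
  -- choose b outside the image of the boolean cube
  set f : (Fin n → Bool) → (Fin k → F) :=
    fun x => A.mulVec (fun i => if x i then 1 else 0) with hf_def
  have hbex : ∃ b : Fin k → F, b ∉ Finset.univ.image f := by
    by_contra hcon
    push_neg at hcon
    have hsub : (Finset.univ : Finset (Fin k → F)) ⊆ Finset.univ.image f :=
      fun b _ => hcon b
    have hcard := Finset.card_le_card hsub
    rw [Finset.card_univ] at hcard
    have h1 : (Finset.univ.image f).card ≤ Fintype.card (Fin n → Bool) :=
      le_trans (Finset.card_image_le) (by rw [Finset.card_univ])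
    have h2 : Fintype.card (Fin n → Bool) = 2 ^ n := by simp
    have h3 : Fintype.card (Fin k → F) = q ^ k := by simp [hq_def]
    omega
  obtain ⟨b, hb⟩ := hbex
  refine ⟨k, hk1, A, b, ?_, ?_⟩
  · rintro ⟨x, hx⟩
    exact hb (Finset.mem_image.2 ⟨x, Finset.mem_univ _, hx⟩)
  · intro T hT
    -- the ℕ size bound
    have H : ∀ ρ : Fin n → Option F, assigned ρ < d →
        ∃ x : Fin n → F, (∀ i v, ρ i = some v → x i = v) ∧ A.mulVec x = b := by
      intro ρ hρ
      apply exists_extension A b m₀ (by rw [hcols]; exact hcol) ρ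
      have hsplit := Finset.card_filter_add_card_filter_not
        (s := (Finset.univ : Finset (Fin n))) (p := fun i => (ρ i).isSome)
      have heq : (Finset.univ.filter (fun i => ¬ (ρ i).isSome))
          = (Finset.univ.filter (fun i => ρ i = none)) := by
        ext i
        simp [Option.not_isSome_iff_eq_none]
      rw [heq] at hsplit
      have hcard_univ : (Finset.univ : Finset (Fin n)).card = n := by simp
      unfold assigned at hρ
      omega
    have hsz : 2 ^ d ≤ T.size := by
      have h0 : assigned (fun _ : Fin n => (none : Option F)) = 0 := by
        simp [assigned]
      have := tree_size_ge A b d H T (fun _ => none) hT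
      rwa [h0, Nat.sub_zero] at this
    -- the real bound
    have hlogpos : (0:ℝ) < Real.logb 2 n := by
      apply Real.logb_pos (by norm_num)
      have : (128:ℝ) ≤ n := by exact_mod_cast hn
      linarith
    have hLlog : (L:ℝ) ≤ Real.logb 2 n := by
      have h2Ln : ((2:ℝ)) ^ L ≤ (n:ℝ) := by exact_mod_cast h2L
      have e : Real.logb 2 ((2:ℝ) ^ L) = L := by
        rw [Real.logb_pow, Real.logb_self_eq_one (by norm_num)]
        ring
      calc (L:ℝ) = Real.logb 2 ((2:ℝ) ^ L) := e.symm
        _ ≤ Real.logb 2 n := Real.logb_le_logb_of_le (by norm_num) (by positivity) h2Ln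
    have hexp : (1/16 : ℝ) * n / Real.logb 2 n ≤ (d:ℝ) := by
      rw [div_le_iff₀ hlogpos]
      have h1 : (n:ℝ) ≤ 16 * (L:ℝ) * (d:ℝ) := by
        have : (n:ℝ) ≤ ((16 * W : ℕ) : ℝ) := by exact_mod_cast hn16W
        calc (n:ℝ) ≤ ((16 * W : ℕ) : ℝ) := this
          _ = 16 * (L:ℝ) * (d:ℝ) := by rw [hW_def]; push_cast; ring
      have h2 : (L:ℝ) * (d:ℝ) ≤ Real.logb 2 n * (d:ℝ) :=
        mul_le_mul_of_nonneg_right hLlog (by positivity)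
      nlinarith
    calc (2:ℝ) ^ ((1/16 : ℝ) * n / Real.logb 2 n)
        ≤ (2:ℝ) ^ ((d:ℕ):ℝ) := Real.rpow_le_rpow_of_exponent_le one_le_two hexp
      _ = ((2 ^ d : ℕ) : ℝ) := by rw [Real.rpow_natCast]; push_cast; ring
      _ ≤ (T.size : ℝ) := by exact_mod_cast hsz
end

section
/- Let n ≥ 0 and let g : ℤ^n → ℤ be an affine function, g(x) = c_0 + c_1 x_1 + ⋯ + c_n x_n with integer coefficients. Let I(g) = {g(x) : x ∈ {0,1}^n} be the image of g on the Boolean cube and K(g) = {x ∈ {0,1}^n : g(x) = 0} the set of its 0-1 roots. Then |I(g)| · |K(g)| ≤ 3^n. -/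
open scoped Classical

/-- Let `g : ℤⁿ → ℤ` be an affine function,
`g(x) = c₀ + c₁x₁ + ⋯ + cₙxₙ`. Let `I(g)` be the image of `g` on the Boolean cube `{0,1}ⁿ`
and `K(g)` the set of 0-1 roots of `g`. Then `|I(g)| · |K(g)| ≤ 3ⁿ`. -/
theorem statement11 (n : ℕ) (c : Fin n → ℤ) (c₀ : ℤ) :
    ((Finset.univ.image fun x : Fin n → Bool =>
        c₀ + ∑ i, c i * (if x i then 1 else 0)).card) *
      ((Finset.univ.filter fun x : Fin n → Bool =>
        c₀ + ∑ i, c i * (if x i then (1 : ℤ) else 0) = 0).card) ≤ 3 ^ n := by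
  classical
  set g : (Fin n → Bool) → ℤ := fun x => c₀ + ∑ i, c i * (if x i then 1 else 0) with hg
  set I : Finset ℤ := Finset.univ.image g with hI
  set K : Finset (Fin n → Bool) := Finset.univ.filter (fun x => g x = 0) with hK
  -- choose a preimage for each value
  let pick : ℤ → (Fin n → Bool) := fun a =>
    if h : ∃ x, g x = a then h.choose else fun _ => false
  have hpick : ∀ a ∈ I, g (pick a) = a := by
    intro a ha
    obtain ⟨x, -, hx⟩ := Finset.mem_image.mp ha
    have h : ∃ x, g x = a := ⟨x, hx⟩
    simp only [pick, dif_pos h]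
    exact h.choose_spec
  -- the target finset: sequences with entries in {0,1,2}
  set T : Finset (Fin n → ℤ) := Fintype.piFinset fun _ => ({0, 1, 2} : Finset ℤ) with hT
  have hTcard : T.card = 3 ^ n := by
    simp [hT, Fintype.card_piFinset]
  -- the injection
  let F : ℤ × (Fin n → Bool) → (Fin n → ℤ) := fun p i =>
    (if pick p.1 i then 1 else 0) + (if p.2 i then 1 else 0)
  have key : ∀ a ∈ I, ∀ y ∈ K, ∑ i, c i * F (a, y) i = a - 2 * c₀ := by
    intro a ha y hy
    have h1 : g (pick a) = a := hpick a ha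
    have h2 : g y = 0 := (Finset.mem_filter.mp hy).2
    simp only [hg] at h1 h2
    calc ∑ i, c i * F (a, y) i
        = (∑ i, c i * (if pick a i then 1 else 0)) +
          (∑ i, c i * (if y i then 1 else 0)) := by
          rw [← Finset.sum_add_distrib]
          exact Finset.sum_congr rfl fun i _ => by simp [F, mul_add]
      _ = a - 2 * c₀ := by omega
  have hle : (I ×ˢ K).card ≤ T.card := by
    apply Finset.card_le_card_of_injOn F
    · intro p hp
      simp only [hT, Finset.mem_coe, Fintype.mem_piFinset]
      intro i
      by_cases h1 : pick p.1 i <;> by_cases h2 : p.2 i <;> simp [F, h1, h2]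
    · intro p hp q hq hpq
      obtain ⟨hpI, hpK⟩ := Finset.mem_product.mp hp
      obtain ⟨hqI, hqK⟩ := Finset.mem_product.mp hq
      have hsum : p.1 - 2 * c₀ = q.1 - 2 * c₀ := by
        rw [← key p.1 hpI p.2 hpK, ← key q.1 hqI q.2 hqK]
        exact Finset.sum_congr rfl fun i _ => by rw [show F (p.1, p.2) = F (q.1, q.2) from hpq]
      have h1 : p.1 = q.1 := by omega
      have h2 : p.2 = q.2 := by
        funext i
        have := congrFun hpq i
        simp only [F, h1] at this
        by_cases hy : p.2 i <;> by_cases hw : q.2 i <;>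
          simp [hy, hw] at this ⊢
      exact Prod.ext h1 h2
  calc I.card * K.card = (I ×ˢ K).card := (Finset.card_product I K).symm
    _ ≤ T.card := hle
    _ = 3 ^ n := hTcard
end

section
/- Let n ≥ 1, let f(x) = 1 + 2x_1 + 2^2 x_2 + ⋯ + 2^n x_n, let g : ℤ^n → ℤ be an affine function (integer coefficients, degree at most 1), and let a ∈ ℤ with a ≠ 0. Then |{x ∈ {0,1}^n : g(x) = 0}| · |{x ∈ {0,1}^n : g(x) + a·f(x) = 0}| ≤ 3^n; in particular, at least one of the two sets {x ∈ {0,1}^n : g(x) = 0} and {x ∈ {0,1}^n : g(x) + a·f(x) = 0} has at most 3^{n/2} elements. -/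
open scoped Classical

/-- `f(x) = 1 + 2x₁ + 2²x₂ + ⋯ + 2ⁿxₙ` evaluated at a Boolean point. -/
def subsetSumVal (n : ℕ) (x : Fin n → Bool) : ℤ :=
  1 + ∑ i : Fin n, (2 : ℤ) ^ ((i : ℕ) + 1) * (if x i then 1 else 0)

/-- An affine function `g(x) = g₀ + g₁x₁ + ⋯ + gₙxₙ` evaluated at a Boolean point. -/
def affVal (n : ℕ) (g₀ : ℤ) (g : Fin n → ℤ) (x : Fin n → Bool) : ℤ :=
  g₀ + ∑ i, g i * (if x i then 1 else 0)

/-- Binary representation injectivity. -/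
lemma bin_inj : ∀ (n : ℕ) (x y : Fin n → Bool),
    (∑ i : Fin n, (2:ℤ)^(i:ℕ) * (if x i then 1 else 0)) =
    (∑ i : Fin n, (2:ℤ)^(i:ℕ) * (if y i then 1 else 0)) → x = y := by
  intro n
  induction n with
  | zero => intro x y _; funext i; exact absurd i.2 (by omega)
  | succ m ih =>
    intro x y h
    rw [Fin.sum_univ_succ, Fin.sum_univ_succ] at h
    have hre : ∀ z : Fin (m+1) → Bool,
        (∑ i : Fin m, (2:ℤ)^((i.succ : Fin (m+1)) : ℕ) * (if z i.succ then 1 else 0)) =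
        2 * ∑ i : Fin m, (2:ℤ)^(i:ℕ) * (if z i.succ then 1 else 0) := by
      intro z
      rw [Finset.mul_sum]
      refine Finset.sum_congr rfl fun i _ => ?_
      simp [Fin.val_succ, pow_succ]
      ring
    rw [hre x, hre y] at h
    simp only [Fin.val_zero, pow_zero, one_mul] at h
    set Ax := ∑ i : Fin m, (2:ℤ)^(i:ℕ) * (if x i.succ then 1 else 0) with hAx
    set Ay := ∑ i : Fin m, (2:ℤ)^(i:ℕ) * (if y i.succ then 1 else 0) with hAy
    have h0 : x 0 = y 0 ∧ Ax = Ay := by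
      rcases hx0 : x 0 <;> rcases hy0 : y 0 <;> simp [hx0, hy0] at h ⊢ <;> omega
    have htail : (fun i : Fin m => x i.succ) = (fun i : Fin m => y i.succ) := ih _ _ h0.2
    funext i
    refine Fin.cases h0.1 (fun j => ?_) i
    exact congrFun htail j
lemma ite_inj {b c : Bool} (h : (if b then (1:ℤ) else 0) = (if c then 1 else 0)) : b = c := by
  rcases b <;> rcases c <;> simp_all

/-- Let `f(x) = 1 + 2x₁ + 2²x₂ + ⋯ + 2ⁿxₙ`, let `g : ℤⁿ → ℤ` be affine
and let `a ∈ ℤ` be nonzero. Then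
`|{x ∈ {0,1}ⁿ : g(x) = 0}| · |{x ∈ {0,1}ⁿ : g(x) + a·f(x) = 0}| ≤ 3ⁿ`; in particular one of
the two sets has at most `3^(n/2)` elements. -/
theorem statement12 (n : ℕ) (hn : 1 ≤ n) (g₀ : ℤ) (g : Fin n → ℤ) (a : ℤ) (ha : a ≠ 0) :
    ((Finset.univ.filter fun x : Fin n → Bool => affVal n g₀ g x = 0).card *
      (Finset.univ.filter fun x : Fin n → Bool =>
        affVal n g₀ g x + a * subsetSumVal n x = 0).card ≤ 3 ^ n) ∧
    ((((Finset.univ.filter fun x : Fin n → Bool => affVal n g₀ g x = 0).card : ℝ) ≤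
        (3 : ℝ) ^ ((n : ℝ) / 2)) ∨
      (((Finset.univ.filter fun x : Fin n → Bool =>
          affVal n g₀ g x + a * subsetSumVal n x = 0).card : ℝ) ≤
        (3 : ℝ) ^ ((n : ℝ) / 2))) := by
  classical
  set A := Finset.univ.filter fun x : Fin n → Bool => affVal n g₀ g x = 0 with hA
  set B := Finset.univ.filter fun x : Fin n → Bool =>
      affVal n g₀ g x + a * subsetSumVal n x = 0 with hB
  have key : A.card * B.card ≤ 3 ^ n := by
    have hinj : Set.InjOn
        (fun p : (Fin n → Bool) × (Fin n → Bool) =>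
          (fun i => (if p.1 i then (1:Fin 3) else 0) + (if p.2 i then 1 else 0)))
        ↑(A ×ˢ B) := by
      rintro ⟨x, y⟩ hp ⟨x', y'⟩ hq hpq
      simp only [Finset.coe_product, Set.mem_prod, Finset.mem_coe, hA, hB,
        Finset.mem_filter, Finset.mem_univ, true_and] at hp hq
      obtain ⟨hx, hy⟩ := hp
      obtain ⟨hx', hy'⟩ := hq
      have hz : ∀ i, (if x i then (1:ℤ) else 0) + (if y i then 1 else 0) =
          (if x' i then 1 else 0) + (if y' i then 1 else 0) := by
        intro i
        have h := congrFun hpq i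
        simp only at h
        rcases hb1 : x i <;> rcases hb2 : y i <;> rcases hb3 : x' i <;> rcases hb4 : y' i <;>
          simp [hb1, hb2, hb3, hb4] at h ⊢ <;> exact absurd h (by decide)
      -- affVal x + affVal y = affVal x' + affVal y'
      have hgsum : affVal n g₀ g x + affVal n g₀ g y = affVal n g₀ g x' + affVal n g₀ g y' := by
        unfold affVal
        have : (∑ i, g i * ((if x i then (1:ℤ) else 0) + (if y i then 1 else 0))) =
            (∑ i, g i * ((if x' i then (1:ℤ) else 0) + (if y' i then 1 else 0))) :=
          Finset.sum_congr rfl fun i _ => by rw [hz i]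
        simp only [mul_add, Finset.sum_add_distrib] at this
        linarith
      have hay : affVal n g₀ g y = affVal n g₀ g y' := by
        rw [hx] at hgsum; rw [hx'] at hgsum; linarith
      have hf : subsetSumVal n y = subsetSumVal n y' := by
        have : a * subsetSumVal n y = a * subsetSumVal n y' := by linarith [hy, hy', hay]
        exact mul_left_cancel₀ ha this
      have hyy : y = y' := by
        unfold subsetSumVal at hf
        have h2 : (∑ i : Fin n, (2:ℤ)^((i:ℕ)+1) * (if y i then 1 else 0)) =
            (∑ i : Fin n, (2:ℤ)^((i:ℕ)+1) * (if y' i then 1 else 0)) := by linarith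
        have hre : ∀ z : Fin n → Bool,
            (∑ i : Fin n, (2:ℤ)^((i:ℕ)+1) * (if z i then 1 else 0)) =
            2 * ∑ i : Fin n, (2:ℤ)^(i:ℕ) * (if z i then 1 else 0) := by
          intro z
          rw [Finset.mul_sum]
          exact Finset.sum_congr rfl fun i _ => by rw [pow_succ]; ring
        rw [hre y, hre y'] at h2
        exact bin_inj n y y' (by linarith)
      have hxx : x = x' := by
        funext i
        have := hz i
        rw [hyy] at this
        exact ite_inj (by linarith)
      exact Prod.ext hxx hyy
    have hcard := Finset.card_le_card_of_injOn
      (f := fun p : (Fin n → Bool) × (Fin n → Bool) =>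
        (fun i => (if p.1 i then (1:Fin 3) else 0) + (if p.2 i then 1 else 0)))
      (fun p _ => Finset.mem_univ _) hinj
    rw [Finset.card_product] at hcard
    calc A.card * B.card ≤ (Finset.univ : Finset (Fin n → Fin 3)).card := hcard
      _ = 3 ^ n := by simp [Finset.card_univ]
  refine ⟨key, ?_⟩
  by_contra hcon
  push_neg at hcon
  obtain ⟨h1, h2⟩ := hcon
  have h3 : ((A.card : ℝ)) * (B.card : ℝ) ≤ (3:ℝ) ^ n := by
    have := key
    exact_mod_cast (by exact_mod_cast key : ((A.card * B.card : ℕ) : ℝ) ≤ ((3^n : ℕ) : ℝ))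
  have h4 : (3:ℝ)^((n:ℝ)/2) * (3:ℝ)^((n:ℝ)/2) < (A.card : ℝ) * (B.card : ℝ) :=
    mul_lt_mul'' h1 h2 (Real.rpow_nonneg (by norm_num) _) (Real.rpow_nonneg (by norm_num) _)
  have h5 : (3:ℝ)^((n:ℝ)/2) * (3:ℝ)^((n:ℝ)/2) = (3:ℝ) ^ n := by
    rw [← Real.rpow_add (by norm_num), ← Real.rpow_natCast 3 n]
    norm_num
  linarith
end

section
/- Let F be a field, let 0 ≤ k < n, let A be a k×n matrix over F, and let b ∈ F^k satisfy b_i ≠ 0 for every i ∈ [k] (so the zero vector satisfies all the non-equalities (Ax)_i ≠ b_i). Then there exists a nonzero vector x ∈ {0,1}^n ⊆ F^n such that (Ax)_i ≠ b_i for every i ∈ [k]. -/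
open MvPolynomial Finset

lemma aux_supersets_sum (F : Type) [Field F] (n : ℕ) (T : Finset (Fin n)) (hT : T ≠ Finset.univ) :
    ∑ S ∈ Finset.univ.filter (fun S : Finset (Fin n) => T ⊆ S), (-1 : F) ^ S.card = 0 := by
  classical
  have h : ∑ S ∈ Finset.univ.filter (fun S : Finset (Fin n) => T ⊆ S), (-1 : F) ^ S.card
      = ∑ U ∈ Tᶜ.powerset, (-1 : F) ^ (T ∪ U).card := by
    refine Finset.sum_nbij' (fun S => S \ T) (fun U => T ∪ U) ?_ ?_ ?_ ?_ ?_
    · intro S hS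
      simp only [Finset.mem_filter] at hS
      simp only [Finset.mem_powerset]
      intro a ha
      simp only [Finset.mem_sdiff] at ha
      simp [Finset.mem_compl, ha.2]
    · intro U hU
      simp only [Finset.mem_powerset] at hU
      simp only [Finset.mem_filter, Finset.mem_univ, true_and]
      exact Finset.subset_union_left
    · intro S hS
      simp only [Finset.mem_filter] at hS
      exact Finset.union_sdiff_of_subset hS.2
    · intro U hU
      simp only [Finset.mem_powerset] at hU
      apply Finset.union_sdiff_cancel_left
      rw [Finset.disjoint_left]
      intro a haT haU
      have := hU haU
      simp [Finset.mem_compl, haT] at this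
    · intro S hS
      simp only [Finset.mem_filter] at hS
      rw [Finset.union_sdiff_of_subset hS.2]
  rw [h]
  have hdisj : ∀ U ∈ Tᶜ.powerset, (T ∪ U).card = T.card + U.card := by
    intro U hU
    simp only [Finset.mem_powerset] at hU
    apply Finset.card_union_of_disjoint
    rw [Finset.disjoint_left]
    intro a haT haU
    have := hU haU
    simp [Finset.mem_compl, haT] at this
  calc ∑ U ∈ Tᶜ.powerset, (-1 : F) ^ (T ∪ U).card
      = (-1 : F) ^ T.card * ∑ U ∈ Tᶜ.powerset, (-1 : F) ^ U.card := by
        rw [Finset.mul_sum]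
        exact Finset.sum_congr rfl fun U hU => by rw [hdisj U hU, pow_add]
    _ = 0 := by
        have hne : Tᶜ.Nonempty := by
          rw [← Finset.card_pos, Finset.card_compl]
          have h1 : T.card < Finset.univ.card :=
            lt_of_le_of_ne (Finset.card_le_card (Finset.subset_univ T))
              (fun hc => hT (Finset.eq_univ_of_card T (by simpa using hc)))
          simp only [Finset.card_univ] at h1 ⊢
          omega
        have hz : (∑ m ∈ Tᶜ.powerset, (-1 : ℤ) ^ m.card) = 0 :=
          Finset.sum_powerset_neg_one_pow_card_of_nonempty hne
        have : ((∑ m ∈ Tᶜ.powerset, (-1 : ℤ) ^ m.card : ℤ) : F) = 0 := by rw [hz]; simp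
        push_cast at this
        rw [this, mul_zero]

lemma aux_cube_sum (F : Type) [Field F] (n : ℕ) (p : MvPolynomial (Fin n) F)
    (hp : p.totalDegree < n) :
    ∑ S : Finset (Fin n),
      (-1 : F) ^ S.card * MvPolynomial.eval (fun j => if j ∈ S then 1 else 0) p = 0 := by
  classical
  have hev : ∀ S : Finset (Fin n),
      MvPolynomial.eval (fun j => if j ∈ S then (1:F) else 0) p
        = ∑ d ∈ p.support, p.coeff d * ∏ j ∈ d.support, (if j ∈ S then (1:F) else 0) ^ d j := by
    intro S; rw [MvPolynomial.eval_eq']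
    refine Finset.sum_congr rfl fun d _ => ?_
    congr 1
    rw [Finset.prod_subset (Finset.subset_univ d.support)]
    intro j _ hj
    rw [Finsupp.notMem_support_iff.mp hj, pow_zero]
  calc ∑ S : Finset (Fin n), (-1 : F) ^ S.card
          * MvPolynomial.eval (fun j => if j ∈ S then 1 else 0) p
      = ∑ S : Finset (Fin n), ∑ d ∈ p.support,
          p.coeff d * ((-1 : F) ^ S.card * ∏ j ∈ d.support, (if j ∈ S then (1:F) else 0) ^ d j) := by
        refine Finset.sum_congr rfl fun S _ => ?_
        rw [hev S, Finset.mul_sum]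
        exact Finset.sum_congr rfl fun d _ => by ring
    _ = ∑ d ∈ p.support, ∑ S : Finset (Fin n),
          p.coeff d * ((-1 : F) ^ S.card * ∏ j ∈ d.support, (if j ∈ S then (1:F) else 0) ^ d j) :=
        Finset.sum_comm
    _ = 0 := by
        refine Finset.sum_eq_zero fun d hd => ?_
        have hprod : ∀ S : Finset (Fin n),
            (∏ j ∈ d.support, (if j ∈ S then (1:F) else 0) ^ d j)
              = if d.support ⊆ S then 1 else 0 := by
          intro S
          by_cases h : (d.support : Finset (Fin n)) ⊆ S
          · rw [if_pos h]
            apply Finset.prod_eq_one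
            intro j hj
            rw [if_pos (h hj), one_pow]
          · rw [if_neg h]
            obtain ⟨j, hj1, hj2⟩ := Finset.not_subset.mp h
            refine Finset.prod_eq_zero hj1 ?_
            rw [if_neg hj2]
            exact zero_pow (Finsupp.mem_support_iff.mp hj1)
        have hTne : d.support ≠ Finset.univ := by
          intro hc
          have h1 : (Finset.univ : Finset (Fin n)).card ≤ d.support.card := by rw [hc]
          have h2 : d.support.card ≤ ∑ j ∈ d.support, d j := by
            calc d.support.card = ∑ j ∈ d.support, 1 := by simp
              _ ≤ ∑ j ∈ d.support, d j := Finset.sum_le_sum fun j hj =>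
                  Nat.one_le_iff_ne_zero.mpr (Finsupp.mem_support_iff.mp hj)
          have h3 : (∑ j ∈ d.support, d j) ≤ p.totalDegree := MvPolynomial.le_totalDegree hd
          simp only [Finset.card_univ, Fintype.card_fin] at h1
          omega
        calc ∑ S : Finset (Fin n),
              p.coeff d * ((-1 : F) ^ S.card * ∏ j ∈ d.support, (if j ∈ S then (1:F) else 0) ^ d j)
            = p.coeff d * ∑ S : Finset (Fin n),
                (-1 : F) ^ S.card * (if d.support ⊆ S then 1 else 0) := by
              rw [Finset.mul_sum]
              exact Finset.sum_congr rfl fun S _ => by rw [hprod S]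
          _ = p.coeff d * ∑ S ∈ Finset.univ.filter
                (fun S : Finset (Fin n) => d.support ⊆ S), (-1 : F) ^ S.card := by
              congr 1
              rw [Finset.sum_filter]
              exact Finset.sum_congr rfl fun S _ => by rw [mul_ite, mul_one, mul_zero]
          _ = 0 := by rw [aux_supersets_sum F n d.support hTne, mul_zero]

/-- Let `F` be a field, `k < n`, `A` a `k×n` matrix over `F` and
`b ∈ F^k` with `bᵢ ≠ 0` for every `i` (so the zero vector satisfies all the non-equalities
`(Ax)ᵢ ≠ bᵢ`). Then there is a nonzero Boolean vector `x ∈ {0,1}ⁿ ⊆ Fⁿ` with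
`(Ax)ᵢ ≠ bᵢ` for every `i`. -/
theorem statement13 (F : Type) [Field F] (k n : ℕ) (hkn : k < n)
    (A : Matrix (Fin k) (Fin n) F) (b : Fin k → F) (hb : ∀ i, b i ≠ 0) :
    ∃ x : Fin n → Bool, x ≠ (fun _ => false) ∧
      ∀ i, A.mulVec (fun j => if x j then 1 else 0) i ≠ b i := by
  classical
  set p : MvPolynomial (Fin n) F :=
    ∏ i, ((∑ j, MvPolynomial.C (A i j) * MvPolynomial.X j) - MvPolynomial.C (b i)) with hp
  have hdeg : p.totalDegree < n := by
    calc p.totalDegree ≤ ∑ i : Fin k,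
        ((∑ j, MvPolynomial.C (A i j) * MvPolynomial.X j) - MvPolynomial.C (b i)).totalDegree :=
          MvPolynomial.totalDegree_finset_prod _ _
      _ ≤ ∑ i : Fin k, 1 := by
          refine Finset.sum_le_sum fun i _ => ?_
          refine le_trans (MvPolynomial.totalDegree_sub _ _) ?_
          refine max_le ?_ ?_
          · refine le_trans (MvPolynomial.totalDegree_finset_sum _ _) ?_
            apply Finset.sup_le
            intro j _
            calc (MvPolynomial.C (A i j) * MvPolynomial.X j).totalDegree
                ≤ (MvPolynomial.C (A i j)).totalDegree + (MvPolynomial.X j).totalDegree :=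
                  MvPolynomial.totalDegree_mul _ _
              _ ≤ 1 := by rw [MvPolynomial.totalDegree_C, MvPolynomial.totalDegree_X]
          · rw [MvPolynomial.totalDegree_C]; omega
      _ = k := by simp
      _ < n := hkn
  have heval : ∀ S : Finset (Fin n),
      MvPolynomial.eval (fun j => if j ∈ S then (1:F) else 0) p
        = ∏ i, (A.mulVec (fun j => if j ∈ S then (1:F) else 0) i - b i) := by
    intro S
    rw [hp, map_prod]
    refine Finset.prod_congr rfl fun i _ => ?_
    rw [map_sub, MvPolynomial.eval_C, map_sum]
    simp [Matrix.mulVec, dotProduct]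
  by_contra hcon
  push_neg at hcon
  have hzero : ∀ S : Finset (Fin n), S ≠ ∅ →
      MvPolynomial.eval (fun j => if j ∈ S then (1:F) else 0) p = 0 := by
    intro S hS
    set x : Fin n → Bool := fun j => decide (j ∈ S) with hx
    have hxne : x ≠ (fun _ => false) := by
      intro hc
      apply hS
      ext j
      simp only [Finset.notMem_empty, iff_false]
      intro hj
      have := congrFun hc j
      simp [hx, hj] at this
    obtain ⟨i, hi⟩ := hcon x hxne
    rw [heval S]
    refine Finset.prod_eq_zero (Finset.mem_univ i) ?_
    have hfeq : (fun j => if j ∈ S then (1:F) else 0) = (fun j => if x j then (1:F) else 0) := by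
      funext j; simp [hx]
    rw [hfeq, hi, sub_self]
  have hsum := aux_cube_sum F n p hdeg
  have hsplit : ∑ S : Finset (Fin n),
      (-1 : F) ^ S.card * MvPolynomial.eval (fun j => if j ∈ S then 1 else 0) p
        = (-1 : F) ^ (∅ : Finset (Fin n)).card
          * MvPolynomial.eval (fun j => if j ∈ (∅ : Finset (Fin n)) then (1:F) else 0) p := by
    refine Finset.sum_eq_single ∅ ?_ ?_
    · intro S _ hS
      rw [hzero S hS, mul_zero]
    · intro h; exact absurd (Finset.mem_univ ∅) h
  rw [hsplit] at hsum
  simp only [Finset.card_empty, pow_zero, one_mul] at hsum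
  rw [heval ∅] at hsum
  have : ∀ i : Fin k, A.mulVec (fun j => if j ∈ (∅ : Finset (Fin n)) then (1:F) else 0) i - b i ≠ 0 := by
    intro i
    have : A.mulVec (fun j => if j ∈ (∅ : Finset (Fin n)) then (1:F) else 0) i = 0 := by
      simp [Matrix.mulVec, dotProduct]
    rw [this, zero_sub, neg_ne_zero]
    exact hb i
  exact (Finset.prod_ne_zero_iff.mpr fun i _ => this i) hsum
end

section
/- Let F be a field, let 0 ≤ k < n, let A be a k×n matrix over F, let b ∈ F^k, and let α ∈ {0,1}^n ⊆ F^n satisfy (Aα)_i ≠ b_i for every i ∈ [k]. Then for every subset I ⊆ [n] with |I| = k+1 there exists a nonzero Boolean vector β ∈ {0,1}^n with {j ∈ [n] : β_j = 1} ⊆ I such that the coordinatewise XOR α ⊕ β (viewed as a vector in {0,1}^n ⊆ F^n) satisfies (A(α ⊕ β))_i ≠ b_i for every i ∈ [k]. -/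
open Finset

/-- Alternating sign sum over the powerset of a nonempty finset vanishes (field version). -/
lemma sign_sum_zero {ι F : Type*} [Field F] [DecidableEq ι] {s : Finset ι}
    (hs : s.Nonempty) : ∑ t ∈ s.powerset, (-1 : F) ^ t.card = 0 := by
  have h := Finset.sum_powerset_neg_one_pow_card_of_nonempty (x := s) hs
  have : ((∑ m ∈ s.powerset, (-1 : ℤ) ^ m.card : ℤ) : F) = 0 := by rw [h]; simp
  push_cast at this
  exact this

/-- Key lemma: the signed sum over subsets `t` of `s` of a product of fewer than `s.card`
affine functions of the indicator of `t` vanishes. -/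
lemma key_lemma {κ ι F : Type*} [Field F] [DecidableEq κ] [DecidableEq ι] :
    ∀ (N : ℕ) (I : Finset κ), I.card ≤ N → ∀ (s : Finset ι), I.card < s.card →
    ∀ (L : κ → ι → F) (d : κ → F),
      ∑ t ∈ s.powerset, (-1 : F) ^ t.card * ∏ i ∈ I, ((∑ j ∈ t, L i j) - d i) = 0 := by
  intro N
  induction N with
  | zero =>
    intro I hI s hs L d
    have hIe : I = ∅ := Finset.card_eq_zero.mp (Nat.le_zero.mp hI)
    subst hIe
    simpa using sign_sum_zero (F := F) (Finset.card_pos.mp (by omega))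
  | succ N ih =>
    intro I hI s hs L d
    rcases I.eq_empty_or_nonempty with rfl | hIne
    · simpa using sign_sum_zero (F := F) (Finset.card_pos.mp (by omega))
    obtain ⟨j0, hj0⟩ : s.Nonempty := Finset.card_pos.mp (by omega)
    set s' := s.erase j0 with hs'
    have hj0s' : j0 ∉ s' := Finset.notMem_erase _ _
    have hins : insert j0 s' = s := Finset.insert_erase hj0
    have hs'card : s'.card + 1 = s.card := Finset.card_erase_add_one hj0
    rw [← hins, Finset.sum_powerset_insert hj0s']
    rw [← Finset.sum_add_distrib]
    have hterm : ∀ t ∈ s'.powerset,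
        (-1 : F) ^ t.card * ∏ i ∈ I, ((∑ j ∈ t, L i j) - d i)
          + (-1 : F) ^ (insert j0 t).card * ∏ i ∈ I, ((∑ j ∈ insert j0 t, L i j) - d i)
        = ∑ u ∈ I.powerset.erase ∅,
            (-(∏ i ∈ u, L i j0)) *
              ((-1 : F) ^ t.card * ∏ i ∈ I \ u, ((∑ j ∈ t, L i j) - d i)) := by
      intro t ht
      rw [Finset.mem_powerset] at ht
      have hj0t : j0 ∉ t := fun h => hj0s' (ht h)
      have hcard : (insert j0 t).card = t.card + 1 := Finset.card_insert_of_notMem hj0t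
      have hsum : ∀ i, (∑ j ∈ insert j0 t, L i j) = L i j0 + ∑ j ∈ t, L i j := by
        intro i; rw [Finset.sum_insert hj0t]
      have hprod : ∏ i ∈ I, ((∑ j ∈ insert j0 t, L i j) - d i)
          = ∑ u ∈ I.powerset, (∏ i ∈ u, L i j0) * ∏ i ∈ I \ u, ((∑ j ∈ t, L i j) - d i) := by
        rw [show (fun i => (∑ j ∈ insert j0 t, L i j) - d i)
            = fun i => L i j0 + ((∑ j ∈ t, L i j) - d i) from funext fun i => by
              rw [hsum i]; ring]
        exact Finset.prod_add _ _ I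
      have hempty : (∅ : Finset κ) ∈ I.powerset := Finset.mem_powerset.mpr (Finset.empty_subset I)
      rw [hprod, hcard, ← Finset.add_sum_erase _ _ hempty]
      simp only [Finset.prod_empty, Finset.sdiff_empty, one_mul]
      calc (-1 : F) ^ t.card * ∏ i ∈ I, ((∑ j ∈ t, L i j) - d i)
            + (-1 : F) ^ (t.card + 1) * ((∏ i ∈ I, ((∑ j ∈ t, L i j) - d i))
              + ∑ u ∈ I.powerset.erase ∅,
                  (∏ i ∈ u, L i j0) * ∏ i ∈ I \ u, ((∑ j ∈ t, L i j) - d i))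
          = -((-1 : F) ^ t.card * ∑ u ∈ I.powerset.erase ∅,
                  (∏ i ∈ u, L i j0) * ∏ i ∈ I \ u, ((∑ j ∈ t, L i j) - d i)) := by
            rw [pow_succ]; ring
        _ = _ := by
            rw [Finset.mul_sum, ← Finset.sum_neg_distrib]
            exact Finset.sum_congr rfl fun u _ => by ring
    rw [Finset.sum_congr rfl hterm, Finset.sum_comm]
    apply Finset.sum_eq_zero
    intro u hu
    rw [Finset.mem_erase, Finset.mem_powerset] at hu
    obtain ⟨hune, huI⟩ := hu
    have hucard : 1 ≤ u.card := Finset.card_pos.mpr (Finset.nonempty_iff_ne_empty.mpr hune)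
    have hsd : (I \ u).card = I.card - u.card := Finset.card_sdiff_of_subset huI
    have hul : u.card ≤ I.card := Finset.card_le_card huI
    have h1 : (I \ u).card ≤ N := by omega
    have h2 : (I \ u).card < s'.card := by omega
    rw [← Finset.mul_sum, ih (I \ u) h1 s' h2 L d, mul_zero]

/-- Let `F` be a field, `k < n`, `A` a `k×n` matrix over `F`, `b ∈ F^k`
and `α ∈ {0,1}ⁿ` with `(Aα)ᵢ ≠ bᵢ` for every `i`. Then for every `I ⊆ [n]` with
`|I| = k + 1` there is a nonzero Boolean vector `β` supported inside `I` such that the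
coordinatewise XOR `α ⊕ β` also satisfies `(A(α ⊕ β))ᵢ ≠ bᵢ` for every `i`. -/
theorem statement14 (F : Type) [Field F] (k n : ℕ) (hkn : k < n)
    (A : Matrix (Fin k) (Fin n) F) (b : Fin k → F) (α : Fin n → Bool)
    (hα : ∀ i, A.mulVec (fun j => if α j then 1 else 0) i ≠ b i) :
    ∀ I : Finset (Fin n), I.card = k + 1 →
      ∃ β : Fin n → Bool, β ≠ (fun _ => false) ∧ (∀ j, β j = true → j ∈ I) ∧
        ∀ i, A.mulVec (fun j => if xor (α j) (β j) then 1 else 0) i ≠ b i := by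
  intro I hI
  set L : Fin k → Fin n → F := fun i j => A i j * (1 - 2 * (if α j then 1 else 0)) with hL
  set d : Fin k → F := fun i => b i - A.mulVec (fun j => if α j then 1 else 0) i with hd
  -- main identity
  have hident : ∀ (t : Finset (Fin n)) (i : Fin k),
      A.mulVec (fun j => if xor (α j) (decide (j ∈ t)) then 1 else 0) i - b i
        = (∑ j ∈ t, L i j) - d i := by
    intro t i
    have : A.mulVec (fun j => if xor (α j) (decide (j ∈ t)) then 1 else 0) i
        = A.mulVec (fun j => if α j then 1 else 0) i + ∑ j ∈ t, L i j := by
      simp only [Matrix.mulVec, dotProduct]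
      have hsplit : (∑ j ∈ t, L i j) = ∑ j : Fin n, (if j ∈ t then L i j else 0) := by
        rw [Finset.sum_ite_mem, Finset.univ_inter]
      rw [hsplit, ← Finset.sum_add_distrib]
      apply Finset.sum_congr rfl
      intro j _
      by_cases hjt : j ∈ t <;> by_cases haj : α j <;>
        simp [hjt, haj, hL] <;> ring
    rw [this, hd]; ring
  -- suppose no good nonempty t exists
  by_contra hcon
  push_neg at hcon
  have hbad : ∀ t ∈ I.powerset.erase ∅, ∏ i : Fin k, ((∑ j ∈ t, L i j) - d i) = 0 := by
    intro t ht
    rw [Finset.mem_erase, Finset.mem_powerset] at ht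
    obtain ⟨htne, htI⟩ := ht
    obtain ⟨j1, hj1⟩ := Finset.nonempty_iff_ne_empty.mpr htne
    set β : Fin n → Bool := fun j => decide (j ∈ t) with hβ
    have h1 : β ≠ (fun _ => false) := by
      intro h
      have := congrFun h j1
      simp [hβ, hj1] at this
    have h2 : ∀ j, β j = true → j ∈ I := by
      intro j hj
      simp only [hβ, decide_eq_true_eq] at hj
      exact htI hj
    obtain ⟨i, hi⟩ := hcon β h1 h2
    apply Finset.prod_eq_zero (Finset.mem_univ i)
    rw [← hident t i, hi]
    ring
  have hzero := key_lemma k (Finset.univ : Finset (Fin k))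
    (le_of_eq (Finset.card_fin k)) I (by rw [hI, Finset.card_fin]; omega) L d
  have hempty : (∅ : Finset (Fin n)) ∈ I.powerset := Finset.mem_powerset.mpr (Finset.empty_subset I)
  rw [← Finset.add_sum_erase _ _ hempty] at hzero
  rw [Finset.sum_eq_zero (fun t ht => by rw [hbad t ht, mul_zero]), add_zero] at hzero
  simp only [Finset.card_empty, pow_zero, one_mul, Finset.sum_empty, zero_sub] at hzero
  have : ∏ i : Fin k, (-d i) ≠ 0 := by
    apply Finset.prod_ne_zero_iff.mpr
    intro i _
    simp only [hd, neg_sub]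
    intro h
    exact hα i (sub_eq_zero.mp h)
  exact this hzero
end

section
/- Let F be a field, let A be a k×n matrix over F, and let b ∈ F^k. If there exists a vector α ∈ {0,1}^n ⊆ F^n with (Aα)_i ≠ b_i for every i ∈ [k], then there exists such a vector α having at most k coordinates equal to 1. -/
open scoped Classical

open Finset

namespace Statement15Aux

variable {F : Type} [Field F] {k n : ℕ}

/-- Sum over `U` with `R ⊆ U ⊆ T` equals sum over `W ⊆ T \ R` of `φ (R ∪ W)`. -/
lemma sum_between (R T : Finset (Fin n)) (hRT : R ⊆ T) (φ : Finset (Fin n) → F) :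
    ∑ U ∈ T.powerset.filter (fun U => R ⊆ U), φ U
      = ∑ W ∈ (T \ R).powerset, φ (R ∪ W) := by
  refine Finset.sum_nbij' (fun U => U \ R) (fun W => R ∪ W) ?_ ?_ ?_ ?_ ?_
  · intro U hU
    simp only [mem_filter, mem_powerset] at hU ⊢
    exact sdiff_subset_sdiff hU.1 (le_refl R)
  · intro W hW
    simp only [mem_powerset] at hW
    simp only [mem_filter, mem_powerset]
    constructor
    · exact union_subset hRT (hW.trans (sdiff_subset))
    · exact subset_union_left
  · intro U hU
    simp only [mem_filter, mem_powerset] at hU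
    exact union_sdiff_of_subset hU.2
  · intro W hW
    simp only [mem_powerset] at hW
    exact union_sdiff_cancel_left (disjoint_of_subset_right hW disjoint_sdiff)
  · intro U hU
    simp only [mem_filter, mem_powerset] at hU
    exact (congrArg φ (union_sdiff_of_subset hU.2)).symm

/-- Key vanishing sum : if `R ⊊ T` then `∑_{R ⊆ U ⊆ T} (-1)^{|U \ R|} = 0`. -/
lemma key_sum (R T : Finset (Fin n)) (hRT : R ⊆ T) (hne : R ≠ T) :
    ∑ U ∈ T.powerset.filter (fun U => R ⊆ U), ((-1 : F)) ^ (U \ R).card = 0 := by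
  rw [sum_between R T hRT]
  have h1 : ∀ W ∈ (T \ R).powerset, ((-1 : F)) ^ ((R ∪ W) \ R).card = (-1 : F) ^ W.card := by
    intro W hW
    simp only [mem_powerset] at hW
    rw [union_sdiff_cancel_left (disjoint_of_subset_right hW disjoint_sdiff)]
  rw [Finset.sum_congr rfl h1]
  have hne' : T \ R ≠ ∅ := by
    intro h
    exact hne (subset_antisymm hRT (by rwa [sdiff_eq_empty_iff_subset] at h))
  have hcast : ∑ W ∈ (T \ R).powerset, ((-1 : F)) ^ W.card
      = ((∑ W ∈ (T \ R).powerset, ((-1 : ℤ)) ^ W.card : ℤ) : F) := by push_cast; rfl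
  rw [hcast, Finset.sum_powerset_neg_one_pow_card, if_neg hne']
  simp

/-- The other vanishing sum: `∑_{R ⊆ U ⊆ T} (-1)^{|T \ U|} = 0` when `R ⊊ T`. -/
lemma key_sum' (R T : Finset (Fin n)) (hRT : R ⊆ T) (hne : R ≠ T) :
    ∑ U ∈ T.powerset.filter (fun U => R ⊆ U), ((-1 : F)) ^ (T \ U).card = 0 := by
  have h1 : ∀ U ∈ T.powerset.filter (fun U => R ⊆ U),
      ((-1 : F)) ^ (T \ U).card = (-1 : F) ^ (T \ R).card * (-1 : F) ^ (U \ R).card := by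
    intro U hU
    simp only [mem_filter, mem_powerset] at hU
    have hcard : (T \ U).card + (U \ R).card = (T \ R).card := by
      have h1 := card_le_card hU.1
      have h2 := card_le_card hU.2
      rw [card_sdiff_of_subset hU.1, card_sdiff_of_subset hU.2, card_sdiff_of_subset (hU.2.trans hU.1)]
      omega
    have : ((-1 : F)) ^ ((T \ U).card + (U \ R).card) = (-1 : F) ^ (T \ R).card := by
      rw [hcard]
    rw [pow_add] at this
    calc ((-1 : F)) ^ (T \ U).card
        = ((-1 : F)) ^ (T \ U).card * (((-1 : F)) ^ (U \ R).card * ((-1 : F)) ^ (U \ R).card) := by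
          rw [← pow_add, ← two_mul, pow_mul]; simp
      _ = (((-1 : F)) ^ (T \ U).card * ((-1 : F)) ^ (U \ R).card) * ((-1 : F)) ^ (U \ R).card := by ring
      _ = (-1 : F) ^ (T \ R).card * (-1 : F) ^ (U \ R).card := by rw [this]
  rw [Finset.sum_congr rfl h1, ← Finset.mul_sum, key_sum R T hRT hne, mul_zero]

/-- The product `∏ i ((A·1_U)_i - b_i)`. -/
noncomputable def P (A : Matrix (Fin k) (Fin n) F) (b : Fin k → F) (U : Finset (Fin n)) : F :=
  ∏ i, ((∑ j ∈ U, A i j) - b i)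

/-- Möbius coefficients of `P`. -/
noncomputable def g (A : Matrix (Fin k) (Fin n) F) (b : Fin k → F) (T : Finset (Fin n)) : F :=
  ∑ U ∈ T.powerset, ((-1 : F)) ^ (T \ U).card * P A b U

/-- Möbius inversion: `P T = ∑_{U ⊆ T} g U`. -/
lemma P_eq_sum_g (A : Matrix (Fin k) (Fin n) F) (b : Fin k → F) (T : Finset (Fin n)) :
    P A b T = ∑ U ∈ T.powerset, g A b U := by
  have swap : ∑ U ∈ T.powerset, ∑ V ∈ U.powerset, ((-1 : F)) ^ (U \ V).card * P A b V
      = ∑ V ∈ T.powerset, ∑ U ∈ T.powerset.filter (fun U => V ⊆ U),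
          ((-1 : F)) ^ (U \ V).card * P A b V := by
    refine Finset.sum_comm' ?_
    intro U V
    simp only [mem_filter, mem_powerset]
    constructor
    · rintro ⟨h1, h2⟩; exact ⟨⟨h1, h2⟩, h2.trans h1⟩
    · rintro ⟨⟨h1, h2⟩, h3⟩; exact ⟨h1, h2⟩
  unfold g
  rw [swap]
  rw [Finset.sum_eq_single_of_mem T (mem_powerset_self T)]
  · rw [← Finset.sum_mul]
    have : T.powerset.filter (fun U => T ⊆ U) = {T} := by
      ext U
      simp only [mem_filter, mem_powerset, mem_singleton]
      constructor
      · rintro ⟨h1, h2⟩; exact subset_antisymm h1 h2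
      · rintro rfl; exact ⟨subset_rfl, subset_rfl⟩
    rw [this]
    simp
  · intro V hV hVT
    rw [← Finset.sum_mul, key_sum V T (mem_powerset.mp hV) hVT, zero_mul]

/-- Degree bound: `g T = 0` for `|T| > k`. -/
lemma g_eq_zero (A : Matrix (Fin k) (Fin n) F) (b : Fin k → F) (T : Finset (Fin n))
    (hT : k < T.card) : g A b T = 0 := by
  -- Expand P U as a sum over q : Fin k → Option (Fin n)
  have hP : ∀ U : Finset (Fin n), P A b U
      = ∑ q : Fin k → Option (Fin n),
          (if (∀ i j, q i = some j → j ∈ U) then (1 : F) else 0)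
            * ∏ i, (Option.elim (q i) (-b i) (fun j => A i j)) := by
    intro U
    have step1 : ∀ i : Fin k, (∑ j ∈ U, A i j) - b i
        = ∑ o : Option (Fin n), Option.elim o (-b i) (fun j => if j ∈ U then A i j else 0) := by
      intro i
      rw [Fintype.sum_option]
      simp only [Option.elim]
      rw [Finset.sum_ite_mem, univ_inter]
      ring
    unfold P
    rw [Finset.prod_congr rfl (fun i _ => step1 i)]
    rw [Finset.prod_univ_sum (fun _ => (univ : Finset (Option (Fin n))))]
    rw [Fintype.piFinset_univ]
    refine Finset.sum_congr rfl ?_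
    intro q _
    have : ∀ i : Fin k, Option.elim (q i) (-b i) (fun j => if j ∈ U then A i j else 0)
        = (if (∀ j, q i = some j → j ∈ U) then (1 : F) else 0)
            * Option.elim (q i) (-b i) (fun j => A i j) := by
      intro i
      cases hq : q i with
      | none => simp [hq]
      | some j =>
        simp only [Option.elim, hq]
        by_cases hj : j ∈ U
        · simp [hj]
        · have : ¬ (∀ j', some j = some j' → j' ∈ U) := by
            intro hc; exact hj (hc j rfl)
          simp [hj, this]
    rw [Finset.prod_congr rfl (fun i _ => this i), Finset.prod_mul_distrib,
      Finset.prod_boole]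
    simp only [Finset.mem_univ, forall_const]
  unfold g
  have step : ∀ U ∈ T.powerset,
      ((-1 : F)) ^ (T \ U).card * P A b U
        = ∑ q : Fin k → Option (Fin n),
            (∏ i, (Option.elim (q i) (-b i) (fun j => A i j))) *
              (((-1 : F)) ^ (T \ U).card *
                (if (∀ i j, q i = some j → j ∈ U) then (1 : F) else 0)) := by
    intro U _
    rw [hP U, Finset.mul_sum]
    refine Finset.sum_congr rfl ?_
    intro q _
    ring
  rw [Finset.sum_congr rfl step, Finset.sum_comm]
  refine Finset.sum_eq_zero ?_
  intro q _
  rw [← Finset.mul_sum]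

  -- the "support" of q
  set R : Finset (Fin n) := univ.filter (fun j => ∃ i, q i = some j) with hR
  have hcond : ∀ U : Finset (Fin n), (∀ i j, q i = some j → j ∈ U) ↔ R ⊆ U := by
    intro U
    constructor
    · intro h j hj
      rw [hR, mem_filter] at hj
      obtain ⟨i, hi⟩ := hj.2
      exact h i j hi
    · intro h i j hij
      exact h (by rw [hR, mem_filter]; exact ⟨mem_univ j, ⟨i, hij⟩⟩)
  have hinner : ∑ U ∈ T.powerset, ((-1 : F)) ^ (T \ U).card *
      (if (∀ i j, q i = some j → j ∈ U) then (1 : F) else 0) = 0 := by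
    have : ∀ U ∈ T.powerset, ((-1 : F)) ^ (T \ U).card *
        (if (∀ i j, q i = some j → j ∈ U) then (1 : F) else 0)
        = if R ⊆ U then ((-1 : F)) ^ (T \ U).card else 0 := by
      intro U _
      by_cases hRU : R ⊆ U
      · rw [if_pos ((hcond U).mpr hRU), if_pos hRU, mul_one]
      · rw [if_neg (fun hc => hRU ((hcond U).mp hc)), if_neg hRU, mul_zero]
    rw [Finset.sum_congr rfl this, Finset.sum_ite, Finset.sum_const_zero, add_zero]
    by_cases hRT : R ⊆ T
    · -- R has at most k elements, so R ≠ T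
      have hRcard : R.card ≤ k := by
        have hsub : R ⊆ univ.biUnion (fun i : Fin k => (q i).toFinset) := by
          intro j hj
          rw [hR, mem_filter] at hj
          obtain ⟨i, hi⟩ := hj.2
          exact mem_biUnion.mpr ⟨i, mem_univ i, by simp [hi]⟩
        calc R.card ≤ (univ.biUnion (fun i : Fin k => (q i).toFinset)).card :=
              card_le_card hsub
          _ ≤ ∑ i : Fin k, ((q i).toFinset).card := card_biUnion_le
          _ ≤ ∑ _i : Fin k, 1 := by
              refine Finset.sum_le_sum ?_
              intro i _
              cases q i <;> simp
          _ = k := by simp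
      have hne : R ≠ T := by
        intro hc; rw [hc] at hRcard; omega
      exact key_sum' R T hRT hne
    · have : T.powerset.filter (fun U => R ⊆ U) = ∅ := by
        ext U
        simp only [mem_filter, mem_powerset, notMem_empty, iff_false, not_and]
        intro hUT hRU
        exact hRT (hRU.trans hUT)
      rw [this, Finset.sum_empty]
  rw [hinner, mul_zero]

end Statement15Aux

open Statement15Aux in
/-- Let `F` be a field, `A` a `k×n` matrix over `F` and `b ∈ F^k`.
If some Boolean vector `α ∈ {0,1}ⁿ ⊆ Fⁿ` satisfies `(Aα)ᵢ ≠ bᵢ` for every `i ∈ [k]`, then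
some such Boolean vector has at most `k` coordinates equal to `1`. -/
theorem statement15 (F : Type) [Field F] (k n : ℕ)
    (A : Matrix (Fin k) (Fin n) F) (b : Fin k → F)
    (h : ∃ α : Fin n → Bool, ∀ i, A.mulVec (fun j => if α j then 1 else 0) i ≠ b i) :
    ∃ α : Fin n → Bool, (∀ i, A.mulVec (fun j => if α j then 1 else 0) i ≠ b i) ∧
      (Finset.univ.filter fun j => α j = true).card ≤ k := by
  classical
  obtain ⟨α, hα⟩ := h
  have hmul : ∀ (β : Fin n → Bool) (i : Fin k),
      A.mulVec (fun j => if β j then 1 else 0) i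
        = ∑ j ∈ Finset.univ.filter (fun j => β j = true), A i j := by
    intro β i
    rw [Matrix.mulVec, dotProduct]
    rw [Finset.sum_filter]
    refine Finset.sum_congr rfl ?_
    intro j _
    by_cases hb : β j = true <;> simp [hb]
  set S := Finset.univ.filter (fun j => α j = true) with hS
  have hPS : P A b S ≠ 0 := by
    unfold P
    rw [Finset.prod_ne_zero_iff]
    intro i _
    have := hα i
    rw [hmul α i] at this
    exact sub_ne_zero.mpr this
  -- some Möbius coefficient is nonzero
  have hex : ∃ U : Finset (Fin n), g A b U ≠ 0 := by
    rw [P_eq_sum_g] at hPS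
    obtain ⟨U, _, hU⟩ := Finset.exists_ne_zero_of_sum_ne_zero hPS
    exact ⟨U, hU⟩
  -- pick one of minimal cardinality
  have hne : (Finset.univ.filter (fun U : Finset (Fin n) => g A b U ≠ 0)).Nonempty := by
    obtain ⟨U, hU⟩ := hex
    exact ⟨U, by simp [hU]⟩
  obtain ⟨T, hTmem, hTmin⟩ := Finset.exists_min_image _ Finset.card hne
  rw [Finset.mem_filter] at hTmem
  have hgT : g A b T ≠ 0 := hTmem.2
  have hTk : T.card ≤ k := by
    by_contra hc
    exact hgT (g_eq_zero A b T (by omega))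
  -- all proper subsets of T have vanishing g, so P T = g T ≠ 0
  have hPT : P A b T ≠ 0 := by
    rw [P_eq_sum_g]
    rw [Finset.sum_eq_single_of_mem T (Finset.mem_powerset_self T)]
    · exact hgT
    · intro V hV hVT
      by_contra hc
      have hVmem : V ∈ Finset.univ.filter (fun U : Finset (Fin n) => g A b U ≠ 0) := by
        simp [hc]
      have := hTmin V hVmem
      have hVsub : V ⊆ T := Finset.mem_powerset.mp hV
      have : V.card < T.card := Finset.card_lt_card (ssubset_of_subset_of_ne hVsub hVT)
      omega
  refine ⟨fun j => decide (j ∈ T), ?_, ?_⟩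
  · intro i
    have hfilter : Finset.univ.filter (fun j => decide (j ∈ T) = true) = T := by
      ext j; simp
    rw [hmul, hfilter]
    have := (Finset.prod_ne_zero_iff.mp hPT) i (Finset.mem_univ i)
    exact sub_ne_zero.mp this
  · have hfilter : Finset.univ.filter (fun j => decide (j ∈ T) = true) = T := by
      ext j; simp
    rw [hfilter]
    exact hTk
end

section
/- Let F be a field, let m ≥ 1 and n ≥ 1, and consider variables x_{i,j} indexed by pairs (i,j) ∈ [m]×[n]. Call a Boolean assignment α ∈ {0,1}^{[m]×[n]} proper if for every j ∈ [n] and all i ≠ i' in [m] it is not the case that both α_{i,j} = 1 and α_{i',j} = 1. Let g_1,…,g_k be affine polynomials over F in these variables with k ≤ (n−1)/2, and say α is a solution of the system of non-equalities if g_t(α) ≠ 0 for every t ∈ [k]. If the system has a proper solution, then for every i_0 ∈ [m] the system has a proper solution α with α_{i_0,j} = 1 for some j ∈ [n]. -/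
open scoped Classical

section Aux

variable {F : Type} [Field F]

lemma keyC {ι : Type} [DecidableEq ι] :
    ∀ (k : ℕ) (s : Finset ι), k < s.card → ∀ (a : Fin k → F) (d : Fin k → ι → F),
      ∑ T ∈ s.powerset, (-1 : F) ^ T.card * ∏ t, (a t + ∑ j ∈ T, d t j) = 0 := by
  intro k
  induction k with
  | zero =>
      intro s hs a d
      have hne : s ≠ ∅ := by
        intro h; simp [h] at hs
      have hcast : ∑ T ∈ s.powerset, (-1 : F) ^ T.card
          = ((∑ T ∈ s.powerset, (-1 : ℤ) ^ T.card : ℤ) : F) := by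
        push_cast; rfl
      simp [hcast, Finset.sum_powerset_neg_one_pow_card, hne]
  | succ k ih =>
      intro s hs a d
      have hk' : k < s.card := Nat.lt_of_succ_lt hs
      set A : Fin k → F := fun t => a t.castSucc with hA
      set D : Fin k → ι → F := fun t => d t.castSucc with hD
      set aL := a (Fin.last k) with haL
      set dL := d (Fin.last k) with hdL
      set P : Finset ι → F := fun T => ∏ t : Fin k, (A t + ∑ j ∈ T, D t j) with hP
      calc ∑ T ∈ s.powerset, (-1:F)^T.card * ∏ t, (a t + ∑ j ∈ T, d t j)
          = ∑ T ∈ s.powerset, ((-1:F)^T.card * P T * aL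
              + ∑ j ∈ s, (if j ∈ T then (-1:F)^T.card * P T * dL j else 0)) := by
            apply Finset.sum_congr rfl
            intro T hT
            have hTs : T ⊆ s := Finset.mem_powerset.mp hT
            have hsum : ∑ j ∈ T, dL j = ∑ j ∈ s, (if j ∈ T then dL j else 0) := by
              rw [Finset.sum_ite_mem, Finset.inter_eq_right.mpr hTs]
            rw [Fin.prod_univ_castSucc
              (f := fun t => (a t + ∑ j ∈ T, d t j))]
            simp only [← hA, ← hD, ← haL, ← hdL, ← hP]
            have hite : ∑ j ∈ s, (if j ∈ T then (-1:F)^T.card * P T * dL j else 0)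
                = (-1:F)^T.card * P T * ∑ j ∈ s, (if j ∈ T then dL j else 0) := by
              rw [Finset.mul_sum]
              apply Finset.sum_congr rfl
              intro j _
              by_cases hjT : j ∈ T <;> simp [hjT]
            rw [hite, ← hsum]
            ring
      _ = (∑ T ∈ s.powerset, (-1:F)^T.card * P T) * aL
            + ∑ j ∈ s, ∑ T ∈ s.powerset,
                (if j ∈ T then (-1:F)^T.card * P T * dL j else 0) := by
            rw [Finset.sum_add_distrib, ← Finset.sum_mul, Finset.sum_comm]
      _ = 0 := by
            rw [ih s hk' A D, zero_mul, zero_add]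
            apply Finset.sum_eq_zero
            intro j hj
            have hj' : j ∉ s.erase j := Finset.notMem_erase j s
            have hins : insert j (s.erase j) = s := Finset.insert_erase hj
            rw [← hins, Finset.sum_powerset_insert hj']
            have h1 : ∑ T ∈ (s.erase j).powerset,
                (if j ∈ T then (-1:F)^T.card * P T * dL j else 0) = 0 := by
              apply Finset.sum_eq_zero
              intro T hT
              have : j ∉ T := fun hjT =>
                hj' (Finset.mem_powerset.mp hT hjT)
              simp [this]
            rw [h1, zero_add]
            have h2 : ∀ T ∈ (s.erase j).powerset,
                (if j ∈ insert j T then (-1:F)^(insert j T).card * P (insert j T) * dL j else 0)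
                = -(((-1:F)^T.card *
                    ∏ t : Fin k, ((A t + D t j) + ∑ j' ∈ T, D t j')) * dL j) := by
              intro T hT
              have hjT : j ∉ T := fun hjT => hj' (Finset.mem_powerset.mp hT hjT)
              rw [if_pos (Finset.mem_insert_self j T), Finset.card_insert_of_notMem hjT]
              have : P (insert j T) = ∏ t : Fin k, ((A t + D t j) + ∑ j' ∈ T, D t j') := by
                apply Finset.prod_congr rfl
                intro t _
                rw [Finset.sum_insert hjT]
                ring
              rw [this, pow_succ]
              ring
            rw [Finset.sum_congr rfl h2]
            have hcard : k < (s.erase j).card := by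
              rw [Finset.card_erase_of_mem hj]
              omega
            have hzero := ih (s.erase j) hcard (fun t => A t + D t j) D
            calc ∑ T ∈ (s.erase j).powerset,
                  -(((-1:F)^T.card * ∏ t : Fin k, (A t + D t j + ∑ j' ∈ T, D t j')) * dL j)
                = (∑ T ∈ (s.erase j).powerset,
                    (-1:F)^T.card * ∏ t : Fin k, (A t + D t j + ∑ j' ∈ T, D t j')) * (-dL j) := by
                  rw [Finset.sum_mul]
                  apply Finset.sum_congr rfl
                  intro T _
                  ring
              _ = 0 := by rw [hzero, zero_mul]


/-- If `k < n` and all `a t` are nonzero, some nonempty subset `T` of holes keeps all the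
affine values `a t + ∑_{j ∈ T} d t j` nonzero. -/
lemma existsT {k n : ℕ} (hkn : k < n) (a : Fin k → F) (d : Fin k → Fin n → F)
    (ha : ∀ t, a t ≠ 0) :
    ∃ T : Finset (Fin n), T.Nonempty ∧ ∀ t, a t + ∑ j ∈ T, d t j ≠ 0 := by
  by_contra hcon
  push_neg at hcon
  have hkey := keyC k (Finset.univ : Finset (Fin n)) (by simpa using hkn) a d
  have hsingle : ∑ T ∈ (Finset.univ : Finset (Fin n)).powerset,
      (-1:F)^T.card * ∏ t, (a t + ∑ j ∈ T, d t j) = ∏ t, a t := by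
    rw [Finset.sum_eq_single_of_mem (∅ : Finset (Fin n))
      (Finset.mem_powerset.mpr (Finset.empty_subset _))]
    · simp
    · intro T _ hTne
      obtain ⟨t, ht⟩ := hcon T (Finset.nonempty_iff_ne_empty.mpr hTne)
      rw [Finset.prod_eq_zero (Finset.mem_univ t) ht, mul_zero]
  rw [hsingle] at hkey
  exact Finset.prod_ne_zero_iff.mpr (fun t _ => ha t) hkey

end Aux

/-- Variables `x_{i,j}` are indexed by `[m] × [n]`; a Boolean assignment
`α` is proper if it never maps two distinct pigeons `i ≠ i'` to the same hole `j`. Let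
`g_1, …, g_k` be affine polynomials over a field `F` in these variables with
`k ≤ (n−1)/2` (i.e. `2k + 1 ≤ n`), and call `α` a solution if `g_t(α) ≠ 0` for every `t`.
If the system has a proper solution, then for every pigeon `i₀` it has a proper solution
`α` with `α_{i₀,j} = 1` for some hole `j`. -/
theorem statement16 (F : Type) [Field F] (m n : ℕ) (hm : 1 ≤ m) (hn : 1 ≤ n)
    (k : ℕ) (hk : 2 * k + 1 ≤ n) (g : Fin k → AffPoly (Fin m × Fin n) F)
    (h : ∃ α : Fin m × Fin n → Bool,
      (∀ (j : Fin n) (i i' : Fin m), i ≠ i' →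
        ¬(α (i, j) = true ∧ α (i', j) = true)) ∧
      ∀ t, (g t).evalB α ≠ 0) :
    ∀ i₀ : Fin m, ∃ α : Fin m × Fin n → Bool,
      (∀ (j : Fin n) (i i' : Fin m), i ≠ i' →
        ¬(α (i, j) = true ∧ α (i', j) = true)) ∧
      (∀ t, (g t).evalB α ≠ 0) ∧ ∃ j, α (i₀, j) = true := by
  obtain ⟨α, hproper, hsol⟩ := h
  intro i₀
  set δ : Fin m × Fin n → F := fun p =>
    (if p.1 = i₀ then (1:F) else 0) - (if α p then (1:F) else 0) with hδ
  set D : Fin k → Fin n → F := fun t j => ∑ i, (g t).coeff (i, j) * δ (i, j) with hD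
  have hkn : k < n := by omega
  obtain ⟨T, hTne, hT⟩ := existsT hkn (fun t => (g t).evalB α) D hsol
  set β : Fin m × Fin n → Bool := fun p =>
    if p.2 ∈ T then decide (p.1 = i₀) else α p with hβ
  have hβval : ∀ p : Fin m × Fin n,
      (if β p then (1:F) else 0)
        = (if α p then (1:F) else 0) + (if p.2 ∈ T then δ p else 0) := by
    rintro ⟨i, j⟩
    by_cases hjT : j ∈ T
    · by_cases hi : i = i₀ <;> by_cases hα : α (i, j) <;>
        simp [hβ, hδ, hjT, hi, hα]
    · simp [hβ, hδ, hjT]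
  have heval : ∀ t, (g t).evalB β = (g t).evalB α + ∑ j ∈ T, D t j := by
    intro t
    have hsum : ∑ p : Fin m × Fin n, (g t).coeff p * (if β p then (1:F) else 0)
        = (∑ p : Fin m × Fin n, (g t).coeff p * (if α p then (1:F) else 0))
          + ∑ j ∈ T, D t j := by
      calc ∑ p : Fin m × Fin n, (g t).coeff p * (if β p then (1:F) else 0)
          = ∑ p : Fin m × Fin n, ((g t).coeff p * (if α p then (1:F) else 0)
              + (g t).coeff p * (if p.2 ∈ T then δ p else 0)) := by
            apply Finset.sum_congr rfl
            intro p _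
            rw [hβval p, mul_add]
        _ = (∑ p : Fin m × Fin n, (g t).coeff p * (if α p then (1:F) else 0))
              + ∑ p : Fin m × Fin n, (g t).coeff p * (if p.2 ∈ T then δ p else 0) :=
            Finset.sum_add_distrib
        _ = (∑ p : Fin m × Fin n, (g t).coeff p * (if α p then (1:F) else 0))
              + ∑ j ∈ T, D t j := by
            congr 1
            rw [Fintype.sum_prod_type, Finset.sum_comm]
            have hinner : ∀ j : Fin n,
                ∑ i : Fin m, (g t).coeff (i, j) * (if j ∈ T then δ (i, j) else 0)
                  = if j ∈ T then D t j else 0 := by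
              intro j
              by_cases hjT : j ∈ T <;> simp [hjT, hD]
            rw [Finset.sum_congr rfl fun j _ => hinner j, Finset.sum_ite_mem,
              Finset.univ_inter]
    simp only [AffPoly.evalB, AffPoly.eval]
    rw [hsum]
    ring
  refine ⟨β, ?_, ?_, ?_⟩
  · intro j i i' hne hcontra
    by_cases hjT : j ∈ T
    · obtain ⟨h1, h2⟩ := hcontra
      simp only [hβ, hjT, if_pos, decide_eq_true_eq] at h1 h2
      exact hne (h1.trans h2.symm)
    · have h1 : β (i, j) = α (i, j) := by simp [hβ, hjT]
      have h2 : β (i', j) = α (i', j) := by simp [hβ, hjT]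
      rw [h1, h2] at hcontra
      exact hproper j i i' hne hcontra
  · intro t
    rw [heval t]
    exact hT t
  · obtain ⟨j, hjT⟩ := hTne
    exact ⟨j, by simp [hβ, hjT]⟩
end

section
/- Let n ≥ 1, let ε_1,…,ε_n ∈ {−1,1} ⊆ ℚ, let A ∈ ℚ, and let g_1,…,g_m be affine polynomials over ℚ in the variables x_1,…,x_n. Suppose there exists x ∈ {0,1}^n with g_t(x) ≠ 0 for every t ∈ [m], and suppose that every x ∈ {0,1}^n with g_t(x) ≠ 0 for every t ∈ [m] satisfies ε_1 x_1 + ⋯ + ε_n x_n = A. Then m ≥ n/4. -/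
open scoped Classical

namespace Statement17Aux

open Finset

variable {ι : Type} [DecidableEq ι]

lemma powQ (T : Finset ι) :
    (∑ S ∈ T.powerset, (-1 : ℚ) ^ S.card) = if T = ∅ then 1 else 0 := by
  have h := Finset.sum_powerset_neg_one_pow_card (x := T)
  have : ((∑ S ∈ T.powerset, (-1 : ℤ) ^ S.card : ℤ) : ℚ)
      = ∑ S ∈ T.powerset, (-1 : ℚ) ^ S.card := by push_cast; rfl
  rw [← this, h]
  split <;> norm_num

lemma sum_between (T R : Finset ι) (hR : R ⊆ T) :
    ∑ S ∈ T.powerset.filter (fun S => R ⊆ S), (-1:ℚ)^S.card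
      = (-1:ℚ)^R.card * (if R = T then 1 else 0) := by
  have key : ∑ S ∈ T.powerset.filter (fun S => R ⊆ S), (-1:ℚ)^S.card
      = ∑ U ∈ (T \ R).powerset, (-1:ℚ)^(R ∪ U).card := by
    refine Finset.sum_bij' (fun S _ => S \ R) (fun U _ => R ∪ U) ?_ ?_ ?_ ?_ ?_
    · intro S hS
      simp only [mem_filter, mem_powerset] at hS
      exact mem_powerset.2 (sdiff_subset_sdiff hS.1 (le_refl R))
    · intro U hU
      simp only [mem_powerset] at hU
      refine mem_filter.2 ⟨mem_powerset.2 ?_, subset_union_left⟩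
      exact union_subset hR (hU.trans sdiff_subset)
    · intro S hS
      simp only [mem_filter, mem_powerset] at hS
      exact union_sdiff_of_subset hS.2
    · intro U hU
      simp only [mem_powerset] at hU
      apply union_sdiff_cancel_left
      exact disjoint_of_subset_right hU sdiff_disjoint.symm
    · intro S hS
      simp only [mem_filter, mem_powerset] at hS
      rw [union_sdiff_of_subset hS.2]
  rw [key]
  have hd : ∀ U ∈ (T \ R).powerset, (-1:ℚ)^(R ∪ U).card = (-1:ℚ)^R.card * (-1:ℚ)^U.card := by
    intro U hU
    rw [card_union_of_disjoint, pow_add]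
    exact disjoint_of_subset_right (mem_powerset.1 hU) sdiff_disjoint.symm
  rw [Finset.sum_congr rfl hd, ← Finset.mul_sum, powQ]
  congr 1
  by_cases h : R = T
  · simp [h, sdiff_eq_empty_iff_subset.2 (le_refl T)]
  · have : ¬ (T \ R = ∅) := by
      intro he
      exact h (subset_antisymm hR (sdiff_eq_empty_iff_subset.1 he))
    simp [h, this]

lemma inv_transform (f : Finset ι → ℚ) (T : Finset ι) :
    ∑ S ∈ T.powerset, (-1:ℚ)^S.card * (∑ R ∈ S.powerset, (-1:ℚ)^R.card * f R) = f T := by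
  have step1 : ∀ S ∈ T.powerset,
      (-1:ℚ)^S.card * (∑ R ∈ S.powerset, (-1:ℚ)^R.card * f R)
      = ∑ R ∈ T.powerset, (if R ⊆ S then (-1:ℚ)^S.card * ((-1:ℚ)^R.card * f R) else 0) := by
    intro S hS
    rw [Finset.mul_sum]
    rw [show (∑ R ∈ S.powerset, (-1:ℚ)^S.card * ((-1:ℚ)^R.card * f R))
        = ∑ R ∈ S.powerset, (if R ⊆ S then (-1:ℚ)^S.card * ((-1:ℚ)^R.card * f R) else 0) from
      Finset.sum_congr rfl fun R hR => by simp [mem_powerset.1 hR]]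
    exact Finset.sum_subset (powerset_mono.2 (mem_powerset.1 hS))
      (fun R _ hnR => by simp only [mem_powerset] at hnR; simp [hnR])
  rw [Finset.sum_congr rfl step1, Finset.sum_comm]
  have step2 : ∀ R ∈ T.powerset,
      (∑ S ∈ T.powerset, if R ⊆ S then (-1:ℚ)^S.card * ((-1:ℚ)^R.card * f R) else 0)
      = if R = T then f R else 0 := by
    intro R hR
    have : (∑ S ∈ T.powerset, if R ⊆ S then (-1:ℚ)^S.card * ((-1:ℚ)^R.card * f R) else 0)
        = ∑ S ∈ T.powerset.filter (fun S => R ⊆ S), (-1:ℚ)^S.card * ((-1:ℚ)^R.card * f R) := by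
      rw [Finset.sum_filter]
    rw [this, ← Finset.sum_mul, sum_between T R (mem_powerset.1 hR)]
    have hsq : (-1:ℚ)^R.card * (-1:ℚ)^R.card = 1 := by
      rw [← mul_pow]; norm_num
    by_cases h : R = T
    · subst h; rw [if_pos rfl, if_pos rfl, mul_one, ← mul_assoc, hsq, one_mul]
    · simp [h]
  rw [Finset.sum_congr rfl step2, Finset.sum_ite_eq' T.powerset T]
  simp

lemma vanish {τ : Type} (b : τ → ι → ℚ) (u : Finset τ) :
    ∀ (c : τ → ℚ) (T : Finset ι), u.card < T.card →
    ∑ S ∈ T.powerset, (-1:ℚ)^S.card * ∏ t ∈ u, (c t + ∑ i ∈ S, b t i) = 0 := by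
  induction u using Finset.cons_induction with
  | empty =>
    intro c T hT
    simp only [prod_empty, mul_one]
    rw [powQ]
    have hne : T ≠ ∅ := by rintro rfl; simp at hT
    simp [hne]
  | cons a u' ha IH =>
    intro c T hT
    have hT' : u'.card < T.card := by rw [card_cons] at hT; omega
    have expand : ∀ S ∈ T.powerset,
        (-1:ℚ)^S.card * ∏ t ∈ cons a u' ha, (c t + ∑ i ∈ S, b t i)
        = c a * ((-1:ℚ)^S.card * ∏ t ∈ u', (c t + ∑ i ∈ S, b t i))
          + ∑ i ∈ T, (if i ∈ S then
              (-1:ℚ)^S.card * (b a i * ∏ t ∈ u', (c t + ∑ j ∈ S, b t j)) else 0) := by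
      intro S hS
      rw [prod_cons]
      have hsub : (∑ i ∈ S, b a i) = ∑ i ∈ T, (if i ∈ S then b a i else 0) := by
        rw [Finset.sum_ite_mem, Finset.inter_eq_right.2 (mem_powerset.1 hS)]
      rw [hsub, add_mul, mul_add, Finset.sum_mul, Finset.mul_sum]
      congr 1
      · ring
      · refine Finset.sum_congr rfl fun i _ => ?_
        split_ifs with h
        · ring
        · ring
    rw [Finset.sum_congr rfl expand, Finset.sum_add_distrib, ← Finset.mul_sum, IH c T hT',
      mul_zero, zero_add, Finset.sum_comm]
    refine Finset.sum_eq_zero fun i hi => ?_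
    rw [show T.powerset = (insert i (T.erase i)).powerset by rw [insert_erase hi]]
    rw [Finset.sum_powerset_insert (notMem_erase i T)]
    have h1 : (∑ S ∈ (T.erase i).powerset, (if i ∈ S then
        (-1:ℚ)^S.card * (b a i * ∏ t ∈ u', (c t + ∑ j ∈ S, b t j)) else 0)) = 0 := by
      refine Finset.sum_eq_zero fun S hS => ?_
      have : i ∉ S := fun h => (notMem_erase i T) (mem_powerset.1 hS h)
      simp [this]
    rw [h1, zero_add]
    have h2 : ∀ S ∈ (T.erase i).powerset,
        (if i ∈ insert i S then
          (-1:ℚ)^(insert i S).card * (b a i * ∏ t ∈ u', (c t + ∑ j ∈ insert i S, b t j)) else 0)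
        = (-(b a i)) * ((-1:ℚ)^S.card * ∏ t ∈ u', ((c t + b t i) + ∑ j ∈ S, b t j)) := by
      intro S hS
      have hiS : i ∉ S := fun h => (notMem_erase i T) (mem_powerset.1 hS h)
      rw [if_pos (mem_insert_self i S), card_insert_of_notMem hiS, pow_succ]
      have hc : ∀ t ∈ u', c t + ∑ j ∈ insert i S, b t j = (c t + b t i) + ∑ j ∈ S, b t j := by
        intro t _; rw [Finset.sum_insert hiS]; ring
      rw [Finset.prod_congr rfl hc]; ring
    rw [Finset.sum_congr rfl h2, ← Finset.mul_sum,
      IH (fun t => c t + b t i) (T.erase i) (by rw [card_erase_of_mem hi]; rw [card_cons] at hT; omega), mul_zero]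

lemma main_lemma {ι : Type} [Fintype ι] [DecidableEq ι] (m k : ℕ)
    (b : Fin m → ι → ℚ) (c : Fin m → ℚ) (S₀ : Finset ι)
    (h0 : (∏ t, (c t + ∑ i ∈ S₀, b t i)) ≠ 0)
    (hk : ∀ S : Finset ι, (∏ t, (c t + ∑ i ∈ S, b t i)) ≠ 0 → S.card = k) :
    k ≤ m := by
  set f : Finset ι → ℚ := fun S => ∏ t, (c t + ∑ i ∈ S, b t i) with hf
  set G : Finset ι → ℚ := fun T => ∑ S ∈ T.powerset, (-1:ℚ)^S.card * f S with hG
  have hg : ∀ T : Finset ι, m < T.card → G T = 0 := by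
    intro T hT
    have := vanish b (Finset.univ : Finset (Fin m)) c T (by simpa using hT)
    simpa [hG, hf] using this
  have hinv : ∀ T : Finset ι, ∑ S ∈ T.powerset, (-1:ℚ)^S.card * G S = f T :=
    fun T => inv_transform f T
  have hne : (Finset.univ.filter (fun T : Finset ι => G T ≠ 0)).Nonempty := by
    by_contra h
    rw [Finset.not_nonempty_iff_eq_empty, Finset.filter_eq_empty_iff] at h
    have hz : ∀ T : Finset ι, G T = 0 := fun T => not_not.1 (h (Finset.mem_univ T))
    have := hinv S₀
    rw [Finset.sum_eq_zero (fun S _ => by rw [hz S, mul_zero])] at this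
    exact h0 this.symm
  obtain ⟨T, hTmem, hmin⟩ := Finset.exists_min_image _ Finset.card hne
  have hTne : G T ≠ 0 := (Finset.mem_filter.1 hTmem).2
  have hfT : f T = (-1:ℚ)^T.card * G T := by
    rw [← hinv T]
    rw [Finset.sum_eq_single_of_mem T (Finset.mem_powerset_self T)]
    intro S hS hST
    have hzS : G S = 0 := by
      by_contra hGS
      have hSmem : S ∈ Finset.univ.filter (fun T : Finset ι => G T ≠ 0) := by
        simp [hGS]
      have := hmin S hSmem
      have hlt : S.card < T.card :=
        Finset.card_lt_card (lt_of_le_of_ne (Finset.mem_powerset.1 hS) hST)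
      omega
    rw [hzS, mul_zero]
  have hfTne : f T ≠ 0 := by
    rw [hfT]
    exact mul_ne_zero (pow_ne_zero _ (by norm_num)) hTne
  have hcard : T.card = k := hk T hfTne
  by_contra h
  exact hTne (hg T (by omega))

end Statement17Aux

/-- Let `ε_1, …, ε_n ∈ {−1, 1} ⊆ ℚ`, `A ∈ ℚ`, and let `g_1, …, g_m` be
affine polynomials over `ℚ` in `x_1, …, x_n`. Suppose that some Boolean point satisfies
`g_t(x) ≠ 0` for all `t`, and that every such Boolean point satisfies
`ε_1x_1 + ⋯ + ε_nx_n = A`. Then `m ≥ n/4`. -/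
theorem statement17 (n : ℕ) (hn : 1 ≤ n) (ε : Fin n → ℚ) (hε : ∀ i, ε i = 1 ∨ ε i = -1)
    (A : ℚ) (m : ℕ) (g : Fin m → AffPoly (Fin n) ℚ)
    (hex : ∃ x : Fin n → Bool, ∀ t, (g t).evalB x ≠ 0)
    (hall : ∀ x : Fin n → Bool, (∀ t, (g t).evalB x ≠ 0) →
      (∑ i, ε i * (if x i then 1 else 0)) = A) :
    n ≤ 4 * m := by
  obtain ⟨x, hx⟩ := hex
  set neg : Finset (Fin n) := Finset.univ.filter (fun i => ¬ ε i = 1) with hneg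
  set bS : Finset (Fin n) → Fin n → Bool :=
    fun S i => if ε i = 1 then decide (i ∈ S) else !(decide (i ∈ S)) with hbS
  set b' : Fin m → Fin n → ℚ :=
    fun t i => if ε i = 1 then (g t).coeff i else -((g t).coeff i) with hb'
  set c' : Fin m → ℚ := fun t => (g t).const + ∑ i ∈ neg, (g t).coeff i with hc'
  have hevalB : ∀ t S, (g t).evalB (bS S) = c' t + ∑ i ∈ S, b' t i := by
    intro t S
    simp only [AffPoly.evalB, AffPoly.eval]
    have h1 : ∀ i : Fin n, (g t).coeff i * (if (bS S i) then (1:ℚ) else 0)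
        = (b' t i * (if i ∈ S then (1:ℚ) else 0)) + (if ε i = 1 then 0 else (g t).coeff i) := by
      intro i
      by_cases hi : ε i = 1 <;> by_cases hiS : i ∈ S <;> simp [hbS, hb', hi, hiS]
    rw [Finset.sum_congr rfl (fun i _ => h1 i), Finset.sum_add_distrib]
    have h2 : (∑ i : Fin n, b' t i * (if i ∈ S then (1:ℚ) else 0)) = ∑ i ∈ S, b' t i := by
      simp only [mul_ite, mul_one, mul_zero]
      rw [Finset.sum_ite_mem, Finset.univ_inter]
    have h3 : (∑ i : Fin n, (if ε i = 1 then (0:ℚ) else (g t).coeff i))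
        = ∑ i ∈ neg, (g t).coeff i := by
      rw [hneg, Finset.sum_filter]
      refine Finset.sum_congr rfl fun i _ => ?_
      by_cases hi : ε i = 1 <;> simp [hi]
    rw [h2, h3, hc']
    ring
  have hsum : ∀ S : Finset (Fin n),
      (∑ i, ε i * (if bS S i then (1:ℚ) else 0)) = (S.card : ℚ) - (neg.card : ℚ) := by
    intro S
    have h1 : ∀ i : Fin n, ε i * (if bS S i then (1:ℚ) else 0)
        = (if i ∈ S then (1:ℚ) else 0) - (if ε i = 1 then 0 else 1) := by
      intro i
      rcases hε i with hi | hi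
      · by_cases hiS : i ∈ S <;> simp [hbS, hi, hiS]
      · have hi1 : ¬ ε i = 1 := by rw [hi]; norm_num
        by_cases hiS : i ∈ S <;> simp [hbS, hi, hi1, hiS] <;> norm_num
    rw [Finset.sum_congr rfl (fun i _ => h1 i), Finset.sum_sub_distrib]
    congr 1
    · rw [Finset.sum_ite_mem, Finset.univ_inter, Finset.sum_const, nsmul_eq_mul, mul_one]
    · rw [hneg]
      rw [show (∑ i : Fin n, (if ε i = 1 then (0:ℚ) else 1))
          = ∑ i : Fin n, (if ¬ ε i = 1 then (1:ℚ) else 0) from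
        Finset.sum_congr rfl fun i _ => by by_cases hi : ε i = 1 <;> simp [hi]]
      rw [← Finset.sum_filter, Finset.sum_const, nsmul_eq_mul, mul_one]
  set S₀ : Finset (Fin n) :=
    Finset.univ.filter (fun i => if ε i = 1 then x i = true else x i = false) with hS₀
  have hbx : bS S₀ = x := by
    funext i
    by_cases hi : ε i = 1 <;> by_cases hxi : x i = true <;>
      simp [hbS, hS₀, hi, hxi, Finset.mem_filter]
  set k := S₀.card with hkdef
  have hall' : ∀ S : Finset (Fin n), (∀ t, (g t).evalB (bS S) ≠ 0) →
      (S.card : ℚ) - (neg.card : ℚ) = A := fun S h => by rw [← hsum S]; exact hall (bS S) h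
  have hx0 : ∀ t, (g t).evalB (bS S₀) ≠ 0 := by rw [hbx]; exact hx
  have hA : (k:ℚ) - (neg.card : ℚ) = A := hall' S₀ hx0
  have h0 : (∏ t, (c' t + ∑ i ∈ S₀, b' t i)) ≠ 0 := by
    rw [Finset.prod_ne_zero_iff]
    intro t _
    rw [← hevalB t S₀]
    exact hx0 t
  have hk : ∀ S : Finset (Fin n), (∏ t, (c' t + ∑ i ∈ S, b' t i)) ≠ 0 → S.card = k := by
    intro S hS
    rw [Finset.prod_ne_zero_iff] at hS
    have hSall : ∀ t, (g t).evalB (bS S) ≠ 0 := fun t => by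
      rw [hevalB t S]; exact hS t (Finset.mem_univ t)
    have h1 := hall' S hSall
    have h2 : (S.card : ℚ) = (k : ℚ) := by
      rw [← hA] at h1; linarith
    exact_mod_cast h2
  have hkm : k ≤ m := Statement17Aux.main_lemma m k b' c' S₀ h0 hk
  set b2 : Fin m → Fin n → ℚ := fun t i => -(b' t i) with hb2
  set c2 : Fin m → ℚ := fun t => c' t + ∑ i : Fin n, b' t i with hc2
  have hcomp : ∀ (t : Fin m) (S : Finset (Fin n)),
      c2 t + ∑ i ∈ S, b2 t i = c' t + ∑ i ∈ Finset.univ \ S, b' t i := by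
    intro t S
    rw [Finset.sum_sdiff_eq_sub (Finset.subset_univ S), hb2, hc2]
    have : (∑ i ∈ S, -(b' t i)) = -∑ i ∈ S, b' t i := by
      rw [Finset.sum_neg_distrib]
    rw [this]
    ring
  have h0' : (∏ t, (c2 t + ∑ i ∈ Finset.univ \ S₀, b2 t i)) ≠ 0 := by
    rw [Finset.prod_congr rfl (fun t _ => hcomp t _), Finset.sdiff_sdiff_self_left,
      Finset.univ_inter]
    exact h0
  have hk' : ∀ S : Finset (Fin n), (∏ t, (c2 t + ∑ i ∈ S, b2 t i)) ≠ 0 → S.card = n - k := by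
    intro S hS
    rw [Finset.prod_congr rfl (fun t _ => hcomp t S)] at hS
    have hck := hk _ hS
    have hcard : (Finset.univ \ S).card = n - S.card := by
      rw [Finset.card_sdiff_of_subset (Finset.subset_univ S), Finset.card_univ, Fintype.card_fin]
    have hS_le : S.card ≤ n := by
      have := Finset.card_le_univ S
      simpa using this
    omega
  have hnk : n - k ≤ m := Statement17Aux.main_lemma m (n - k) b2 c2 (Finset.univ \ S₀) h0' hk'
  have hk_le : k ≤ n := by
    have := Finset.card_le_univ S₀
    simpa [hkdef] using this
  omega
end
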